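/- arXiv:cs/0702088 — 7 statements merged into one kernel-verified Lean document; each statement's English description precedes it below -/
import Mathlib

section
/- For every function f from [1:n]^d to {0} ∪ {±e_1,...,±e_d} (the zero vector together with the signed standard unit vectors), if f is bounded (i.e., x + f(x) ∈ [1:n]^d for all x) and direction-preserving (i.e., ‖f(x) − f(y)‖_∞ ≤ 1 whenever ‖x − y‖_∞ ≤ 1), then there exists a point v ∈ [1:n]^d with f(v) = 0. -/
open Finset Equiv

attribute [local instance] Classical.propDecidable

namespace DPZ

variable {d n : ℕ}

def Ins (n : ℕ) {d : ℕ} (x : Fin d → ℤ) : Prop := ∀ i, 1 ≤ x i ∧ x i ≤ (n : ℤ)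

def Ext (n : ℕ) {d : ℕ} (x : Fin d → ℤ) : Prop := ∀ i, 0 ≤ x i ∧ x i ≤ (n : ℤ) + 1

noncomputable def vert {d : ℕ} (b : Fin d → ℤ) (σ : Perm (Fin d)) (k : ℕ) : Fin d → ℤ :=
  fun i => b i + if (σ i : ℕ) < k then 1 else 0

def Good (n d : ℕ) (L : (Fin d → ℤ) → ℕ) : Prop :=
  (∀ x, Ext n x → L x ≤ d) ∧
  (∀ x, Ext n x → ∀ i : Fin d, x i = (n : ℤ) + 1 →
      (∀ j : Fin d, (j : ℕ) < (i : ℕ) → 1 ≤ x j ∧ x j ≤ (n : ℤ)) → L x = (i : ℕ) + 1) ∧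
  (∀ x, Ext n x → ∀ i : Fin d, x i = 0 →
      (∀ j : Fin d, (j : ℕ) < (i : ℕ) → 1 ≤ x j ∧ x j ≤ (n : ℤ)) → L x = 0)

/-- abstract door property for a label sequence -/
def DoorG (D : ℕ) (g : ℕ → ℕ) (k : ℕ) : Prop :=
  ∀ m < D, ∃ j, j ≤ D ∧ j ≠ k ∧ g j = m

/-- abstract rainbow property -/
def RbG (D : ℕ) (g : ℕ → ℕ) : Prop := ∀ m ≤ D, ∃ k ≤ D, g k = m

def Rb (d : ℕ) (L : (Fin d → ℤ) → ℕ) (c : (Fin d → ℤ) × Perm (Fin d)) : Prop :=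
  RbG d (fun k => L (vert c.1 c.2 k))

def Door (d : ℕ) (L : (Fin d → ℤ) → ℕ) (c : (Fin d → ℤ) × Perm (Fin d)) (k : ℕ) : Prop :=
  DoorG d (fun k => L (vert c.1 c.2 k)) k

noncomputable def box (n d : ℕ) : Finset (Fin d → ℤ) :=
  Fintype.piFinset fun _ => Finset.Icc 0 (n : ℤ)

noncomputable def chains (n d : ℕ) : Finset ((Fin d → ℤ) × Perm (Fin d)) :=
  box n d ×ˢ Finset.univ

noncomputable def RS (n d : ℕ) (L : (Fin d → ℤ) → ℕ) : Finset ((Fin d → ℤ) × Perm (Fin d)) :=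
  (chains n d).filter (Rb d L)

lemma mem_box {b : Fin d → ℤ} : b ∈ box n d ↔ ∀ i, 0 ≤ b i ∧ b i ≤ (n : ℤ) := by
  simp [box, Fintype.mem_piFinset, Finset.mem_Icc]

lemma vert_ext {b : Fin d → ℤ} {σ : Perm (Fin d)} (hb : b ∈ box n d) (k : ℕ) :
    Ext n (vert b σ k) := by
  intro i
  have := (mem_box.mp hb) i
  unfold vert; split <;> omega

lemma vert_dist {b : Fin d → ℤ} {σ : Perm (Fin d)} (j k : ℕ) (i : Fin d) :
    |vert b σ j i - vert b σ k i| ≤ 1 := by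
  unfold vert
  rw [abs_le]
  constructor <;> split <;> split <;> omega

lemma exists_least {x : Fin d → ℤ} (hx : ¬ Ins n x) :
    ∃ i : Fin d, ¬(1 ≤ x i ∧ x i ≤ (n : ℤ)) ∧
      ∀ j : Fin d, (j : ℕ) < (i : ℕ) → 1 ≤ x j ∧ x j ≤ (n : ℤ) := by
  unfold Ins at hx
  push_neg at hx
  obtain ⟨i₀, hi₀⟩ := hx
  have hS : (Finset.univ.filter (fun i : Fin d => ¬(1 ≤ x i ∧ x i ≤ (n : ℤ)))).Nonempty := by
    refine ⟨i₀, ?_⟩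
    simp only [Finset.mem_filter, Finset.mem_univ, true_and]
    omega
  set S := Finset.univ.filter (fun i : Fin d => ¬(1 ≤ x i ∧ x i ≤ (n : ℤ))) with hSdef
  refine ⟨S.min' hS, ?_, ?_⟩
  · have := S.min'_mem hS
    exact (Finset.mem_filter.mp this).2
  · intro j hj
    by_contra hcon
    have hjS : j ∈ S := by
      rw [hSdef, Finset.mem_filter]
      exact ⟨Finset.mem_univ j, hcon⟩
    have := S.min'_le j hjS
    have : ((S.min' hS : Fin d) : ℕ) ≤ (j : ℕ) := this
    omega

/-- trichotomy for outside points under a Good labelling -/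
lemma Good.out {L : (Fin d → ℤ) → ℕ} (hG : Good n d L) {x : Fin d → ℤ}
    (hx : Ext n x) (hni : ¬ Ins n x) :
    (L x = 0 ∧ ∃ i : Fin d, x i = 0 ∧ ∀ j : Fin d, (j : ℕ) < (i : ℕ) → 1 ≤ x j ∧ x j ≤ (n : ℤ)) ∨
    (∃ i : Fin d, x i = (n : ℤ) + 1 ∧ L x = (i : ℕ) + 1 ∧
      ∀ j : Fin d, (j : ℕ) < (i : ℕ) → 1 ≤ x j ∧ x j ≤ (n : ℤ)) := by
  obtain ⟨i, hi, hleast⟩ := exists_least hni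
  have hxi := hx i
  have : x i = 0 ∨ x i = (n : ℤ) + 1 := by omega
  rcases this with h0 | h1
  · exact Or.inl ⟨hG.2.2 x hx i h0 hleast, i, h0, hleast⟩
  · exact Or.inr ⟨i, h1, hG.2.1 x hx i h1 hleast, hleast⟩


lemma doorG_card_of_rb {D : ℕ} {g : ℕ → ℕ} (hr : RbG D g) :
    ((Finset.range (D+1)).filter (DoorG D g)).card = 1 := by
  obtain ⟨k₀, hk₀D, hk₀⟩ := hr D le_rfl
  have hset : (Finset.range (D+1)).filter (DoorG D g) = {k₀} := by
    apply Finset.ext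
    intro k
    simp only [Finset.mem_filter, Finset.mem_range, Finset.mem_singleton]
    constructor
    · rintro ⟨hkD, hD⟩
      by_contra hne
      have H : ∀ m, m ≤ D → ∃ j, (j ≤ D ∧ j ≠ k) ∧ g j = m := by
        intro m hm
        rcases Nat.lt_or_ge m D with h | h
        · obtain ⟨j, hj1, hj2, hj3⟩ := hD m h
          exact ⟨j, ⟨hj1, hj2⟩, hj3⟩
        · have hmD : m = D := le_antisymm hm h
          subst hmD
          exact ⟨k₀, ⟨hk₀D, fun h => hne h.symm⟩, hk₀⟩
      choose! w hw hgw using H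
      have hcard := Finset.card_le_card_of_injOn w
        (s := Finset.range (D+1)) (t := (Finset.range (D+1)).erase k)
        (by
          intro m hm
          rw [Finset.mem_coe, Finset.mem_range] at hm
          have h1 := hw m (by omega)
          rw [Finset.mem_coe, Finset.mem_erase, Finset.mem_range]
          exact ⟨h1.2, by omega⟩)
        (by
          intro a ha b hb hab
          simp only [Finset.coe_range, Set.mem_Iio] at ha hb
          have h1 := hgw a (by omega)
          have h2 := hgw b (by omega)
          rw [← h1, ← h2, hab])
      rw [Finset.card_erase_of_mem (by rw [Finset.mem_range]; omega), Finset.card_range] at hcard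
      simp at hcard
    · rintro rfl
      refine ⟨by omega, ?_⟩
      intro m hm
      obtain ⟨j, hjD, hgj⟩ := hr m (le_of_lt hm)
      refine ⟨j, hjD, fun h => ?_, hgj⟩
      subst h
      omega
  rw [hset, Finset.card_singleton]

lemma doorG_card_of_not_rb {D : ℕ} {g : ℕ → ℕ} (hg : ∀ k ≤ D, g k ≤ D) (hr : ¬ RbG D g) :
    Even ((Finset.range (D+1)).filter (DoorG D g)).card := by
  unfold RbG at hr
  push_neg at hr
  obtain ⟨m₀, hm₀D, hm₀⟩ := hr
  rcases Nat.lt_or_ge m₀ D with hlt | hge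
  · have hempty : (Finset.range (D+1)).filter (DoorG D g) = ∅ := by
      apply Finset.eq_empty_of_forall_notMem
      intro k hk
      rw [Finset.mem_filter] at hk
      obtain ⟨j, hjD, _, hgj⟩ := hk.2 m₀ hlt
      exact hm₀ j hjD hgj
    rw [hempty]
    simp
  · have hm₀D' : m₀ = D := le_antisymm hm₀D hge
    rw [hm₀D'] at hm₀
    by_cases hs : ∀ m < D, ∃ k ≤ D, g k = m
    · have hmap : ∀ k ∈ Finset.range (D+1), g k ∈ Finset.range D := by
        intro k hk
        rw [Finset.mem_range] at hk ⊢
        have h1 := hg k (by omega)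
        have h2 := hm₀ k (by omega)
        omega
      obtain ⟨a, haR, b, hbR, hab, hgab⟩ :=
        Finset.exists_ne_map_eq_of_card_lt_of_maps_to
          (by rw [Finset.card_range, Finset.card_range]; omega) hmap
      rw [Finset.mem_range] at haR hbR
      have key : (Finset.range (D+1)).filter (DoorG D g) = {a, b} := by
        apply Finset.ext
        intro k
        simp only [Finset.mem_filter, Finset.mem_range, Finset.mem_insert, Finset.mem_singleton]
        constructor
        · rintro ⟨hkD, hD⟩
          by_contra hk
          push_neg at hk
          obtain ⟨hka, hkb⟩ := hk
          have hgk : g k < D := by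
            have h1 := hg k (by omega)
            have h2 := hm₀ k (by omega)
            omega
          obtain ⟨j, hjD, hjk, hgj⟩ := hD (g k) hgk
          have H : ∀ m, m < D → ∃ r, (r ≤ D ∧ r ≠ b ∧ r ≠ k) ∧ g r = m := by
            intro m hm
            by_cases hmb : m = g b
            · exact ⟨a, ⟨by omega, hab, fun h => hka h.symm⟩, by rw [hgab, hmb]⟩
            · by_cases hmk : m = g k
              · refine ⟨j, ⟨hjD, fun h => ?_, hjk⟩, by rw [hgj, ← hmk]⟩
                subst h
                exact hmb (hmk.trans hgj.symm)
              · obtain ⟨w, hwD, hgw⟩ := hs m hm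
                refine ⟨w, ⟨hwD, fun h => ?_, fun h => ?_⟩, hgw⟩
                · subst h; exact hmb hgw.symm
                · subst h; exact hmk hgw.symm
          choose! w hw hgw using H
          have hcard := Finset.card_le_card_of_injOn w
            (s := Finset.range D) (t := ((Finset.range (D+1)).erase b).erase k)
            (by
              intro m hm
              rw [Finset.mem_coe, Finset.mem_range] at hm
              have h1 := hw m hm
              rw [Finset.mem_coe, Finset.mem_erase, Finset.mem_erase, Finset.mem_range]
              exact ⟨h1.2.2, h1.2.1, by omega⟩)
            (by
              intro x hx y hy hxy
              simp only [Finset.coe_range, Set.mem_Iio] at hx hy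
              have h1 := hgw x hx
              have h2 := hgw y hy
              rw [← h1, ← h2, hxy])
          rw [Finset.card_erase_of_mem, Finset.card_erase_of_mem, Finset.card_range,
            Finset.card_range] at hcard
          · omega
          · rw [Finset.mem_range]; omega
          · rw [Finset.mem_erase, Finset.mem_range]
            exact ⟨hkb, by omega⟩
        · intro hk
          have hDoor : ∀ c₁ c₂ : ℕ, c₁ ≤ D → c₂ ≤ D → c₁ ≠ c₂ → g c₁ = g c₂ →
              (c₁ ≤ D ∧ DoorG D g c₁) := by
            intro c₁ c₂ h₁ h₂ hne hgeq
            refine ⟨h₁, ?_⟩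
            intro m hm
            obtain ⟨w, hwD, hgw⟩ := hs m hm
            by_cases hwk : w = c₁
            · refine ⟨c₂, h₂, fun h => hne h.symm, ?_⟩
              rw [← hgeq, ← hgw, hwk]
            · exact ⟨w, hwD, hwk, hgw⟩
          rcases hk with rfl | rfl
          · have := hDoor k b (by omega) (by omega) hab hgab
            exact ⟨by omega, this.2⟩
          · have := hDoor k a (by omega) (by omega) (fun h => hab h.symm) hgab.symm
            exact ⟨by omega, this.2⟩
      rw [key, Finset.card_insert_of_notMem (by simpa using hab), Finset.card_singleton]
      exact ⟨1, rfl⟩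
    · push_neg at hs
      obtain ⟨m₁, hm₁D, hm₁⟩ := hs
      have hempty : (Finset.range (D+1)).filter (DoorG D g) = ∅ := by
        apply Finset.eq_empty_of_forall_notMem
        intro k hk
        rw [Finset.mem_filter] at hk
        obtain ⟨j, hjD, _, hgj⟩ := hk.2 m₁ hm₁D
        exact hm₁ j hjD hgj
      rw [hempty]
      simp


lemma val_rot {d : ℕ} (x : Fin (d+1)) :
    ((finRotate (d+1) x : Fin (d+1)) : ℕ) = if (x : ℕ) = d then 0 else (x : ℕ) + 1 := by
  rw [finRotate_succ_apply, Fin.val_add_one]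
  by_cases h : x = Fin.last d
  · rw [if_pos h, if_pos (by rw [h]; rfl)]
  · rw [if_neg h, if_neg (fun hc => h (Fin.ext (by rw [hc]; rfl)))]

lemma val_rot_symm {d : ℕ} (x : Fin (d+1)) :
    (((finRotate (d+1)).symm x : Fin (d+1)) : ℕ) = if (x : ℕ) = 0 then d else (x : ℕ) - 1 := by
  have h := val_rot ((finRotate (d+1)).symm x)
  rw [Equiv.apply_symm_apply] at h
  have h2 : (((finRotate (d+1)).symm x : Fin (d+1)) : ℕ) < d + 1 := Fin.is_lt _
  have h3 : (x : ℕ) < d + 1 := Fin.is_lt _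
  split_ifs at h ⊢ <;> omega

lemma val_swap {D : ℕ} (a b x : Fin D) :
    ((Equiv.swap a b x : Fin D) : ℕ) =
      if x = a then (b : ℕ) else if x = b then (a : ℕ) else (x : ℕ) := by
  rw [Equiv.swap_apply_def]
  split_ifs <;> rfl

def unitv {D : ℕ} (c : Fin D) : Fin D → ℤ := fun i => if i = c then 1 else 0

lemma vert_swap {d : ℕ} (b : Fin (d+1) → ℤ) (σ : Perm (Fin (d+1))) (k j : ℕ)
    (hk1 : 1 ≤ k) (hk2 : k ≤ d) (hj : j ≠ k) :
    vert b (σ.trans (Equiv.swap ⟨k-1, by omega⟩ ⟨k, by omega⟩)) j = vert b σ j := by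
  funext i
  simp only [vert, Equiv.trans_apply]
  simp only [val_swap]
  by_cases ha : σ i = (⟨k-1, by omega⟩ : Fin (d+1))
  · have hv : ((σ i : Fin (d+1)) : ℕ) = k-1 := by rw [ha]
    rw [if_pos ha]
    split_ifs <;> omega
  · rw [if_neg ha]
    by_cases hb : σ i = (⟨k, by omega⟩ : Fin (d+1))
    · have hv : ((σ i : Fin (d+1)) : ℕ) = k := by rw [hb]
      rw [if_pos hb]
      split_ifs <;> omega
    · rw [if_neg hb]

lemma vert_rotdown {d : ℕ} (b : Fin (d+1) → ℤ) (σ : Perm (Fin (d+1))) (j : ℕ) (hj : j ≤ d) :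
    vert (b + unitv (σ.symm 0)) (σ.trans (finRotate (d+1)).symm) j = vert b σ (j+1) := by
  funext i
  have hlt : ((σ i : Fin (d+1)) : ℕ) < d + 1 := Fin.is_lt _
  simp only [vert, Pi.add_apply, unitv, Equiv.trans_apply]
  simp only [val_rot_symm]
  by_cases hc : i = σ.symm 0
  · have hv : ((σ i : Fin (d+1)) : ℕ) = 0 := by rw [hc, Equiv.apply_symm_apply]; rfl
    rw [if_pos hc]
    split_ifs <;> omega
  · have hv : ((σ i : Fin (d+1)) : ℕ) ≠ 0 := by
      intro h
      have h2 : σ i = 0 := Fin.ext h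
      exact hc (by rw [← Equiv.symm_apply_apply σ i, h2])
    rw [if_neg hc]
    split_ifs <;> omega

lemma vert_rotup {d : ℕ} (b : Fin (d+1) → ℤ) (σ : Perm (Fin (d+1))) (j : ℕ)
    (hj1 : 1 ≤ j) (hj2 : j ≤ d+1) :
    vert (b - unitv (σ.symm (Fin.last d))) (σ.trans (finRotate (d+1))) j = vert b σ (j-1) := by
  funext i
  have hlt : ((σ i : Fin (d+1)) : ℕ) < d + 1 := Fin.is_lt _
  simp only [vert, Pi.sub_apply, unitv, Equiv.trans_apply]
  simp only [val_rot]
  by_cases hc : i = σ.symm (Fin.last d)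
  · have hv : ((σ i : Fin (d+1)) : ℕ) = d := by rw [hc, Equiv.apply_symm_apply]; rfl
    rw [if_pos hc]
    split_ifs <;> omega
  · have hv : ((σ i : Fin (d+1)) : ℕ) ≠ d := by
      intro h
      have h2 : σ i = Fin.last d := Fin.ext h
      exact hc (by rw [← Equiv.symm_apply_apply σ i, h2])
    rw [if_neg hc]
    split_ifs <;> omega

def extFun {d : ℕ} (σ : Perm (Fin d)) : Fin (d+1) → Fin (d+1) :=
  Fin.lastCases (Fin.last d) (fun i => (σ i).castSucc)

lemma extFun_comp {d : ℕ} (σ : Perm (Fin d)) : ∀ x, extFun σ.symm (extFun σ x) = x := by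
  intro x
  induction x using Fin.lastCases with
  | last => simp [extFun]
  | cast i => simp [extFun]

def extLast {d : ℕ} (σ : Perm (Fin d)) : Perm (Fin (d+1)) :=
  ⟨extFun σ, extFun σ.symm, extFun_comp σ, by
    have := extFun_comp σ.symm
    exact fun x => by simpa using this x⟩

lemma extLast_castSucc {d : ℕ} (σ : Perm (Fin d)) (i : Fin d) :
    extLast σ (i.castSucc) = (σ i).castSucc := by
  show extFun σ _ = _
  simp [extFun]

lemma extLast_last {d : ℕ} (σ : Perm (Fin d)) : extLast σ (Fin.last d) = Fin.last d := by
  show extFun σ _ = _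
  simp [extFun]

def resLast {d : ℕ} (σ : Perm (Fin (d+1))) (h : σ (Fin.last d) = Fin.last d) : Perm (Fin d) where
  toFun i := (σ i.castSucc).castPred (by
    intro hc
    have h2 := σ.injective (hc.trans h.symm)
    exact absurd h2 (Fin.ne_of_lt (Fin.castSucc_lt_last i)))
  invFun i := (σ.symm i.castSucc).castPred (by
    intro hc
    have hsymm : σ.symm (Fin.last d) = Fin.last d := (Equiv.symm_apply_eq σ).mpr h.symm
    have h2 := σ.symm.injective (hc.trans hsymm.symm)
    exact absurd h2 (Fin.ne_of_lt (Fin.castSucc_lt_last i)))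
  left_inv := by
    intro i
    apply Fin.castSucc_injective
    rw [Fin.castSucc_castPred, Fin.castSucc_castPred, Equiv.symm_apply_apply]
  right_inv := by
    intro i
    apply Fin.castSucc_injective
    rw [Fin.castSucc_castPred, Fin.castSucc_castPred, Equiv.apply_symm_apply]

lemma resLast_apply {d : ℕ} (σ : Perm (Fin (d+1))) (h : σ (Fin.last d) = Fin.last d) (i : Fin d) :
    (resLast σ h i).castSucc = σ i.castSucc := by
  apply Fin.ext
  simp only [Fin.coe_castSucc, resLast, Equiv.coe_fn_mk, Fin.coe_castPred]

lemma extLast_resLast {d : ℕ} (σ : Perm (Fin (d+1))) (h : σ (Fin.last d) = Fin.last d) :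
    extLast (resLast σ h) = σ := by
  apply Equiv.ext
  intro x
  refine Fin.lastCases ?_ (fun i => ?_) x
  · rw [extLast_last, h]
  · rw [extLast_castSucc, resLast_apply]

lemma extLast_injective {d : ℕ} : Function.Injective (extLast (d := d)) := by
  intro σ τ h
  apply Equiv.ext
  intro i
  have := congrFun (congrArg (fun (e : Perm (Fin (d+1))) => (e : Fin (d+1) → Fin (d+1))) h) i.castSucc
  simp only [extLast_castSucc] at this
  exact Fin.castSucc_injective _ this

lemma vert_snoc {d : ℕ} (b' : Fin d → ℤ) (σ' : Perm (Fin d)) (j : ℕ) (hj : j ≤ d) :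
    vert (Fin.snoc b' 0) (extLast σ') j = Fin.snoc (vert b' σ' j) 0 := by
  funext i
  refine Fin.lastCases ?_ (fun i' => ?_) i
  · simp only [vert, extLast_last, Fin.snoc_last]
    rw [if_neg (by simp only [Fin.val_last]; omega)]
    ring
  · simp only [vert, extLast_castSucc, Fin.snoc_castSucc, Fin.coe_castSucc]


lemma kill1 {d : ℕ} {L : (Fin (d+1) → ℤ) → ℕ} (hn : 0 < n) (hG : Good n (d+1) L)
    {b : Fin (d+1) → ℤ} {σ : Perm (Fin (d+1))} (hb : b ∈ box n (d+1))
    (hcn : b (σ.symm 0) = (n : ℤ)) : ¬ Door (d+1) L (b, σ) 0 := by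
  intro hD
  set c := σ.symm 0 with hcdef
  have hfc : ∀ j : ℕ, 1 ≤ j → vert b σ j c = (n : ℤ) + 1 := by
    intro j hj
    simp only [vert]
    rw [if_pos (by rw [hcdef, Equiv.apply_symm_apply]; show (0:ℕ) < j; omega), hcn]
  obtain ⟨j₀, hj₀D, hj₀0, hLj₀'⟩ := hD 0 (by omega)
  have hLj₀ : L (vert b σ j₀) = 0 := hLj₀'
  have hext0 := vert_ext (σ := σ) hb j₀
  have hout0 : ¬ Ins n (vert b σ j₀) := by
    intro hins
    have h1 := (hins c).2
    rw [hfc j₀ (by omega)] at h1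
    omega
  rcases hG.out hext0 hout0 with ⟨_, i₀, hi₀0, hleast⟩ | ⟨i₀, _, hLi₀, _⟩
  swap
  · rw [hLj₀] at hLi₀
    omega
  have hi₀c : (i₀ : ℕ) < (c : ℕ) := by
    have h1 : (i₀ : ℕ) ≠ (c : ℕ) := by
      intro hh
      rw [Fin.ext hh, hfc j₀ (by omega)] at hi₀0
      omega
    by_contra hge
    have h2 := hleast c (by omega)
    rw [hfc j₀ (by omega)] at h2
    omega
  obtain ⟨j₁, hj₁D, hj₁0, hLj₁'⟩ := hD ((i₀ : ℕ)+1) (by have := c.is_lt; omega)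
  have hLj₁ : L (vert b σ j₁) = (i₀ : ℕ) + 1 := hLj₁'
  have hext1 := vert_ext (σ := σ) hb j₁
  have hout1 : ¬ Ins n (vert b σ j₁) := by
    intro hins
    have h1 := (hins c).2
    rw [hfc j₁ (by omega)] at h1
    omega
  rcases hG.out hext1 hout1 with ⟨hL0, _⟩ | ⟨i₁, hi₁n, hLi₁, _⟩
  · rw [hLj₁] at hL0
    omega
  · rw [hLj₁] at hLi₁
    have hi₁i₀ : i₁ = i₀ := Fin.ext (by omega)
    rw [hi₁i₀] at hi₁n
    have hdist := vert_dist (b := b) (σ := σ) j₁ j₀ i₀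
    rw [hi₁n, hi₀0, abs_le] at hdist
    omega

lemma kill2 {d : ℕ} {L : (Fin (d+1) → ℤ) → ℕ} (hn : 0 < n) (hG : Good n (d+1) L)
    {b : Fin (d+1) → ℤ} {σ : Perm (Fin (d+1))} (hb : b ∈ box n (d+1))
    (hc0 : b (σ.symm (Fin.last d)) = 0) (hD : Door (d+1) L (b, σ) (d+1)) :
    σ.symm (Fin.last d) = Fin.last d := by
  set c := σ.symm (Fin.last d) with hcdef
  by_contra hne
  have hcd : (c : ℕ) < d := by
    have h1 := c.is_lt
    have h2 : (c : ℕ) ≠ d := by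
      intro hh
      exact hne (Fin.ext (by rw [hh, Fin.val_last]))
    omega
  have hfc : ∀ j : ℕ, j ≤ d → vert b σ j c = 0 := by
    intro j hj
    simp only [vert]
    rw [if_neg (by rw [hcdef, Equiv.apply_symm_apply, Fin.val_last]; omega), hc0, add_zero]
  obtain ⟨j₁, hj₁D, hj₁ne, hLj₁'⟩ := hD ((c : ℕ)+1) (by omega)
  have hLj₁ : L (vert b σ j₁) = (c : ℕ) + 1 := hLj₁'
  have hj₁d : j₁ ≤ d := by omega
  have hext1 := vert_ext (σ := σ) hb j₁
  have hout1 : ¬ Ins n (vert b σ j₁) := by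
    intro hins
    have h1 := (hins c).1
    rw [hfc j₁ hj₁d] at h1
    omega
  rcases hG.out hext1 hout1 with ⟨hL0, _⟩ | ⟨i₁, hi₁n, hLi₁, _⟩
  · rw [hLj₁] at hL0
    omega
  · rw [hLj₁] at hLi₁
    have hi₁c : i₁ = c := Fin.ext (by omega)
    rw [hi₁c, hfc j₁ hj₁d] at hi₁n
    omega


lemma snoc_ext {d : ℕ} {y : Fin d → ℤ} (hy : Ext n y) :
    Ext n (Fin.snoc y 0 : Fin (d+1) → ℤ) := by
  intro i
  induction i using Fin.lastCases with
  | last =>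
    rw [Fin.snoc_last]
    constructor
    · exact le_refl 0
    · positivity
  | cast i' =>
    rw [Fin.snoc_castSucc]
    exact hy i'

lemma snoc_not_ins {d : ℕ} (y : Fin d → ℤ) : ¬ Ins n (Fin.snoc y 0 : Fin (d+1) → ℤ) := by
  intro hins
  have h := (hins (Fin.last d)).1
  rw [Fin.snoc_last] at h
  omega

lemma Good.face {d : ℕ} {L : (Fin (d+1) → ℤ) → ℕ} (hn : 0 < n) (hG : Good n (d+1) L) :
    Good n d (fun y => L (Fin.snoc y 0)) := by
  refine ⟨?_, ?_, ?_⟩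
  · intro y hy
    rcases hG.out (snoc_ext hy) (snoc_not_ins y) with ⟨h0, _⟩ | ⟨i, hin, hLi, _⟩
    · show L (Fin.snoc y 0) ≤ d
      omega
    · show L (Fin.snoc y 0) ≤ d
      have h1 : i ≠ Fin.last d := by
        intro hh
        rw [hh, Fin.snoc_last] at hin
        omega
      have h2 : (i : ℕ) < d := by
        have h3 := i.is_lt
        have h4 : (i : ℕ) ≠ d := fun hh => h1 (Fin.ext (by rw [hh, Fin.val_last]))
        omega
      omega
  · intro y hy i hin hleast
    show L (Fin.snoc y 0) = (i : ℕ) + 1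
    have h1 : (Fin.snoc y 0 : Fin (d+1) → ℤ) i.castSucc = (n : ℤ) + 1 := by
      rw [Fin.snoc_castSucc]; exact hin
    have h2 := hG.2.1 _ (snoc_ext hy) i.castSucc h1 ?_
    · rw [h2, Fin.coe_castSucc]
    · intro j hj
      rw [Fin.coe_castSucc] at hj
      have hjd : (j : ℕ) < d := by have := i.is_lt; omega
      have hj' : j = (⟨(j : ℕ), hjd⟩ : Fin d).castSucc := Fin.ext rfl
      rw [hj', Fin.snoc_castSucc]
      exact hleast _ hj
  · intro y hy i hin hleast
    show L (Fin.snoc y 0) = 0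
    have h1 : (Fin.snoc y 0 : Fin (d+1) → ℤ) i.castSucc = 0 := by
      rw [Fin.snoc_castSucc]; exact hin
    refine hG.2.2 _ (snoc_ext hy) i.castSucc h1 ?_
    intro j hj
    rw [Fin.coe_castSucc] at hj
    have hjd : (j : ℕ) < d := by have := i.is_lt; omega
    have hj' : j = (⟨(j : ℕ), hjd⟩ : Fin d).castSucc := Fin.ext rfl
    rw [hj', Fin.snoc_castSucc]
    exact hleast _ hj

lemma door_last_iff {d : ℕ} {L : (Fin (d+1) → ℤ) → ℕ} (b' : Fin d → ℤ) (σ' : Perm (Fin d)) :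
    Door (d+1) L (Fin.snoc b' 0, extLast σ') (d+1) ↔
      Rb d (fun y => L (Fin.snoc y 0)) (b', σ') := by
  constructor
  · intro hD m hm
    obtain ⟨j, hjD, hjne, hLj⟩ := hD m (by omega)
    refine ⟨j, by omega, ?_⟩
    show L (Fin.snoc (vert b' σ' j) 0) = m
    rw [← vert_snoc b' σ' j (by omega)]
    exact hLj
  · intro hR m hm
    obtain ⟨k, hk, hLk⟩ := hR m (by omega)
    refine ⟨k, by omega, by omega, ?_⟩
    show L (vert (Fin.snoc b' 0) (extLast σ') k) = m
    rw [vert_snoc b' σ' k hk]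
    exact hLk

lemma rot_last {d : ℕ} : (finRotate (d+1)) (Fin.last d) = 0 := by
  have h := val_rot (Fin.last d)
  rw [Fin.val_last, if_pos rfl] at h
  exact Fin.ext (by rw [h]; rfl)

lemma trans_rotsymm_symm_last {d : ℕ} (σ : Perm (Fin (d+1))) :
    (σ.trans (finRotate (d+1)).symm).symm (Fin.last d) = σ.symm 0 := by
  rw [Equiv.symm_trans_apply, Equiv.symm_symm, rot_last]

lemma trans_rot_symm_zero {d : ℕ} (σ : Perm (Fin (d+1))) :
    (σ.trans (finRotate (d+1))).symm 0 = σ.symm (Fin.last d) := by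
  rw [Equiv.symm_trans_apply]
  congr 1

lemma doorA {d : ℕ} {L : (Fin (d+1) → ℤ) → ℕ} (b : Fin (d+1) → ℤ) (σ : Perm (Fin (d+1)))
    (hD : Door (d+1) L (b, σ) 0) :
    Door (d+1) L (b + unitv (σ.symm 0), σ.trans (finRotate (d+1)).symm) (d+1) := by
  intro m hm
  obtain ⟨j, hjD, hj0, hLj⟩ := hD m hm
  refine ⟨j-1, by omega, by omega, ?_⟩
  show L (vert (b + unitv (σ.symm 0)) (σ.trans (finRotate (d+1)).symm) (j-1)) = m
  rw [vert_rotdown b σ (j-1) (by omega)]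
  have he : j - 1 + 1 = j := by omega
  rw [he]
  exact hLj

lemma doorB {d : ℕ} {L : (Fin (d+1) → ℤ) → ℕ} (b : Fin (d+1) → ℤ) (σ : Perm (Fin (d+1)))
    (hD : Door (d+1) L (b, σ) (d+1)) :
    Door (d+1) L (b - unitv (σ.symm (Fin.last d)), σ.trans (finRotate (d+1))) 0 := by
  intro m hm
  obtain ⟨j, hjD, hjne, hLj⟩ := hD m hm
  refine ⟨j+1, by omega, by omega, ?_⟩
  show L (vert (b - unitv (σ.symm (Fin.last d))) (σ.trans (finRotate (d+1))) (j+1)) = m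
  rw [vert_rotup b σ (j+1) (by omega) (by omega)]
  have he : j + 1 - 1 = j := by omega
  rw [he]
  exact hLj

lemma doorM {d : ℕ} {L : (Fin (d+1) → ℤ) → ℕ} (b : Fin (d+1) → ℤ) (σ : Perm (Fin (d+1)))
    (k : ℕ) (hk1 : 1 ≤ k) (hk2 : k ≤ d) (hD : Door (d+1) L (b, σ) k) :
    Door (d+1) L (b, σ.trans (Equiv.swap ⟨k-1, by omega⟩ ⟨k, by omega⟩)) k := by
  intro m hm
  obtain ⟨j, hjD, hjk, hLj⟩ := hD m hm
  refine ⟨j, hjD, hjk, ?_⟩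
  show L (vert b (σ.trans (Equiv.swap ⟨k-1, by omega⟩ ⟨k, by omega⟩)) j) = m
  rw [vert_swap b σ k j hk1 hk2 hjk]
  exact hLj

lemma mem_chains {d : ℕ} {c : (Fin d → ℤ) × Perm (Fin d)} :
    c ∈ chains n d ↔ c.1 ∈ box n d := by
  rw [chains, Finset.mem_product]
  simp


noncomputable def invo (d : ℕ) :
    (((Fin (d+1) → ℤ) × Perm (Fin (d+1))) × ℕ) → (((Fin (d+1) → ℤ) × Perm (Fin (d+1))) × ℕ) :=
  fun a =>
    if a.2 = 0 then
      ((a.1.1 + unitv (a.1.2.symm 0), a.1.2.trans (finRotate (d+1)).symm), d+1)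
    else if a.2 = d+1 then
      ((a.1.1 - unitv (a.1.2.symm (Fin.last d)), a.1.2.trans (finRotate (d+1))), 0)
    else if h : a.2 ≤ d then
      ((a.1.1, a.1.2.trans (Equiv.swap ⟨a.2 - 1, by omega⟩ ⟨a.2, by omega⟩)), a.2)
    else a

lemma invo_zero {d : ℕ} (b : Fin (d+1) → ℤ) (σ : Perm (Fin (d+1))) :
    invo d ((b, σ), 0) =
      ((b + unitv (σ.symm 0), σ.trans (finRotate (d+1)).symm), d+1) := by
  simp [invo]

lemma invo_top {d : ℕ} (b : Fin (d+1) → ℤ) (σ : Perm (Fin (d+1))) :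
    invo d ((b, σ), d+1) =
      ((b - unitv (σ.symm (Fin.last d)), σ.trans (finRotate (d+1))), 0) := by
  rw [invo]
  rw [if_neg (by omega : ¬ (((b, σ), d+1) : ((Fin (d+1) → ℤ) × Perm (Fin (d+1))) × ℕ).2 = 0)]
  rw [if_pos rfl]

lemma invo_mid {d : ℕ} (b : Fin (d+1) → ℤ) (σ : Perm (Fin (d+1))) (k : ℕ)
    (h1 : k ≠ 0) (h2 : k ≤ d) :
    invo d ((b, σ), k) =
      ((b, σ.trans (Equiv.swap ⟨k-1, by omega⟩ ⟨k, by omega⟩)), k) := by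
  rw [invo]
  rw [if_neg (by simpa using h1), if_neg (by simp; omega), dif_pos (by simpa using h2)]

lemma trans_rotsymm_rot {d : ℕ} (σ : Perm (Fin (d+1))) :
    (σ.trans (finRotate (d+1)).symm).trans (finRotate (d+1)) = σ := by
  rw [Equiv.trans_assoc, Equiv.symm_trans_self, Equiv.trans_refl]

lemma trans_rot_rotsymm {d : ℕ} (σ : Perm (Fin (d+1))) :
    (σ.trans (finRotate (d+1))).trans (finRotate (d+1)).symm = σ := by
  rw [Equiv.trans_assoc, Equiv.self_trans_symm, Equiv.trans_refl]

lemma trans_swap_swap {α : Type*} [DecidableEq α] (σ : Perm α) (x y : α) :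
    (σ.trans (Equiv.swap x y)).trans (Equiv.swap x y) = σ := by
  rw [Equiv.trans_assoc]
  have h : (Equiv.swap x y).trans (Equiv.swap x y) = Equiv.refl α :=
    Equiv.ext fun z => Equiv.swap_apply_self x y z
  rw [h, Equiv.trans_refl]

lemma box_add_unitv {d' : ℕ} {b : Fin d' → ℤ} (hb : b ∈ box n d') (c : Fin d')
    (hcn : b c ≤ (n : ℤ) - 1) : b + unitv c ∈ box n d' := by
  rw [mem_box] at hb ⊢
  intro i
  have h1 := hb i
  simp only [Pi.add_apply, unitv]
  split_ifs with h
  · rw [h]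
    have := hb c
    omega
  · omega

lemma box_sub_unitv {d' : ℕ} {b : Fin d' → ℤ} (hb : b ∈ box n d') (c : Fin d')
    (hc0 : 1 ≤ b c) : b - unitv c ∈ box n d' := by
  rw [mem_box] at hb ⊢
  intro i
  have h1 := hb i
  simp only [Pi.sub_apply, unitv]
  split_ifs with h
  · rw [h]
    have := hb c
    omega
  · omega


theorem parity (hn : 0 < n) : ∀ (d : ℕ) (L : (Fin d → ℤ) → ℕ), Good n d L →
    ((RS n d L).card : ZMod 2) = 1 := by
  intro d
  induction d with
  | zero =>
    intro L hG
    have hRS : RS n 0 L = chains n 0 := by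
      apply Finset.filter_true_of_mem
      intro c hc
      intro m hm
      have hm0 : m = 0 := by omega
      refine ⟨0, le_rfl, ?_⟩
      have hext : Ext n (vert c.1 c.2 0) := vert_ext (mem_chains.mp hc) 0
      have h1 := hG.1 _ hext
      show L (vert c.1 c.2 0) = m
      omega
    rw [hRS]
    have h1 : (chains n 0).card = 1 := by
      rw [chains, Finset.card_product]
      have hb : (box n 0).card = 1 := by
        rw [box, Fintype.card_piFinset]
        simp
      have hp : (Finset.univ : Finset (Perm (Fin 0))).card = 1 := by
        rw [Finset.card_univ, Fintype.card_perm]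
        simp
      rw [hb, hp]
    rw [h1]
    norm_num
  | succ d IH =>
    intro L hG
    have hG' : Good n d (fun y => L (Fin.snoc y 0)) := Good.face hn hG
    set Q : Finset (((Fin (d+1) → ℤ) × Perm (Fin (d+1))) × ℕ) :=
      (chains n (d+1) ×ˢ Finset.range (d+2)).filter (fun a => Door (d+1) L a.1 a.2) with hQ
    have mem_Q : ∀ a, a ∈ Q ↔
        (a.1.1 ∈ box n (d+1) ∧ a.2 ≤ d+1 ∧ Door (d+1) L a.1 a.2) := by
      intro a
      rw [hQ, Finset.mem_filter, Finset.mem_product, Finset.mem_range]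
      constructor
      · rintro ⟨⟨h1, h2⟩, h3⟩
        exact ⟨mem_chains.mp h1, by omega, h3⟩
      · rintro ⟨h1, h2, h3⟩
        exact ⟨⟨mem_chains.mpr h1, by omega⟩, h3⟩
    -- Step 1 : rainbow count ≡ Q count
    have step1 : ((RS n (d+1) L).card : ZMod 2) = (Q.card : ZMod 2) := by
      have h1 : Q.card = ∑ c ∈ chains n (d+1),
          ((Finset.range (d+2)).filter (fun k => Door (d+1) L c k)).card := by
        rw [hQ, Finset.card_filter, Finset.sum_product]
        exact Finset.sum_congr rfl (fun c _ => (Finset.card_filter _ _).symm)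
      have h2 : ∀ c ∈ chains n (d+1),
          ((((Finset.range (d+2)).filter (fun k => Door (d+1) L c k)).card : ZMod 2)) =
            (if Rb (d+1) L c then (1 : ZMod 2) else 0) := by
        intro c hc
        by_cases hR : Rb (d+1) L c
        · rw [if_pos hR]
          have hh : ((Finset.range (d+2)).filter (fun k => Door (d+1) L c k)).card = 1 :=
            doorG_card_of_rb hR
          rw [hh, Nat.cast_one]
        · rw [if_neg hR]
          have hg : ∀ k ≤ d+1, L (vert c.1 c.2 k) ≤ d+1 := by
            intro k _
            exact hG.1 _ (vert_ext (mem_chains.mp hc) k)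
          have hh : Even ((Finset.range (d+2)).filter (fun k => Door (d+1) L c k)).card :=
            doorG_card_of_not_rb hg hR
          obtain ⟨t, ht⟩ := hh
          rw [ht, Nat.cast_add]
          exact CharTwo.add_self_eq_zero _
      have h3 : ((RS n (d+1) L).card : ZMod 2) =
          ∑ c ∈ chains n (d+1), (if Rb (d+1) L c then (1 : ZMod 2) else 0) := by
        rw [RS, Finset.card_filter, Nat.cast_sum]
        exact Finset.sum_congr rfl (fun c _ => by split_ifs <;> simp)
      rw [h3, h1, Nat.cast_sum]
      exact (Finset.sum_congr rfl h2).symm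
    -- the fixed point predicate
    set P : (((Fin (d+1) → ℤ) × Perm (Fin (d+1))) × ℕ) → Prop :=
      fun a => a.2 = d+1 ∧ a.1.1 (a.1.2.symm (Fin.last d)) = 0 with hP
    -- Step 2 : involution kills the non-fixed part
    have step2 : ((Q.filter (fun a => ¬ P a)).card : ZMod 2) = 0 := by
      rw [Finset.card_eq_sum_ones, Nat.cast_sum]
      push_cast
      refine Finset.sum_involution (fun a _ => invo d a) (fun a _ => by decide) ?_ ?_ ?_
      · -- no fixed points
        rintro ⟨⟨b, σ⟩, k⟩ ha _
        rw [Finset.mem_filter, mem_Q] at ha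
        obtain ⟨⟨hb, hk, hD⟩, hnP⟩ := ha
        dsimp only at hb hk hD hnP
        show invo d ((b, σ), k) ≠ ((b, σ), k)
        by_cases h0 : k = 0
        · subst h0
          rw [invo_zero]
          intro he
          have h2 := congrArg Prod.snd he
          simp at h2
        · by_cases hd1 : k = d+1
          · subst hd1
            rw [invo_top]
            intro he
            have h2 := congrArg Prod.snd he
            simp at h2
          · rw [invo_mid b σ k h0 (by omega)]
            intro he
            have h2 := congrArg (fun x => x.1.2) he
            simp only at h2
            have h3 := congrArg (fun e : Perm (Fin (d+1)) =>
              e (σ.symm ⟨k-1, by omega⟩)) h2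
            simp only [Equiv.trans_apply, Equiv.apply_symm_apply] at h3
            rw [Equiv.swap_apply_left] at h3
            have h4 := congrArg Fin.val h3
            simp only at h4
            omega
      · -- invo maps the set to itself
        rintro ⟨⟨b, σ⟩, k⟩ ha
        rw [Finset.mem_filter, mem_Q] at ha
        obtain ⟨⟨hb, hk, hD⟩, hnP⟩ := ha
        dsimp only at hb hk hD hnP
        show invo d ((b, σ), k) ∈ Q.filter (fun a => ¬ P a)
        rw [Finset.mem_filter, mem_Q]
        by_cases h0 : k = 0
        · subst h0
          have hbn : b (σ.symm 0) ≠ (n : ℤ) := by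
            intro hh
            exact kill1 hn hG hb hh hD
          rw [invo_zero]
          refine ⟨⟨?_, by omega, doorA b σ hD⟩, ?_⟩
          · refine box_add_unitv hb _ ?_
            have := (mem_box.mp hb) (σ.symm 0)
            omega
          · intro hPP
            rw [hP] at hPP
            obtain ⟨_, hP2⟩ := hPP
            dsimp only at hP2
            rw [trans_rotsymm_symm_last] at hP2
            simp [unitv, Pi.add_apply] at hP2
            have := (mem_box.mp hb) (σ.symm 0)
            omega
        · by_cases hd1 : k = d+1
          · subst hd1
            have hb0 : b (σ.symm (Fin.last d)) ≠ 0 := by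
              intro hh
              exact hnP ⟨rfl, hh⟩
            rw [invo_top]
            refine ⟨⟨?_, by omega, doorB b σ hD⟩, ?_⟩
            · refine box_sub_unitv hb _ ?_
              have := (mem_box.mp hb) (σ.symm (Fin.last d))
              omega
            · intro hPP
              rw [hP] at hPP
              obtain ⟨hP1, _⟩ := hPP
              dsimp only at hP1
              omega
          · rw [invo_mid b σ k h0 (by omega)]
            refine ⟨⟨hb, by omega, doorM b σ k (by omega) (by omega) hD⟩, ?_⟩
            intro hPP
            rw [hP] at hPP
            obtain ⟨hP1, _⟩ := hPP
            dsimp only at hP1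
            omega
      · -- involutive
        rintro ⟨⟨b, σ⟩, k⟩ ha
        rw [Finset.mem_filter, mem_Q] at ha
        obtain ⟨⟨hb, hk, hD⟩, hnP⟩ := ha
        dsimp only at hb hk hD hnP
        show invo d (invo d ((b, σ), k)) = ((b, σ), k)
        by_cases h0 : k = 0
        · subst h0
          rw [invo_zero, invo_top, trans_rotsymm_symm_last, add_sub_cancel_right,
            trans_rotsymm_rot]
        · by_cases hd1 : k = d+1
          · subst hd1
            rw [invo_top, invo_zero, trans_rot_symm_zero, sub_add_cancel,
              trans_rot_rotsymm]
          · rw [invo_mid b σ k h0 (by omega), invo_mid b _ k h0 (by omega),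
              trans_swap_swap]
    -- Step 3 : fixed points are exactly the rainbow chains of the face problem
    have step3 : (Q.filter P).card = (RS n d (fun y => L (Fin.snoc y 0))).card := by
      have himg : Q.filter P =
          (RS n d (fun y => L (Fin.snoc y 0))).image
            (fun c => ((Fin.snoc c.1 0, extLast c.2), d+1)) := by
        apply Finset.ext
        rintro ⟨⟨b, σ⟩, k⟩
        rw [Finset.mem_filter, mem_Q, Finset.mem_image]
        constructor
        · rintro ⟨⟨hb, hk, hD⟩, hPP⟩
          rw [hP] at hPP
          obtain ⟨hP1, hP2⟩ := hPP
          dsimp only at hb hk hD hP1 hP2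
          subst hP1
          have hfix : σ.symm (Fin.last d) = Fin.last d := kill2 hn hG hb hP2 hD
          have hσlast : σ (Fin.last d) = Fin.last d := by
            conv_lhs => rw [← hfix]
            exact Equiv.apply_symm_apply σ _
          have hblast : b (Fin.last d) = 0 := by rw [← hfix]; exact hP2
          have hbeq : Fin.snoc (b ∘ Fin.castSucc) 0 = b := by
            funext i
            induction i using Fin.lastCases with
            | last => rw [Fin.snoc_last, hblast]
            | cast i' => rw [Fin.snoc_castSucc]; rfl
          refine ⟨(b ∘ Fin.castSucc, resLast σ hσlast), ?_, ?_⟩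
          · rw [RS, Finset.mem_filter]
            constructor
            · rw [mem_chains]
              rw [mem_box] at hb ⊢
              intro i
              exact hb i.castSucc
            · rw [← door_last_iff]
              rw [hbeq, extLast_resLast]
              exact hD
          · rw [extLast_resLast, hbeq]
        · rintro ⟨⟨b', σ'⟩, hmem, heq⟩
          rw [RS, Finset.mem_filter, mem_chains] at hmem
          obtain ⟨hbox', hRb'⟩ := hmem
          dsimp only at hbox' hRb' heq
          have hk' : d+1 = k := congrArg Prod.snd heq
          have h1 : ((Fin.snoc b' 0 : Fin (d+1) → ℤ), extLast σ') = (b, σ) :=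
            congrArg Prod.fst heq
          have hb' : (Fin.snoc b' 0 : Fin (d+1) → ℤ) = b := congrArg Prod.fst h1
          have hσ' : extLast σ' = σ := congrArg Prod.snd h1
          subst hk'
          refine ⟨⟨?_, le_rfl, ?_⟩, ?_⟩
          · show b ∈ box n (d+1)
            rw [← hb', mem_box]
            intro i
            induction i using Fin.lastCases with
            | last =>
              rw [Fin.snoc_last]
              constructor
              · exact le_refl 0
              · positivity
            | cast i' =>
              rw [Fin.snoc_castSucc]
              exact (mem_box.mp hbox') i'
          · show Door (d+1) L (b, σ) (d+1)
            rw [← hb', ← hσ']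
            exact (door_last_iff b' σ').mpr hRb'
          · rw [hP]
            refine ⟨rfl, ?_⟩
            show b (σ.symm (Fin.last d)) = 0
            have h1 : σ.symm (Fin.last d) = Fin.last d := by
              rw [← hσ']
              rw [Equiv.symm_apply_eq, extLast_last]
            rw [h1, ← hb', Fin.snoc_last]
      rw [himg]
      rw [Finset.card_image_of_injective]
      intro c₁ c₂ hcc
      obtain ⟨h1, _⟩ := Prod.mk.injEq .. ▸ hcc
      have hb12 : Fin.snoc c₁.1 0 = (Fin.snoc c₂.1 0 : Fin (d+1) → ℤ) := congrArg Prod.fst h1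
      have hσ12 : extLast c₁.2 = extLast c₂.2 := congrArg Prod.snd h1
      have hbb : c₁.1 = c₂.1 := by
        funext i
        have := congrFun hb12 i.castSucc
        rwa [Fin.snoc_castSucc, Fin.snoc_castSucc] at this
      have hσσ : c₁.2 = c₂.2 := extLast_injective hσ12
      exact Prod.ext hbb hσσ
    -- assemble
    have hsplit := Finset.card_filter_add_card_filter_not (s := Q) (p := P)
    have hcast : (Q.card : ZMod 2) = ((Q.filter P).card : ZMod 2) +
        ((Q.filter (fun a => ¬ P a)).card : ZMod 2) := by
      rw [← Nat.cast_add, hsplit]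
    rw [step1, hcast, step2, add_zero, step3, IH _ hG']


lemma nonempty_out {x : Fin d → ℤ} (h : ¬ Ins n x) :
    (Finset.univ.filter (fun i : Fin d => ¬(1 ≤ x i ∧ x i ≤ (n : ℤ)))).Nonempty := by
  rw [Finset.filter_nonempty_iff]
  unfold Ins at h
  push_neg at h
  obtain ⟨i, hi⟩ := h
  exact ⟨i, Finset.mem_univ i, by omega⟩

noncomputable def ellOf (n : ℕ) {d : ℕ} (f : (Fin d → ℤ) → (Fin d → ℤ)) (x : Fin d → ℤ) : ℕ :=
  if h : Ins n x then ∑ i : Fin d, (if f x i = -1 then (i : ℕ) + 1 else 0)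
  else
    if x ((Finset.univ.filter (fun i : Fin d => ¬(1 ≤ x i ∧ x i ≤ (n : ℤ)))).min'
        (nonempty_out h)) = (n : ℤ) + 1
    then ((Finset.univ.filter (fun i : Fin d => ¬(1 ≤ x i ∧ x i ≤ (n : ℤ)))).min'
        (nonempty_out h) : ℕ) + 1
    else 0

lemma sum_neg_label {d : ℕ} (g : Fin d → ℤ) (i : Fin d) (s : ℤ)
    (hg : g = fun j => if j = i then s else 0) :
    (∑ j : Fin d, if g j = -1 then (j : ℕ) + 1 else 0) =
      if s = -1 then (i : ℕ) + 1 else 0 := by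
  subst hg
  rw [Finset.sum_eq_single i]
  · simp
  · intro j _ hji
    simp only [if_neg hji]
    norm_num
  · intro h
    exact absurd (Finset.mem_univ i) h

lemma min_out_eq {x : Fin d → ℤ} (i : Fin d)
    (hi : ¬(1 ≤ x i ∧ x i ≤ (n : ℤ)))
    (hleast : ∀ j : Fin d, (j : ℕ) < (i : ℕ) → 1 ≤ x j ∧ x j ≤ (n : ℤ)) :
    ∀ hne, (Finset.univ.filter (fun j : Fin d => ¬(1 ≤ x j ∧ x j ≤ (n : ℤ)))).min' hne = i := by
  intro hne
  apply le_antisymm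
  · apply Finset.min'_le
    rw [Finset.mem_filter]
    exact ⟨Finset.mem_univ i, hi⟩
  · apply Finset.le_min'
    intro y hy
    rw [Finset.mem_filter] at hy
    by_contra hlt
    rw [not_le] at hlt
    exact hy.2 (hleast y hlt)

end DPZ

/-- Discrete Brouwer fixed point theorem for bounded, direction-preserving
functions `f : [1:n]^d → {0} ∪ {±e_1,…,±e_d}`. -/
theorem stmt0 (d n : ℕ) (hd : 0 < d) (hn : 0 < n)
    (f : (Fin d → ℤ) → (Fin d → ℤ))
    (hrange : ∀ x : Fin d → ℤ, (∀ i, 1 ≤ x i ∧ x i ≤ (n : ℤ)) →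
      f x = 0 ∨ ∃ (i : Fin d) (s : ℤ), (s = 1 ∨ s = -1) ∧
        f x = fun j => if j = i then s else 0)
    (hbounded : ∀ x : Fin d → ℤ, (∀ i, 1 ≤ x i ∧ x i ≤ (n : ℤ)) →
      ∀ i, 1 ≤ x i + f x i ∧ x i + f x i ≤ (n : ℤ))
    (hdp : ∀ x y : Fin d → ℤ, (∀ i, 1 ≤ x i ∧ x i ≤ (n : ℤ)) →
      (∀ i, 1 ≤ y i ∧ y i ≤ (n : ℤ)) →
      (∀ i, |x i - y i| ≤ 1) → ∀ i, |f x i - f y i| ≤ 1) :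
    ∃ v : Fin d → ℤ, (∀ i, 1 ≤ v i ∧ v i ≤ (n : ℤ)) ∧ f v = 0 := by
  by_contra hcon
  push_neg at hcon
  set L := DPZ.ellOf n f with hLdef
  have hform : ∀ x, DPZ.Ins n x → ∃ (i : Fin d) (s : ℤ), (s = 1 ∨ s = -1) ∧
      f x = fun j => if j = i then s else 0 := by
    intro x hx
    rcases hrange x hx with h0 | h
    · exact absurd h0 (hcon x hx)
    · exact h
  have hLin : ∀ x, DPZ.Ins n x → ∀ (i : Fin d) (s : ℤ),
      (f x = fun j => if j = i then s else 0) →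
      L x = if s = -1 then (i : ℕ) + 1 else 0 := by
    intro x hx i s hfx
    rw [hLdef]
    show DPZ.ellOf n f x = _
    rw [DPZ.ellOf, dif_pos hx]
    exact DPZ.sum_neg_label (f x) i s hfx
  have hLzero : ∀ x, DPZ.Ins n x → L x = 0 → ∃ c : Fin d, f x c = 1 := by
    intro x hx h0
    obtain ⟨i, s, hs, hfx⟩ := hform x hx
    have h1 := hLin x hx i s hfx
    rw [h0] at h1
    rcases hs with h2 | h2
    · refine ⟨i, ?_⟩
      rw [hfx]
      simp [h2]
    · rw [if_pos h2] at h1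
      omega
  have hLneg : ∀ x, DPZ.Ins n x → ∀ c : Fin d, L x = (c : ℕ) + 1 → f x c = -1 := by
    intro x hx c hc
    obtain ⟨i, s, hs, hfx⟩ := hform x hx
    have h1 := hLin x hx i s hfx
    rw [hc] at h1
    by_cases h2 : s = -1
    · rw [if_pos h2] at h1
      have h3 : c = i := Fin.ext (by omega)
      rw [hfx, h3]
      simp [h2]
    · rw [if_neg h2] at h1
      omega
  have hGood : DPZ.Good n d L := by
    refine ⟨?_, ?_, ?_⟩
    · intro x hx
      by_cases h : DPZ.Ins n x
      · obtain ⟨i, s, hs, hfx⟩ := hform x h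
        rw [hLin x h i s hfx]
        have := i.is_lt
        split_ifs <;> omega
      · show DPZ.ellOf n f x ≤ d
        rw [DPZ.ellOf, dif_neg h]
        split_ifs
        · have := Fin.is_lt ((Finset.univ.filter
            (fun i : Fin d => ¬(1 ≤ x i ∧ x i ≤ (n : ℤ)))).min' (DPZ.nonempty_out h))
          omega
        · omega
    · intro x hx i hin hleast
      have hout : ¬ DPZ.Ins n x := by
        intro hi
        have := (hi i).2
        omega
      show DPZ.ellOf n f x = (i : ℕ) + 1
      rw [DPZ.ellOf, dif_neg hout]
      rw [DPZ.min_out_eq i (by omega) hleast]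
      rw [if_pos hin]
    · intro x hx i hin hleast
      have hout : ¬ DPZ.Ins n x := by
        intro hi
        have := (hi i).1
        omega
      show DPZ.ellOf n f x = 0
      rw [DPZ.ellOf, dif_neg hout]
      rw [DPZ.min_out_eq i (by omega) hleast]
      rw [if_neg (by omega)]
  have hpar := DPZ.parity hn d L hGood
  have hne : (DPZ.RS n d L).Nonempty := by
    by_contra h
    rw [Finset.not_nonempty_iff_eq_empty] at h
    rw [h, Finset.card_empty, Nat.cast_zero] at hpar
    exact absurd hpar (by decide)
  obtain ⟨⟨b, σ⟩, hmem⟩ := hne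
  rw [DPZ.RS, Finset.mem_filter] at hmem
  obtain ⟨hch, hRb⟩ := hmem
  have hb := DPZ.mem_chains.mp hch
  have hvext : ∀ k : ℕ, DPZ.Ext n (DPZ.vert b σ k) := fun k => DPZ.vert_ext hb k
  obtain ⟨k₀, hk₀d, hk₀⟩ := hRb 0 (by omega)
  have hk₀' : L (DPZ.vert b σ k₀) = 0 := hk₀
  by_cases hins₀ : DPZ.Ins n (DPZ.vert b σ k₀)
  · obtain ⟨c, hfc⟩ := hLzero _ hins₀ hk₀'
    obtain ⟨k₁, hk₁d, hk₁⟩ := hRb ((c : ℕ) + 1) (by have := c.is_lt; omega)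
    have hk₁' : L (DPZ.vert b σ k₁) = (c : ℕ) + 1 := hk₁
    by_cases hins₁ : DPZ.Ins n (DPZ.vert b σ k₁)
    · have hfneg := hLneg _ hins₁ c hk₁'
      have hdp' := hdp _ _ hins₀ hins₁ (fun i => DPZ.vert_dist k₀ k₁ i) c
      rw [hfc, hfneg] at hdp'
      norm_num at hdp'
    · rcases hGood.out (hvext k₁) hins₁ with ⟨hL0, _⟩ | ⟨i₁, hi₁n, hLi₁, _⟩
      · rw [hk₁'] at hL0
        omega
      · rw [hk₁'] at hLi₁
        have hic : i₁ = c := Fin.ext (by omega)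
        rw [hic] at hi₁n
        have hdist := DPZ.vert_dist (b := b) (σ := σ) k₀ k₁ c
        rw [hi₁n, abs_le] at hdist
        have hin0c := (hins₀ c).2
        have hvc : DPZ.vert b σ k₀ c = (n : ℤ) := by omega
        have hbd := (hbounded _ hins₀ c).2
        rw [hvc, hfc] at hbd
        omega
  · rcases hGood.out (hvext k₀) hins₀ with ⟨_, m, hm0, hleast⟩ | ⟨i₀, hi₀n, hLi₀, _⟩
    swap
    · rw [hk₀'] at hLi₀
      omega
    obtain ⟨k₁, hk₁d, hk₁⟩ := hRb ((m : ℕ) + 1) (by have := m.is_lt; omega)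
    have hk₁' : L (DPZ.vert b σ k₁) = (m : ℕ) + 1 := hk₁
    by_cases hins₁ : DPZ.Ins n (DPZ.vert b σ k₁)
    · have hfneg := hLneg _ hins₁ m hk₁'
      have hdist := DPZ.vert_dist (b := b) (σ := σ) k₁ k₀ m
      rw [hm0, abs_le] at hdist
      have h1 := (hins₁ m).1
      have hbd := (hbounded _ hins₁ m).1
      rw [hfneg] at hbd
      omega
    · rcases hGood.out (hvext k₁) hins₁ with ⟨hL0, _⟩ | ⟨i₁, hi₁n, hLi₁, _⟩
      · rw [hk₁'] at hL0
        omega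
      · rw [hk₁'] at hLi₁
        have him : i₁ = m := Fin.ext (by omega)
        rw [him] at hi₁n
        have hdist := DPZ.vert_dist (b := b) (σ := σ) k₁ k₀ m
        rw [hi₁n, hm0, abs_le] at hdist
        omega
end

section
/- Let P_1, ..., P_m be simple directed paths over a vertex set V such that: (1) each path has length at least one; (2) for each i < m, the ending vertex of P_i equals the starting vertex of P_{i+1}; (3) the starting vertex of P_1 differs from the ending vertex of P_m; and (4) if (u,v) is an edge of P_i, then neither (u,v) nor (v,u) is an edge of P_j for any j ≠ i. Then the directed graph G = (V, ∪_{i=1}^m P_i) is a generalized PPAD graph: it has exactly one vertex with out-degree equal to in-degree plus one (the start of P_1), exactly one vertex with in-degree equal to out-degree plus one (the end of P_m), every other vertex has equal in-degree and out-degree, and whenever (u,v) is an edge, (v,u) is not an edge. -/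
/-!
Counting along a single list `l`, every vertex `v` satisfies
`out v + [v is the last vertex] = count v l = in v + [v is the first vertex]`.
Summing over the chained paths, the end of each `P i` cancels against the start of `P (i+1)`,
leaving `out v + [v is the end of the last path] = in v + [v is the start of the first path]`;
as these two endpoints differ, the degree conditions follow. Asymmetry of the edge set is
simplicity of each path together with edge-disjointness of distinct paths.
-/

namespace List

variable {α : Type*}

theorem countP_fst_consecutivePairs_add [DecidableEq α] (v : α) :
    ∀ l : List α, l.consecutivePairs.countP (fun e => decide (e.1 = v)) +
      (if l.getLast? = some v then 1 else 0) = l.count v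
  | [] => by simp
  | [a] => by by_cases h : a = v <;> simp [h, consecutivePairs]
  | a :: b :: t => by
    have ih := countP_fst_consecutivePairs_add v (b :: t)
    simp only [consecutivePairs, tail_cons] at ih ⊢
    rw [zip_cons_cons, countP_cons, getLast?_cons_cons, count_cons, ← ih]
    simp only [beq_iff_eq, decide_eq_true_eq]
    omega

theorem countP_snd_consecutivePairs_add [DecidableEq α] (v : α) (l : List α) :
    l.consecutivePairs.countP (fun e => decide (e.2 = v)) +
      (if l.head? = some v then 1 else 0) = l.count v := by
  have h : l.consecutivePairs.countP (fun e => decide (e.2 = v)) = l.tail.count v := by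
    rw [count_eq_countP, ← map_snd_zip (l₁ := l) (l₂ := l.tail) (by simp), countP_map]
    rfl
  rw [h]
  cases l with
  | nil => simp
  | cons a t => by_cases h : a = v <;> simp [h]

theorem Nodup.swap_notMem_consecutivePairs {u v : α} :
    ∀ {l : List α}, l.Nodup → (u, v) ∈ l.consecutivePairs → (v, u) ∉ l.consecutivePairs
  | a :: b :: t, hl, huv, hvu => by
    have ih := swap_notMem_consecutivePairs (u := u) (v := v) hl.of_cons
    obtain ⟨ha, -⟩ := nodup_cons.mp hl
    simp only [consecutivePairs, tail_cons, zip_cons_cons, mem_cons, Prod.mk.injEq] at huv hvu ih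
    rcases huv with ⟨rfl, rfl⟩ | huv
    · rcases hvu with ⟨hba, -⟩ | hvu
      · exact ha (hba ▸ mem_cons_self ..)
      · exact ha (mem_cons_of_mem _ (of_mem_zip hvu).2)
    · rcases hvu with ⟨rfl, rfl⟩ | hvu
      · exact ha (mem_cons_of_mem _ (of_mem_zip huv).2)
      · exact ih huv hvu
  | [], _, huv, _ => by simp at huv
  | [_], _, huv, _ => by simp [consecutivePairs] at huv

end List

theorem Fin.sum_add_last_eq_sum_add_zero {n : ℕ} {a b s t : Fin (n + 1) → ℕ}
    (hbal : ∀ i, a i + t i = b i + s i) (hchain : ∀ i : Fin n, t i.castSucc = s i.succ) :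
    ∑ i, a i + t (Fin.last n) = ∑ i, b i + s 0 := by
  have htot : ∑ i, a i + ∑ i, t i = ∑ i, b i + ∑ i, s i := by
    rw [← Finset.sum_add_distrib, ← Finset.sum_add_distrib]
    exact Finset.sum_congr rfl fun i _ => hbal i
  rw [Fin.sum_univ_castSucc t, Fin.sum_univ_succ s] at htot
  simp only [hchain] at htot
  omega

theorem Nat.trichotomy_of_add_ite_eq_add_ite {x y : ℕ} {p q : Prop} [Decidable p] [Decidable q]
    (h : x + (if q then 1 else 0) = y + (if p then 1 else 0)) (hpq : ¬(p ∧ q)) :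
    (x = y + 1 ↔ p) ∧ (y = x + 1 ↔ q) ∧ (¬p → ¬q → y = x) := by
  by_cases hp : p <;> by_cases hq : q <;> simp_all <;> omega

/-- Path Union: the union of edge-disjoint simple directed paths chained end to
end, with distinct overall endpoints, is a generalized PPAD graph. -/
theorem stmt1 {V : Type*} [DecidableEq V] (m : ℕ) (hm : 0 < m) (P : Fin m → List V)
    (hsimple : ∀ i, (P i).Nodup)
    (hconn : ∀ i : Fin m, ∀ h : i.val + 1 < m,
      (P i).getLast? = (P ⟨i.val + 1, h⟩).head?)
    (hends : (P ⟨0, hm⟩).head? ≠ (P ⟨m - 1, by omega⟩).getLast?)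
    (hdisj : ∀ i j : Fin m, i ≠ j → ∀ u v : V,
      (u, v) ∈ (P i).zip (P i).tail →
      (u, v) ∉ (P j).zip (P j).tail ∧ (v, u) ∉ (P j).zip (P j).tail) :
    let E := (List.ofFn fun i => (P i).zip (P i).tail).flatten
    let outdeg := fun v => E.countP fun e => decide (e.1 = v)
    let indeg := fun v => E.countP fun e => decide (e.2 = v)
    (∀ v, outdeg v = indeg v + 1 ↔ (P ⟨0, hm⟩).head? = some v) ∧
    (∀ v, indeg v = outdeg v + 1 ↔ (P ⟨m - 1, by omega⟩).getLast? = some v) ∧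
    (∀ v, (P ⟨0, hm⟩).head? ≠ some v → (P ⟨m - 1, by omega⟩).getLast? ≠ some v →
      indeg v = outdeg v) ∧
    (∀ u v, (u, v) ∈ E → (v, u) ∉ E) := by
  intro E outdeg indeg
  obtain ⟨n, rfl⟩ : ∃ n, m = n + 1 := ⟨m - 1, by omega⟩
  have hdeg (v : V) : outdeg v + (if (P (Fin.last n)).getLast? = some v then 1 else 0) =
      indeg v + (if (P 0).head? = some v then 1 else 0) := by
    simp only [outdeg, indeg, E, List.countP_flatten, List.map_ofFn, List.sum_ofFn,
      Function.comp_apply]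
    refine Fin.sum_add_last_eq_sum_add_zero (s := fun i => if (P i).head? = some v then 1 else 0)
      (t := fun i => if (P i).getLast? = some v then 1 else 0) (fun i => ?_) (fun i => ?_)
    · exact ((P i).countP_fst_consecutivePairs_add v).trans
        ((P i).countP_snd_consecutivePairs_add v).symm
    · rw [hconn i.castSucc (by simp)]
      rfl
  have hcases (v : V) := Nat.trichotomy_of_add_ite_eq_add_ite (hdeg v)
    fun ⟨hhead, hlast⟩ => hends (hhead.trans hlast.symm)
  refine ⟨fun v => (hcases v).1, fun v => (hcases v).2.1, fun v => (hcases v).2.2, ?_⟩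
  intro u v huv hvu
  simp only [E, List.mem_flatten, List.mem_ofFn] at huv hvu
  obtain ⟨-, ⟨i, rfl⟩, huv⟩ := huv
  obtain ⟨-, ⟨j, rfl⟩, hvu⟩ := hvu
  by_cases hij : i = j
  · subst hij
    exact (hsimple i).swap_notMem_consecutivePairs huv hvu
  · exact (hdisj i j hij u v huv).2 hvu
end

section
/- Define α_1(β) = 1 and, for d ≥ 2, α_d(β) = (α_{d−1}(β))^7 / (2(1−β)^{d−1} − 1)^3. Then for all d ≥ 1 and all β ∈ [0, 24^{−d}], α_d(β) ≤ e^{2·24^{d−1}·β}. -/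
/-- `α_1(β) = 1` and `α_d(β) = α_{d-1}(β)^7 / (2(1-β)^{d-1} - 1)^3` for `d ≥ 2`. -/
noncomputable def alphaFn : ℕ → ℝ → ℝ
  | 0, _ => 1
  | 1, _ => 1
  | (d + 2), β => (alphaFn (d + 1) β) ^ 7 / (2 * (1 - β) ^ (d + 1) - 1) ^ 3

/-!
Each step of the recursion raises the exponential bound to the 7th power and divides by the cube
of `2(1-β)^d - 1 ≥ 1 - 2dβ ≥ e^{-4dβ}` (Bernoulli, then `1 - x ≥ e^{-2x}`), so the exponent grows
from `2·24^{d-1}β` to at most `(14·24^{d-1} + 12d)β ≤ 2·24^d β`.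
-/

open Real

lemma Real.exp_neg_two_mul_le_one_sub {x : ℝ} (hx0 : 0 ≤ x) (hx : x ≤ 1 / 2) :
    exp (-(2 * x)) ≤ 1 - x := by
  have hpos : 0 < 1 + 2 * x := by linarith
  calc exp (-(2 * x)) = (exp (2 * x))⁻¹ := exp_neg _
    _ ≤ (1 + 2 * x)⁻¹ := inv_anti₀ hpos (by linarith [add_one_le_exp (2 * x)])
    _ ≤ 1 - x := by rw [inv_le_iff_one_le_mul₀ hpos]; nlinarith

lemma one_sub_two_mul_le_two_mul_one_sub_pow_sub_one {β : ℝ} (hβ : β ≤ 2) (n : ℕ) :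
    1 - 2 * n * β ≤ 2 * (1 - β) ^ n - 1 := by
  have := one_add_mul_le_pow (a := -β) (by linarith) n
  rw [← sub_eq_add_neg] at this
  linarith

lemma exp_neg_le_two_mul_one_sub_pow_sub_one {β : ℝ} (h0 : 0 ≤ β) (hβ : β ≤ 2) {n : ℕ}
    (hn : n * β ≤ 1 / 4) : exp (-(4 * n * β)) ≤ 2 * (1 - β) ^ n - 1 :=
  calc exp (-(4 * n * β)) = exp (-(2 * (2 * n * β))) := by ring_nf
    _ ≤ 1 - 2 * n * β := exp_neg_two_mul_le_one_sub (by positivity) (by linarith)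
    _ ≤ 2 * (1 - β) ^ n - 1 := one_sub_two_mul_le_two_mul_one_sub_pow_sub_one hβ n

lemma alphaFn_nonneg {β : ℝ} (hβ : β ≤ 2) : ∀ {d : ℕ}, 2 * d * β ≤ 1 → 0 ≤ alphaFn d β
  | 0, _ => zero_le_one
  | 1, _ => zero_le_one
  | d + 2, h => by
    have hd : 2 * ((d + 1 : ℕ) : ℝ) * β ≤ 1 := by push_cast at h ⊢; nlinarith
    have hden := one_sub_two_mul_le_two_mul_one_sub_pow_sub_one hβ (d + 1)
    exact div_nonneg (pow_nonneg (alphaFn_nonneg hβ hd) 7) (pow_nonneg (by linarith) 3)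

lemma succ_le_twentyfour_pow (n : ℕ) : (n + 1 : ℝ) ≤ 24 ^ n := by
  exact_mod_cast Nat.lt_pow_self (by norm_num : 1 < 24)

lemma succ_mul_le_of_le_one_div_pow {n : ℕ} {β : ℝ} (hβ : β ≤ 1 / 24 ^ (n + 1)) :
    (n + 1 : ℝ) * β ≤ 1 / 24 :=
  calc (n + 1 : ℝ) * β ≤ 24 ^ n * (1 / 24 ^ (n + 1)) :=
        (mul_le_mul_of_nonneg_left hβ (by positivity)).trans
          (by gcongr; exact succ_le_twentyfour_pow n)
    _ = 1 / 24 := by field_simp; ring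

lemma alphaFn_succ_le_exp {β : ℝ} (h0 : 0 ≤ β) :
    ∀ n : ℕ, β ≤ 1 / 24 ^ (n + 1) → alphaFn (n + 1) β ≤ exp (2 * 24 ^ n * β)
  | 0, _ => by simpa [alphaFn] using h0
  | n + 1, hβ => by
    have hβ' : β ≤ 1 / 24 ^ (n + 1) := hβ.trans (by gcongr <;> norm_num)
    have hnβ := succ_mul_le_of_le_one_div_pow hβ'
    have hβ2 : β ≤ 2 := by nlinarith
    have hden := exp_neg_le_two_mul_one_sub_pow_sub_one h0 hβ2 (n := n + 1)
      (by push_cast; linarith)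
    have hα := alphaFn_succ_le_exp h0 n hβ'
    have hαnonneg : 0 ≤ alphaFn (n + 1) β := alphaFn_nonneg hβ2 (by push_cast; linarith)
    calc alphaFn (n + 2) β = alphaFn (n + 1) β ^ 7 / (2 * (1 - β) ^ (n + 1) - 1) ^ 3 := rfl
      _ ≤ exp (2 * 24 ^ n * β) ^ 7 / exp (-(4 * (n + 1 : ℕ) * β)) ^ 3 := by gcongr
      _ = exp ((14 * 24 ^ n + 12 * (n + 1)) * β) := by
        rw [← exp_nat_mul, ← exp_nat_mul, ← exp_sub]; push_cast; ring_nf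
      _ ≤ exp (2 * 24 ^ (n + 1) * β) := by
        have := succ_le_twentyfour_pow n
        gcongr
        rw [pow_succ]
        linarith

/-- For all `d ≥ 1` and `β ∈ [0, 24^{-d}]`, `α_d(β) ≤ e^{2·24^{d-1}·β}`. -/
theorem stmt5 (d : ℕ) (hd : 1 ≤ d) (β : ℝ) (h0 : 0 ≤ β) (hβ : β ≤ 1 / 24 ^ d) :
    alphaFn d β ≤ Real.exp (2 * 24 ^ (d - 1) * β) := by
  obtain ⟨n, rfl⟩ := Nat.exists_eq_add_of_le' hd
  exact alphaFn_succ_le_exp h0 n hβ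
end

section
/- Let D^m be a c-biased probability distribution over binary strings of length m, and let D_IND^m be the distribution where each of the m bits is independently 1 with probability c. Then for every 1 ≤ k ≤ m, the probability under D^m that a string has at least k ones is at most the corresponding probability under D_IND^m. -/
/-!
Induct on the length, conditioning on the first bit. Let `T₀`, `T₁` be the masses of the strings
starting with `0` and `1`, and `B(k)` the probability of at least `k` ones among the remaining
bits under the product distribution. The conditional distributions are again `c`-biased, so by
induction the mass of strings with at least `k + 1` ones is at most `T₀ B(k + 1) + T₁ B(k)`,
while the product distribution gives `(T₀ + T₁) ((1 - c) B(k + 1) + c B(k))`. The difference is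
`(c (T₀ + T₁) - T₁) (B(k) - B(k + 1))`, and both factors are nonnegative: the first is the bias
condition at the first bit, the second says that tails decrease.
-/

open Finset

namespace BiasedStrings

variable {n : ℕ}

def onesCount (x : Fin n → Bool) : ℕ := (univ.filter fun i => x i = true).card

def upperTail (f : (Fin n → Bool) → ℝ) (k : ℕ) : ℝ :=
  ∑ x, if k ≤ onesCount x then f x else 0

def bernoulliWeight (c : ℝ) (x : Fin n → Bool) : ℝ := ∏ i, if x i then c else 1 - c

abbrev HasPrefix {ℓ : ℕ} (h : ℓ ≤ n) (s : Fin ℓ → Bool) (x : Fin n → Bool) : Prop :=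
  ∀ i, x (Fin.castLE h i) = s i

/-- Unnormalised form of `c`-biasedness; the case `ℓ = 0` is the condition `Pr[U_1] ≤ c`. -/
def IsBiased (c : ℝ) (p : (Fin n → Bool) → ℝ) : Prop :=
  ∀ ℓ (hℓ : ℓ < n) (s : Fin ℓ → Bool),
    (∑ x, if HasPrefix hℓ.le s x ∧ x ⟨ℓ, hℓ⟩ = true then p x else 0) ≤
      c * ∑ x, if HasPrefix hℓ.le s x then p x else 0

theorem sum_eq_sum_cons_false_add_sum_cons_true {M : Type*} [AddCommMonoid M]
    (f : (Fin (n + 1) → Bool) → M) :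
    ∑ x, f x = ∑ y, f (Fin.cons false y) + ∑ y, f (Fin.cons true y) := by
  rw [← (Fin.consEquiv fun _ => Bool).sum_comp, Fintype.sum_prod_type, Fintype.sum_bool, add_comm]
  rfl

@[simp]
theorem onesCount_cons (b : Bool) (y : Fin n → Bool) :
    onesCount (Fin.cons b y : Fin (n + 1) → Bool) = onesCount y + b.toNat := by
  simp only [onesCount, card_filter, Fin.sum_univ_succ, Fin.cons_zero, Fin.cons_succ]
  cases b <;> simp [add_comm]

theorem bernoulliWeight_cons (c : ℝ) (b : Bool) (y : Fin n → Bool) :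
    bernoulliWeight c (Fin.cons b y : Fin (n + 1) → Bool) =
      (if b then c else 1 - c) * bernoulliWeight c y := by
  simp [bernoulliWeight, Fin.prod_univ_succ]

theorem sum_bernoulliWeight (c : ℝ) : ∑ x : Fin n → Bool, bernoulliWeight c x = 1 := by
  simp only [bernoulliWeight]
  rw [← Fintype.prod_sum fun (_ : Fin n) (b : Bool) => if b then c else 1 - c]
  simp

theorem bernoulliWeight_nonneg {c : ℝ} (hc0 : 0 ≤ c) (hc1 : c ≤ 1) (x : Fin n → Bool) :
    0 ≤ bernoulliWeight c x :=
  prod_nonneg fun i _ => by split <;> linarith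

theorem bernoulliWeight_eq_pow_mul_pow (c : ℝ) (x : Fin n → Bool) :
    bernoulliWeight c x = c ^ onesCount x * (1 - c) ^ (n - onesCount x) := by
  rw [bernoulliWeight, prod_ite, prod_const, prod_const, onesCount]
  have := card_filter_add_card_filter_not (s := univ) fun i => x i = true
  rw [card_univ, Fintype.card_fin] at this
  congr
  omega

theorem upperTail_zero (f : (Fin n → Bool) → ℝ) : upperTail f 0 = ∑ x, f x := by
  simp [upperTail]

theorem upperTail_of_lt (f : (Fin n → Bool) → ℝ) {k : ℕ} (hk : n < k) : upperTail f k = 0 :=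
  sum_eq_zero fun x _ => if_neg <| by
    have : onesCount x ≤ n := (card_filter_le _ _).trans_eq (card_fin n)
    omega

theorem upperTail_const_mul (a : ℝ) (f : (Fin n → Bool) → ℝ) (k : ℕ) :
    upperTail (fun x => a * f x) k = a * upperTail f k := by
  simp only [upperTail, mul_sum, mul_ite, mul_zero]

theorem upperTail_succ_le {f : (Fin n → Bool) → ℝ} (hf : ∀ x, 0 ≤ f x) (k : ℕ) :
    upperTail f (k + 1) ≤ upperTail f k :=
  sum_le_sum fun x _ => by
    split_ifs <;> first | omega | exact hf x | exact le_rfl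

theorem upperTail_succ_succ (f : (Fin (n + 1) → Bool) → ℝ) (j : ℕ) :
    upperTail f (j + 1) =
      upperTail (fun y => f (Fin.cons false y)) (j + 1) +
        upperTail (fun y => f (Fin.cons true y)) j := by
  simp only [upperTail, sum_eq_sum_cons_false_add_sum_cons_true (fun x =>
    if j + 1 ≤ onesCount x then f x else 0), onesCount_cons, Bool.toNat_false,
    Bool.toNat_true, add_zero, add_le_add_iff_right]

theorem upperTail_bernoulliWeight_succ_succ (c : ℝ) (j : ℕ) :
    upperTail (bernoulliWeight (n := n + 1) c) (j + 1) =
      (1 - c) * upperTail (bernoulliWeight (n := n) c) (j + 1) +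
        c * upperTail (bernoulliWeight (n := n) c) j := by
  simp only [upperTail_succ_succ, bernoulliWeight_cons, Bool.false_eq_true, if_false, if_true,
    upperTail_const_mul]

theorem hasPrefix_cons_iff {ℓ : ℕ} (h : ℓ ≤ n) (b b' : Bool) (s : Fin ℓ → Bool)
    (y : Fin n → Bool) :
    HasPrefix (Nat.succ_le_succ h) (Fin.cons b s) (Fin.cons b' y : Fin (n + 1) → Bool) ↔
      b' = b ∧ HasPrefix h s y := by
  rw [HasPrefix, Fin.forall_fin_succ]
  have hsucc (i : Fin ℓ) : Fin.castLE (Nat.succ_le_succ h) i.succ = (Fin.castLE h i).succ := rfl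
  simp only [hsucc, Fin.cons_succ]
  rfl

namespace IsBiased

variable {c : ℝ} {p : (Fin (n + 1) → Bool) → ℝ}

theorem sum_cons_true_le (hp : IsBiased c p) :
    ∑ y, p (Fin.cons true y) ≤ c * ∑ x, p x := by
  have h := hp 0 n.succ_pos Fin.elim0
  simp only [HasPrefix, IsEmpty.forall_iff, true_and, if_true] at h
  simp only [sum_eq_sum_cons_false_add_sum_cons_true (n := n)] at h ⊢
  simpa using h

theorem comp_cons (hp : IsBiased c p) (b : Bool) : IsBiased c fun y => p (Fin.cons b y) := by
  intro ℓ hℓ s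
  have h := hp (ℓ + 1) (Nat.succ_lt_succ hℓ) (Fin.cons b s)
  simp only [sum_eq_sum_cons_false_add_sum_cons_true (n := n)] at h
  have hnext (b' : Bool) (y : Fin n → Bool) :
      (Fin.cons b' y : Fin (n + 1) → Bool) ⟨ℓ + 1, Nat.succ_lt_succ hℓ⟩ = y ⟨ℓ, hℓ⟩ :=
    Fin.cons_succ _ _ ⟨ℓ, hℓ⟩
  simp only [hasPrefix_cons_iff hℓ.le, hnext] at h
  cases b <;> simpa using h

end IsBiased

theorem upperTail_le_mul_upperTail_bernoulliWeight {c : ℝ} (hc0 : 0 ≤ c) (hc1 : c ≤ 1) :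
    ∀ {n : ℕ} {p : (Fin n → Bool) → ℝ}, (∀ x, 0 ≤ p x) → IsBiased c p → ∀ k : ℕ,
      upperTail p k ≤ (∑ x, p x) * upperTail (bernoulliWeight (n := n) c) k
  | _, _, _, _, 0 => by rw [upperTail_zero, upperTail_zero, sum_bernoulliWeight, mul_one]
  | 0, _, _, _, k + 1 => by
    rw [upperTail_of_lt _ k.succ_pos, upperTail_of_lt _ k.succ_pos, mul_zero]
  | n + 1, p, hp, hbias, j + 1 => by
    have ih₀ := upperTail_le_mul_upperTail_bernoulliWeight hc0 hc1 (fun _ => hp _)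
      (hbias.comp_cons false) (j + 1)
    have ih₁ := upperTail_le_mul_upperTail_bernoulliWeight hc0 hc1 (fun _ => hp _)
      (hbias.comp_cons true) j
    have hT₁ := hbias.sum_cons_true_le
    have hmono := upperTail_succ_le (bernoulliWeight_nonneg (n := n) hc0 hc1) j
    rw [sum_eq_sum_cons_false_add_sum_cons_true p] at hT₁ ⊢
    rw [upperTail_succ_succ p, upperTail_bernoulliWeight_succ_succ]
    nlinarith [mul_nonneg (sub_nonneg.2 hT₁) (sub_nonneg.2 hmono)]

end BiasedStrings

open BiasedStrings

open Finset in
theorem stmt8_general (m : ℕ) (hm : 1 ≤ m) (c : ℝ) (hc0 : 0 ≤ c) (hc1 : c ≤ 1)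
    (p : (Fin m → Bool) → ℝ) (hp0 : ∀ x, 0 ≤ p x) (hp1 : ∑ x, p x = 1)
    (hbase : (∑ x : Fin m → Bool, if x ⟨0, hm⟩ = true then p x else 0) ≤ c)
    (hstep : ∀ ℓ : ℕ, 1 ≤ ℓ → ∀ hℓ : ℓ < m, ∀ s : Fin ℓ → Bool,
      (∑ x : Fin m → Bool,
          if (∀ i : Fin ℓ, x (Fin.castLE (le_of_lt hℓ) i) = s i) ∧ x ⟨ℓ, hℓ⟩ = true
          then p x else 0)
        ≤ c * ∑ x : Fin m → Bool,
            if (∀ i : Fin ℓ, x (Fin.castLE (le_of_lt hℓ) i) = s i) then p x else 0)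
    (k : ℕ) :
    (∑ x : Fin m → Bool,
        if k ≤ (univ.filter fun i => x i = true).card then p x else 0)
      ≤ ∑ x : Fin m → Bool,
          if k ≤ (univ.filter fun i => x i = true).card then
            c ^ (univ.filter fun i => x i = true).card *
              (1 - c) ^ (m - (univ.filter fun i => x i = true).card)
          else 0 := by
  have hbias : IsBiased c p := by
    rintro (_ | ℓ) hℓ s
    · simpa [hp1] using hbase
    · exact hstep (ℓ + 1) ℓ.succ_pos hℓ s
  have h := upperTail_le_mul_upperTail_bernoulliWeight hc0 hc1 hp0 hbias k
  rw [hp1, one_mul] at h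
  simp only [upperTail, bernoulliWeight_eq_pow_mul_pow] at h
  unfold onesCount at h
  exact h

open Finset in
/-- A `c`-biased distribution over `{0,1}^m` is stochastically dominated (for
counts of ones) by the product distribution with independent `Bernoulli(c)`
bits: for every `1 ≤ k ≤ m`, the probability of seeing at least `k` ones under
the `c`-biased distribution is at most the corresponding probability under the
independent distribution. -/
theorem stmt8 (m : ℕ) (hm : 1 ≤ m) (c : ℝ) (hc0 : 0 ≤ c) (hc1 : c ≤ 1)
    (p : (Fin m → Bool) → ℝ) (hp0 : ∀ x, 0 ≤ p x) (hp1 : ∑ x, p x = 1)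
    (hbase : (∑ x : Fin m → Bool, if x ⟨0, hm⟩ = true then p x else 0) ≤ c)
    (hstep : ∀ ℓ : ℕ, 1 ≤ ℓ → ∀ hℓ : ℓ < m, ∀ s : Fin ℓ → Bool,
      (∑ x : Fin m → Bool,
          if (∀ i : Fin ℓ, x (Fin.castLE (le_of_lt hℓ) i) = s i) ∧ x ⟨ℓ, hℓ⟩ = true
          then p x else 0)
        ≤ c * ∑ x : Fin m → Bool,
            if (∀ i : Fin ℓ, x (Fin.castLE (le_of_lt hℓ) i) = s i) then p x else 0)
    (k : ℕ) (hk1 : 1 ≤ k) (hk2 : k ≤ m) :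
    (∑ x : Fin m → Bool,
        if k ≤ (univ.filter fun i => x i = true).card then p x else 0)
      ≤ ∑ x : Fin m → Bool,
          if k ≤ (univ.filter fun i => x i = true).card then
            c ^ (univ.filter fun i => x i = true).card *
              (1 - c) ^ (m - (univ.filter fun i => x i = true).card)
          else 0 :=
  stmt8_general m hm c hc0 hc1 p hp0 hp1 hbase hstep k
end

section
/- Let H_1, H_2 ⊆ E^d = {±e_1,...,±e_d} form a balanced-non-canceling pair, i.e., |H_1| = |H_2| and s_1 + s_2 ≠ 0 for all s_1 ∈ H_1, s_2 ∈ H_2. Pair the smallest element s_1 of H_1 (in lexicographic order) with the largest element s_2 of H_2, add the two directed edges (−s_1, −s_1 + s_2) and (−s_1 + s_2, s_2) on vertex set {−1,0,+1}^d, remove s_1 from H_1 and s_2 from H_2, and repeat until H_1 is empty. Then in the resulting directed graph G[H_1,H_2] on {−1,0,+1}^d: every vertex has in-degree ≤ 1 and out-degree ≤ 1; a vertex u has in-degree 0 and out-degree 1 iff u = −e for some e ∈ H_1; and u has in-degree 1 and out-degree 0 iff u = e for some e ∈ H_2. -/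
/-- Lexicographic (strict) order on vectors in `ℤ^d`. -/
def lexLt {d : ℕ} (x y : Fin d → ℤ) : Prop :=
  ∃ i : Fin d, x i < y i ∧ ∀ j : Fin d, j < i → x j = y j

/-- `x` is a signed standard unit vector `±e_i`. -/
def isSignedUnit {d : ℕ} (x : Fin d → ℤ) : Prop :=
  ∃ (i : Fin d) (s : ℤ), (s = 1 ∨ s = -1) ∧ x = fun j => if j = i then s else 0

/-- The edge relation of `G[H₁,H₂]`: with `a` the increasing enumeration of
`H₁` and `b` the decreasing enumeration of `H₂` (so step `t` pairs the
`t`-smallest of `H₁` with the `t`-largest of `H₂`), the edges are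
`(-a t, -a t + b t)` and `(-a t + b t, b t)`. -/
def edgeRel {d k : ℕ} (a b : Fin k → (Fin d → ℤ)) (u v : Fin d → ℤ) : Prop :=
  ∃ t : Fin k, (u = -(a t) ∧ v = -(a t) + b t) ∨ (u = -(a t) + b t ∧ v = b t)

/-!
Step `t` contributes the path `-a t → -a t + b t → b t`, so the graph is a union of `k` paths of
length two and it suffices that the `3k` vertices involved are distinct. Starts are distinct since
`a` is injective, ends since `b` is, and midpoints because, the lexicographic order being
compatible with addition, `t ↦ -a t + b t` is strictly decreasing when `a` increases and `b`
decreases. A start is never an end because the pair is non-canceling, and a midpoint is neither a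
start nor an end because the coordinate sum of a signed unit vector is odd, so the sum of two
signed unit vectors is never a signed unit vector.
-/

section TwoEdgePaths

variable {ι V : Type*} {src mid snk : ι → V} {u : V}

def twoEdgePaths (src mid snk : ι → V) (u v : V) : Prop :=
  ∃ t, (u = src t ∧ v = mid t) ∨ (u = mid t ∧ v = snk t)

theorem twoEdgePaths.out_unique (hsrc : Function.Injective src) (hmid : Function.Injective mid)
    (hsm : ∀ t t', src t ≠ mid t') {v₁ v₂ : V} :
    twoEdgePaths src mid snk u v₁ → twoEdgePaths src mid snk u v₂ → v₁ = v₂ := by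
  rintro ⟨t₁, ⟨rfl, rfl⟩ | ⟨rfl, rfl⟩⟩ ⟨t₂, ⟨h, rfl⟩ | ⟨h, rfl⟩⟩
  · rw [hsrc h]
  · exact absurd h (hsm t₁ t₂)
  · exact absurd h.symm (hsm t₂ t₁)
  · rw [hmid h]

theorem twoEdgePaths.in_unique (hmid : Function.Injective mid) (hsnk : Function.Injective snk)
    (hms : ∀ t t', mid t ≠ snk t') {w₁ w₂ : V} :
    twoEdgePaths src mid snk w₁ u → twoEdgePaths src mid snk w₂ u → w₁ = w₂ := by
  rintro ⟨t₁, ⟨rfl, rfl⟩ | ⟨rfl, rfl⟩⟩ ⟨t₂, ⟨rfl, h⟩ | ⟨rfl, h⟩⟩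
  · rw [hmid h]
  · exact absurd h (hms t₁ t₂)
  · exact absurd h.symm (hms t₂ t₁)
  · rw [hsnk h]

theorem twoEdgePaths.isSource_iff (hsm : ∀ t t', src t ≠ mid t') (hss : ∀ t t', src t ≠ snk t') :
    ((∃ v, twoEdgePaths src mid snk u v) ∧ ¬∃ w, twoEdgePaths src mid snk w u) ↔
      ∃ t, u = src t := by
  constructor
  · rintro ⟨⟨v, t, ⟨rfl, -⟩ | ⟨rfl, -⟩⟩, hin⟩
    · exact ⟨t, rfl⟩
    · exact absurd ⟨src t, t, Or.inl ⟨rfl, rfl⟩⟩ hin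
  · rintro ⟨t, rfl⟩
    refine ⟨⟨mid t, t, Or.inl ⟨rfl, rfl⟩⟩, ?_⟩
    rintro ⟨w, t', ⟨-, h⟩ | ⟨-, h⟩⟩
    exacts [hsm t t' h, hss t t' h]

theorem twoEdgePaths.isSink_iff (hms : ∀ t t', mid t ≠ snk t') (hss : ∀ t t', src t ≠ snk t') :
    ((∃ w, twoEdgePaths src mid snk w u) ∧ ¬∃ v, twoEdgePaths src mid snk u v) ↔
      ∃ t, u = snk t := by
  constructor
  · rintro ⟨⟨w, t, ⟨-, rfl⟩ | ⟨-, rfl⟩⟩, hout⟩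
    · exact absurd ⟨snk t, t, Or.inr ⟨rfl, rfl⟩⟩ hout
    · exact ⟨t, rfl⟩
  · rintro ⟨t, rfl⟩
    refine ⟨⟨mid t, t, Or.inr ⟨rfl, rfl⟩⟩, ?_⟩
    rintro ⟨v, t', ⟨h, -⟩ | ⟨h, -⟩⟩
    exacts [hss t' t h.symm, hms t' t h.symm]

end TwoEdgePaths

theorem Finset.mem_iff_exists_apply_eq_of_card_eq {α ι : Type*} [Fintype ι] {s : Finset α}
    {f : ι → α} (hf : ∀ i, f i ∈ s) (hinj : Function.Injective f) (hcard : s.card = Fintype.card ι)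
    {x : α} : x ∈ s ↔ ∃ i, f i = x := by
  refine ⟨fun hx => ?_, by rintro ⟨i, rfl⟩; exact hf i⟩
  obtain ⟨i, -, rfl⟩ := Finset.surj_on_of_inj_on_of_card_le (s := Finset.univ) (fun i _ => f i)
    (fun i _ => hf i) (fun _ _ _ _ h => hinj h) (by simp [hcard]) x hx
  exact ⟨i, rfl⟩

theorem lexLt_iff_toLex_lt {d : ℕ} {x y : Fin d → ℤ} : lexLt x y ↔ toLex x < toLex y :=
  exists_congr fun _ => and_comm

theorem injective_neg_add_of_lexLt {d k : ℕ} {a b : Fin k → Fin d → ℤ}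
    (ha : ∀ t₁ t₂, t₁ < t₂ → lexLt (a t₁) (a t₂)) (hb : ∀ t₁ t₂, t₁ < t₂ → lexLt (b t₂) (b t₁)) :
    Function.Injective fun t => -a t + b t := by
  have hA : StrictMono fun t => toLex (a t) := fun _ _ h => lexLt_iff_toLex_lt.1 (ha _ _ h)
  have hB : StrictAnti fun t => toLex (b t) := fun _ _ h => lexLt_iff_toLex_lt.1 (hb _ _ h)
  exact (hA.neg.add hB).injective

theorem isSignedUnit.odd_sum {d : ℕ} {x : Fin d → ℤ} (hx : isSignedUnit x) : Odd (∑ i, x i) := by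
  obtain ⟨i, s, hs, rfl⟩ := hx
  rcases hs with rfl | rfl <;> simp

theorem isSignedUnit.add_ne {d : ℕ} {x y z : Fin d → ℤ} (hx : isSignedUnit x)
    (hy : isSignedUnit y) (hz : isSignedUnit z) : x + y ≠ z := by
  rintro rfl
  have hsum := hz.odd_sum
  simp only [Pi.add_apply, Finset.sum_add_distrib] at hsum
  exact Int.not_odd_iff_even.2 (hx.odd_sum.add_odd hy.odd_sum) hsum

theorem stmt16_general (d k : ℕ) (H1 H2 : Finset (Fin d → ℤ))
    (hu1 : ∀ x ∈ H1, isSignedUnit x) (hu2 : ∀ x ∈ H2, isSignedUnit x)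
    (hc1 : H1.card = k) (hc2 : H2.card = k)
    (hnc : ∀ s1 ∈ H1, ∀ s2 ∈ H2, s1 + s2 ≠ 0)
    (a b : Fin k → (Fin d → ℤ))
    (ha1 : ∀ t, a t ∈ H1) (ha2 : Function.Injective a)
    (hamono : ∀ t1 t2 : Fin k, t1 < t2 → lexLt (a t1) (a t2))
    (hb1 : ∀ t, b t ∈ H2) (hb2 : Function.Injective b)
    (hbmono : ∀ t1 t2 : Fin k, t1 < t2 → lexLt (b t2) (b t1)) :
    (∀ u v1 v2, edgeRel a b u v1 → edgeRel a b u v2 → v1 = v2) ∧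
    (∀ u w1 w2, edgeRel a b w1 u → edgeRel a b w2 u → w1 = w2) ∧
    (∀ u : Fin d → ℤ,
      ((∃ v, edgeRel a b u v) ∧ ¬(∃ w, edgeRel a b w u)) ↔ ∃ e ∈ H1, u = -e) ∧
    (∀ u : Fin d → ℤ,
      ((∃ w, edgeRel a b w u) ∧ ¬(∃ v, edgeRel a b u v)) ↔ ∃ e ∈ H2, u = e) := by
  have hG : edgeRel a b = twoEdgePaths (fun t => -a t) (fun t => -a t + b t) b := rfl
  have hmid := injective_neg_add_of_lexLt hamono hbmono
  have hsm (t t' : Fin k) : -a t ≠ -a t' + b t' := fun h =>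
    (hu1 _ (ha1 t)).add_ne (hu2 _ (hb1 t')) (hu1 _ (ha1 t')) (by linear_combination -h)
  have hms (t t' : Fin k) : -a t + b t ≠ b t' := fun h =>
    (hu1 _ (ha1 t)).add_ne (hu2 _ (hb1 t')) (hu2 _ (hb1 t)) (by linear_combination -h)
  have hss (t t' : Fin k) : -a t ≠ b t' := fun h =>
    hnc _ (ha1 t) _ (hb1 t') (by linear_combination -h)
  have hH1 (e) := Finset.mem_iff_exists_apply_eq_of_card_eq (x := e) ha1 ha2 (by simp [hc1])
  have hH2 (e) := Finset.mem_iff_exists_apply_eq_of_card_eq (x := e) hb1 hb2 (by simp [hc2])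
  rw [hG]
  refine ⟨fun _ _ _ => twoEdgePaths.out_unique (neg_injective.comp ha2) hmid hsm,
    fun _ _ _ => twoEdgePaths.in_unique hmid hb2 hms, fun u => ?_, fun u => ?_⟩
  · rw [twoEdgePaths.isSource_iff hsm hss]
    simp [hH1]
  · rw [twoEdgePaths.isSink_iff hms hss]
    simp [hH2, eq_comm]

/-- Properties of the graph `G[H₁,H₂]` built from a balanced-non-canceling pair:
all in/out-degrees are at most 1; sources are exactly the vertices `-e`, `e ∈ H₁`;
sinks are exactly the vertices `e`, `e ∈ H₂`. -/
theorem stmt16 (d k : ℕ) (hd : 1 ≤ d) (H1 H2 : Finset (Fin d → ℤ))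
    (hu1 : ∀ x ∈ H1, isSignedUnit x) (hu2 : ∀ x ∈ H2, isSignedUnit x)
    (hc1 : H1.card = k) (hc2 : H2.card = k)
    (hnc : ∀ s1 ∈ H1, ∀ s2 ∈ H2, s1 + s2 ≠ 0)
    (a b : Fin k → (Fin d → ℤ))
    (ha1 : ∀ t, a t ∈ H1) (ha2 : Function.Injective a)
    (hamono : ∀ t1 t2 : Fin k, t1 < t2 → lexLt (a t1) (a t2))
    (hb1 : ∀ t, b t ∈ H2) (hb2 : Function.Injective b)
    (hbmono : ∀ t1 t2 : Fin k, t1 < t2 → lexLt (b t2) (b t1)) :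
    (∀ u v1 v2, edgeRel a b u v1 → edgeRel a b u v2 → v1 = v2) ∧
    (∀ u w1 w2, edgeRel a b w1 u → edgeRel a b w2 u → w1 = w2) ∧
    (∀ u : Fin d → ℤ,
      ((∃ v, edgeRel a b u v) ∧ ¬(∃ w, edgeRel a b w u)) ↔ ∃ e ∈ H1, u = -e) ∧
    (∀ u : Fin d → ℤ,
      ((∃ w, edgeRel a b w u) ∧ ¬(∃ v, edgeRel a b u v)) ↔ ∃ e ∈ H2, u = e) :=
  stmt16_general d k H1 H2 hu1 hu2 hc1 hc2 hnc a b ha1 ha2 hamono hb1 hb2 hbmono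
end

section
/- Let f_{d,+}, f_{d,−} : B_d → E^d be defined on B_d = {−1,0,1}^d \ {0} as follows: for r ∈ B_d let k be the smallest index with r_k ≠ 0; if k ≤ d−1 then f_{d,+}(r) = f_{d,−}(r) = −r_k e_k; if k = d then f_{d,+}(r) = −r_d e_d and f_{d,−}(r) = r_d e_d. Then both f_{d,+} and f_{d,−} are direction-preserving on B_d: for all r_1, r_2 ∈ B_d with ‖r_1 − r_2‖_∞ ≤ 1, ‖f(r_1) − f(r_2)‖_∞ ≤ 1. -/
/-- Membership in `B_d = {-1,0,1}^d \ {0}`. -/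
def inBd {d : ℕ} (r : Fin d → ℤ) : Prop :=
  (∀ i, -1 ≤ r i ∧ r i ≤ 1) ∧ r ≠ 0

def DirectionPreservingOnBd {d : ℕ} (f : (Fin d → ℤ) → (Fin d → ℤ)) : Prop :=
  ∀ r1 r2 : Fin d → ℤ, inBd r1 → inBd r2 → (∀ i, |r1 i - r2 i| ≤ 1) →
    ∀ i, |f r1 i - f r2 i| ≤ 1

lemma inBd.abs_le_one {d : ℕ} {r : Fin d → ℤ} (hr : inBd r) (i : Fin d) : |r i| ≤ 1 :=
  abs_le.mpr (hr.1 i)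

lemma exists_first_ne_zero {ι M : Type*} [LT ι] [WellFoundedLT ι] [Zero M]
    (r : ι → M) (hr : r ≠ 0) : ∃ k, r k ≠ 0 ∧ ∀ j, j < k → r j = 0 := by
  obtain ⟨i, hi⟩ := Function.ne_iff.mp hr
  obtain ⟨k, hk, hmin⟩ := wellFounded_lt.has_min {j | r j ≠ 0} ⟨i, hi⟩
  exact ⟨k, hk, fun j hj => by_contra fun hj0 => hmin j hj0 hj⟩

/-- The images of two points of `B_d` are supported on their first nonzero indices, where the
values are bounded by `|ε k| * |r k| ≤ 1`, or by `|ε k| * |r1 k - r2 k| ≤ 1` when the indices agree. -/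
lemma directionPreservingOnBd_of_eq_leading {d : ℕ} (ε : Fin d → ℤ) (hε : ∀ k, |ε k| ≤ 1)
    (f : (Fin d → ℤ) → (Fin d → ℤ))
    (hf : ∀ r, inBd r → ∀ k : Fin d, r k ≠ 0 → (∀ j : Fin d, j < k → r j = 0) →
      f r = fun j => if j = k then ε k * r k else 0) :
    DirectionPreservingOnBd f := by
  intro r1 r2 h1 h2 hnear i
  obtain ⟨k1, hk1, hm1⟩ := exists_first_ne_zero r1 h1.2
  obtain ⟨k2, hk2, hm2⟩ := exists_first_ne_zero r2 h2.2
  rw [hf r1 h1 k1 hk1 hm1, hf r2 h2 k2 hk2 hm2]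
  have hmul (a : ℤ) (ha : |a| ≤ 1) : |ε i * a| ≤ 1 := by
    rw [abs_mul]
    exact mul_le_one₀ (hε i) (abs_nonneg a) ha
  by_cases e1 : i = k1 <;> by_cases e2 : i = k2
  · subst e1 e2
    simpa [← mul_sub] using hmul _ (hnear i)
  · subst e1
    simpa [e2] using hmul _ (h1.abs_le_one i)
  · subst e2
    simpa [e1] using hmul _ (h2.abs_le_one i)
  · simp [e1, e2]

theorem stmt17_general (d : ℕ)
    (fplus fminus : (Fin d → ℤ) → (Fin d → ℤ))
    (hplus : ∀ r : Fin d → ℤ, inBd r → ∀ k : Fin d, r k ≠ 0 →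
      (∀ j : Fin d, j < k → r j = 0) →
      fplus r = fun j => if j = k then -(r k) else 0)
    (hminus : ∀ r : Fin d → ℤ, inBd r → ∀ k : Fin d, r k ≠ 0 →
      (∀ j : Fin d, j < k → r j = 0) →
      fminus r = fun j => if j = k then (if k.val = d - 1 then r k else -(r k)) else 0) :
    (∀ r1 r2 : Fin d → ℤ, inBd r1 → inBd r2 → (∀ i, |r1 i - r2 i| ≤ 1) →
      ∀ i, |fplus r1 i - fplus r2 i| ≤ 1) ∧
    (∀ r1 r2 : Fin d → ℤ, inBd r1 → inBd r2 → (∀ i, |r1 i - r2 i| ≤ 1) →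
      ∀ i, |fminus r1 i - fminus r2 i| ≤ 1) := by
  constructor
  · refine directionPreservingOnBd_of_eq_leading (fun _ => -1) (fun _ => by simp) fplus ?_
    intro r hr k hk hm
    rw [hplus r hr k hk hm]
    simp
  · refine directionPreservingOnBd_of_eq_leading (fun k => if k.val = d - 1 then 1 else -1)
      (fun k => by split_ifs <;> simp) fminus ?_
    intro r hr k hk hm
    rw [hminus r hr k hk hm]
    funext j
    split_ifs <;> simp

/-- The functions `f_{d,+}` and `f_{d,-}` on `B_d = {-1,0,1}^d \ {0}` (given by
their defining specification: with `k` the smallest index with `r_k ≠ 0`,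
`f_{d,+}(r) = f_{d,-}(r) = -r_k e_k` if `k ≤ d-1`, while for `k = d`,
`f_{d,+}(r) = -r_d e_d` and `f_{d,-}(r) = r_d e_d`) are both
direction-preserving on `B_d`. -/
theorem stmt17 (d : ℕ) (hd : 2 ≤ d)
    (fplus fminus : (Fin d → ℤ) → (Fin d → ℤ))
    (hplus : ∀ r : Fin d → ℤ, inBd r → ∀ k : Fin d, r k ≠ 0 →
      (∀ j : Fin d, j < k → r j = 0) →
      fplus r = fun j => if j = k then -(r k) else 0)
    (hminus : ∀ r : Fin d → ℤ, inBd r → ∀ k : Fin d, r k ≠ 0 →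
      (∀ j : Fin d, j < k → r j = 0) →
      fminus r = fun j => if j = k then (if k.val = d - 1 then r k else -(r k)) else 0) :
    (∀ r1 r2 : Fin d → ℤ, inBd r1 → inBd r2 → (∀ i, |r1 i - r2 i| ≤ 1) →
      ∀ i, |fplus r1 i - fplus r2 i| ≤ 1) ∧
    (∀ r1 r2 : Fin d → ℤ, inBd r1 → inBd r2 → (∀ i, |r1 i - r2 i| ≤ 1) →
      ∀ i, |fminus r1 i - fminus r2 i| ≤ 1) :=
  stmt17_general d fplus fminus hplus hminus
end

section
/- For d ≥ 1, n ≥ 2, and β ∈ [0, 24^{−d}], let T be a valid (n,d,β)-ToPC and let F[T] be the set of names of tails of valid (n,d)-ToCs consistent with T. Then |F[T]| ≥ ((1−β)n)^d. -/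
/-- The basic segments: `S_0 = 2` and `S_j = (2j+1)(2j+2)` for `j ≥ 1`. -/
def segStr (j : ℕ) : List ℕ := if j = 0 then [2] else [2 * j + 1, 2 * j + 2]

/-- `C` is a connector over `J_n = [2:2n+2]`:
`C = S_0 ∘ S_{π(1)} ∘ … ∘ S_{π(n)}` for some permutation `π` of `[1:n]`. -/
def IsConnector (n : ℕ) (C : List ℕ) : Prop :=
  ∃ π : Fin n → Fin n, Function.Bijective π ∧
    C = segStr 0 ++ (List.ofFn fun i : Fin n => segStr ((π i : ℕ) + 1)).flatten

/-- A partial connector over `J_n`, given as the list of its connecting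
segments: each segStr is `S_{σ(1)} ∘ … ∘ S_{σ(k)}` for an array `σ` of
distinct elements of `[0:n]`; each `j ∈ J_n` lies in exactly one segStr; and
`2` is the first symbol of the segStr containing it. -/
def IsPartialConnector (n : ℕ) (P : List (List ℕ)) : Prop :=
  P.Nodup ∧
  (∀ s ∈ P, ∃ σ : List ℕ, σ ≠ [] ∧ σ.Nodup ∧ (∀ j ∈ σ, j ≤ n) ∧
    s = (σ.map segStr).flatten) ∧
  (∀ j : ℕ, 2 ≤ j → j ≤ 2 * n + 2 → ∃ s ∈ P, j ∈ s) ∧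
  (∀ s1 ∈ P, ∀ s2 ∈ P, ∀ j : ℕ, j ∈ s1 → j ∈ s2 → s1 = s2) ∧
  (∀ s ∈ P, (2 : ℕ) ∈ s → s.head? = some 2)

/-- A `β`-partial connector: a partial connector with at least `(1-β)n + 1`
segments. -/
def IsBetaPartial (n : ℕ) (β : ℝ) (P : List (List ℕ)) : Prop :=
  IsPartialConnector n P ∧ (1 - β) * n + 1 ≤ (P.length : ℝ)

/-- `follows l s t` means `t` immediately follows `s` in the string `l`. -/
def follows (l : List ℕ) (s t : ℕ) : Prop := ∃ l1 l2, l = l1 ++ s :: t :: l2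

/-- `φ_C(s) = t`: for even `s`, `t` is the right neighbor of `s` in `C`;
for odd `s`, `t` is the left neighbor of `s`. -/
def phiRel (C : List ℕ) (s t : ℕ) : Prop :=
  (Even s ∧ follows C s t) ∨ (Odd s ∧ follows C t s)

/-- Paths in the tree `T_{n,d}`: lists of labels from `J_n = [2:2n+2]`. -/
def GoodPath (n : ℕ) (p : List ℕ) : Prop := ∀ x ∈ p, 2 ≤ x ∧ x ≤ 2 * n + 2

/-- Descend `h` steps from node `p` by repeatedly following the last symbol of
the current connector; `tailFrom C d []` is the name of the tail of the ToC. -/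
def tailFrom (C : List ℕ → List ℕ) : ℕ → List ℕ → List ℕ
  | 0, p => p
  | h + 1, p => tailFrom C h (p ++ [(C p).getLast!])

/-- A valid `(n,d)`-Tree-of-Connectors: every internal node `p` (a path of
length `< d`) carries a connector, and whenever `φ_{C_p}(s) = t`, the names of
the tails of the `s`-th and `t`-th successors of `p` share a common suffix of
length `height(p) - 1 = d - |p| - 1`. -/
def IsValidToC (n d : ℕ) (C : List ℕ → List ℕ) : Prop :=
  (∀ p : List ℕ, GoodPath n p → p.length < d → IsConnector n (C p)) ∧
  (∀ p : List ℕ, GoodPath n p → p.length < d → ∀ s t : ℕ, phiRel (C p) s t →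
    (tailFrom C (d - p.length - 1) (p ++ [s])).drop (p.length + 1) =
      (tailFrom C (d - p.length - 1) (p ++ [t])).drop (p.length + 1))

/-- The connector recorded at a node of a ToPC whose partial connector is a
single full segStr. -/
def connAt (P : List ℕ → List (List ℕ)) (p : List ℕ) : List ℕ :=
  ((P p).head?).getD []

/-- The subtree of a ToPC rooted at `base` is complete: every partial connector
below `base` is a single segStr which is a full connector. -/
def SubtreeComplete (n d : ℕ) (P : List ℕ → List (List ℕ)) (base : List ℕ) : Prop :=
  ∀ q : List ℕ, GoodPath n q → base.length + q.length < d →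
    ∃ c : List ℕ, IsConnector n c ∧ P (base ++ q) = [c]

/-- A valid `(n,d)`-Tree-of-Partial-Connectors: each internal node carries a
partial connector, and for each internal node `p` whose children are not leaves,
whenever `φ_{𝒞_p}(s) = t` (i.e. `s,t` are joined inside some segStr of
`𝒞_p`), the subtrees rooted at the `s`-th and `t`-th successors of `p` are
(complete) valid ToCs whose tails have the same name within their subtrees. -/
def IsValidToPC (n d : ℕ) (P : List ℕ → List (List ℕ)) : Prop :=
  (∀ p : List ℕ, GoodPath n p → p.length < d → IsPartialConnector n (P p)) ∧
  (∀ p : List ℕ, GoodPath n p → p.length + 1 < d → ∀ s t : ℕ,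
    (∃ seg ∈ P p, phiRel seg s t) →
    SubtreeComplete n d P (p ++ [s]) ∧ SubtreeComplete n d P (p ++ [t]) ∧
    IsValidToC n (d - (p.length + 1)) (fun q => connAt P ((p ++ [s]) ++ q)) ∧
    IsValidToC n (d - (p.length + 1)) (fun q => connAt P ((p ++ [t]) ++ q)) ∧
    tailFrom (fun q => connAt P ((p ++ [s]) ++ q)) (d - (p.length + 1)) [] =
      tailFrom (fun q => connAt P ((p ++ [t]) ++ q)) (d - (p.length + 1)) [])

/-- A valid `(n,d,β)`-ToPC: a valid ToPC whose root has a `β`-partial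
connector, such that whenever an internal node `p` (whose children are not
leaves) has a `β`-partial connector `𝒞`, each `s`-th successor for
`s ∈ L[𝒞] ∪ R[𝒞] ∪ {r[𝒞]}` has a `β`-partial connector. -/
def IsBetaToPC (n d : ℕ) (β : ℝ) (P : List ℕ → List (List ℕ)) : Prop :=
  IsValidToPC n d P ∧ IsBetaPartial n β (P []) ∧
  (∀ p : List ℕ, GoodPath n p → p.length + 1 < d → IsBetaPartial n β (P p) →
    ∀ s : ℕ,
      ((∃ seg ∈ P p, seg.head? = some s ∧ seg.head? ≠ some 2) ∨
       (∃ seg ∈ P p, seg.getLast? = some s ∧ seg.head? ≠ some 2) ∨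
       (∃ seg ∈ P p, seg.head? = some 2 ∧ seg.getLast? = some s)) →
      IsBetaPartial n β (P (p ++ [s])))

/-- `T ⊨ T*`: the valid ToC `C` is consistent with the ToPC `P` — at every
internal node, every segStr of the partial connector is an infix of the
connector of `C`. -/
def ConsistentToC (n d : ℕ) (P : List ℕ → List (List ℕ)) (C : List ℕ → List ℕ) : Prop :=
  IsValidToC n d C ∧
  ∀ p : List ℕ, GoodPath n p → p.length < d → ∀ seg ∈ P p, seg <:+: C p

namespace Aux

/-- adjacency in a general list -/
def Adj {α : Type*} (L : List α) (a b : α) : Prop := ∃ l1 l2, L = l1 ++ a :: b :: l2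

theorem adj_iff_follows (l : List ℕ) (s t : ℕ) : follows l s t ↔ Adj l s t := Iff.rfl

@[simp] theorem adj_nil {α : Type*} (a b : α) : ¬ Adj ([] : List α) a b := by
  rintro ⟨l1, l2, h⟩; cases l1 <;> simp at h

theorem adj_cons {α : Type*} {x : α} {w : List α} {s t : α} :
    Adj (x :: w) s t ↔ (x = s ∧ w.head? = some t) ∨ Adj w s t := by
  constructor
  · rintro ⟨l1, l2, h⟩
    cases l1 with
    | nil => simp_all
    | cons y l1 =>
      rw [List.cons_append] at h
      injection h with h1 h2
      exact Or.inr ⟨l1, l2, h2⟩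
  · rintro (⟨rfl, hh⟩ | ⟨l1, l2, rfl⟩)
    · cases w with
      | nil => simp at hh
      | cons y w => exact ⟨[], w, by simp_all⟩
    · exact ⟨x :: l1, l2, rfl⟩

theorem adj_append {α : Type*} {a b : List α} {s t : α} :
    Adj (a ++ b) s t ↔ Adj a s t ∨ Adj b s t ∨ (a.getLast? = some s ∧ b.head? = some t) := by
  induction a with
  | nil => simp [adj_nil]
  | cons x a ih =>
    rw [List.cons_append, adj_cons, ih, adj_cons]
    cases a with
    | nil => simp only [List.getLast?_singleton, List.nil_append, adj_nil, Option.some.injEq]; tauto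
    | cons y a =>
      simp only [List.head?_cons, List.getLast?_cons_cons, List.cons_append]
      tauto

theorem adj_mem_left {α : Type*} {L : List α} {a b : α} (h : Adj L a b) : a ∈ L := by
  obtain ⟨l1, l2, rfl⟩ := h; simp

theorem adj_mem_right {α : Type*} {L : List α} {a b : α} (h : Adj L a b) : b ∈ L := by
  obtain ⟨l1, l2, rfl⟩ := h; simp

theorem head?_flatten_cons {α : Type*} {B : List α} (hB : B ≠ []) (L : List (List α)) :
    (B :: L).flatten.head? = B.head? := by
  rw [List.flatten_cons, List.head?_append_of_ne_nil _ hB]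

theorem getLast?_flatten {α : Type*} {L : List (List α)} {A : List α}
    (hne : ∀ w ∈ L, w ≠ []) (h : L.getLast? = some A) :
    L.flatten.getLast? = A.getLast? := by
  induction L with
  | nil => simp at h
  | cons x L ih =>
    cases L with
    | nil =>
      simp only [List.getLast?_singleton, Option.some.injEq] at h
      subst h; simp
    | cons y L =>
      rw [List.getLast?_cons_cons] at h
      rw [List.flatten_cons, List.getLast?_append_of_ne_nil, ih (fun w hw => hne w (by simp [hw])) h]
      · intro hc
        have : y = [] := by
          have := congrArg List.head? hc
          rw [head?_flatten_cons (hne y (by simp)) ] at this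
          cases y with
          | nil => rfl
          | cons z zs => simp at this
        exact hne y (by simp) this

theorem adj_flatten {α : Type*} {L : List (List α)} (hne : ∀ w ∈ L, w ≠ []) {s t : α} :
    Adj L.flatten s t ↔ (∃ w ∈ L, Adj w s t) ∨
      (∃ A B, Adj L A B ∧ A.getLast? = some s ∧ B.head? = some t) := by
  induction L with
  | nil => simp [adj_nil]
  | cons w L ih =>
    rw [List.flatten_cons, adj_append, ih (fun x hx => hne x (by simp [hx]))]
    constructor
    · rintro (h | ((⟨w', hw', h⟩ | ⟨A, B, hAB, h1, h2⟩) | ⟨h1, h2⟩))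
      · exact Or.inl ⟨w, by simp, h⟩
      · exact Or.inl ⟨w', by simp [hw'], h⟩
      · exact Or.inr ⟨A, B, adj_cons.mpr (Or.inr hAB), h1, h2⟩
      · -- straddle between w and first block of L
        cases L with
        | nil => simp at h2
        | cons Bb Lb =>
          rw [head?_flatten_cons (hne Bb (by simp)) ] at h2
          exact Or.inr ⟨w, Bb, adj_cons.mpr (Or.inl ⟨rfl, rfl⟩), h1, h2⟩
    · rintro (⟨w', hw', h⟩ | ⟨A, B, hAB, h1, h2⟩)
      · rcases List.mem_cons.mp hw' with rfl | hw'
        · exact Or.inl h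
        · exact Or.inr (Or.inl (Or.inl ⟨w', hw', h⟩))
      · rcases adj_cons.mp hAB with ⟨hwA, hB⟩ | hAB'
        · subst hwA
          right; right
          refine ⟨h1, ?_⟩
          cases L with
          | nil => simp at hB
          | cons B' L' =>
            simp only [List.head?_cons, Option.some.injEq] at hB
            subst hB
            rw [head?_flatten_cons (hne _ (by simp))]; exact h2
        · exact Or.inr (Or.inl (Or.inr ⟨A, B, hAB', h1, h2⟩))

theorem adj_map {α β : Type*} {f : α → β} {L : List α} {A B : β} :
    Adj (L.map f) A B ↔ ∃ a b, Adj L a b ∧ A = f a ∧ B = f b := by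
  induction L with
  | nil => simp [adj_nil]
  | cons x L ih =>
    rw [List.map_cons, adj_cons, ih]
    constructor
    · rintro (⟨rfl, hh⟩ | ⟨a, b, h, rfl, rfl⟩)
      · cases L with
        | nil => simp at hh
        | cons y L =>
          simp only [List.map_cons, List.head?_cons, Option.some.injEq] at hh
          exact ⟨x, y, ⟨[], L, rfl⟩, rfl, hh.symm⟩
      · exact ⟨a, b, adj_cons.mpr (Or.inr h), rfl, rfl⟩
    · rintro ⟨a, b, hab, rfl, rfl⟩
      rcases adj_cons.mp hab with ⟨rfl, hh⟩ | h
      · left; refine ⟨rfl, ?_⟩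
        cases L with
        | nil => simp at hh
        | cons y L =>
          simp only [List.head?_cons, Option.some.injEq] at hh; subst hh; simp
      · exact Or.inr ⟨a, b, h, rfl, rfl⟩

theorem mem_of_getLast?_eq {α : Type*} {l : List α} {a : α} (h : l.getLast? = some a) : a ∈ l := by
  obtain ⟨ys, rfl⟩ := List.getLast?_eq_some_iff.mp h; simp

theorem mem_of_head?_eq {α : Type*} {l : List α} {a : α} (h : l.head? = some a) : a ∈ l := by
  cases l with
  | nil => simp at h
  | cons x l => simp only [List.head?_cons, Option.some.injEq] at h; simp [h.symm]

theorem getLast?_cons_ne {α : Type*} {x : α} {L : List α} (h : L ≠ []) :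
    (x :: L).getLast? = L.getLast? := by
  cases L with
  | nil => exact absurd rfl h
  | cons y L => simp

theorem nodup_append_unique {α : Type*} {a : α} {l1 r1 l2 r2 : List α}
    (hn : (l1 ++ a :: r1).Nodup) (h : l1 ++ a :: r1 = l2 ++ a :: r2) :
    l1 = l2 ∧ r1 = r2 := by
  induction l1 generalizing l2 with
  | nil =>
    cases l2 with
    | nil =>
      have h' : a :: r1 = a :: r2 := h
      refine ⟨rfl, ?_⟩
      injection h'
    | cons y l2 =>
      simp only [List.nil_append, List.cons_append, List.cons.injEq] at h
      obtain ⟨rfl, h2⟩ := h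
      exfalso
      have : a ∈ l2 ++ a :: r2 := by simp
      rw [← h2] at this
      simp only [List.nil_append, List.nodup_cons] at hn
      exact hn.1 this
  | cons x l1 ih =>
    cases l2 with
    | nil =>
      simp only [List.cons_append, List.nil_append, List.cons.injEq] at h
      obtain ⟨rfl, h2⟩ := h
      exfalso
      simp only [List.cons_append, List.nodup_cons] at hn
      exact hn.1 (by simp)
    | cons y l2 =>
      simp only [List.cons_append, List.cons.injEq] at h
      obtain ⟨rfl, h2⟩ := h
      simp only [List.cons_append, List.nodup_cons] at hn
      obtain ⟨h1, h2'⟩ := ih hn.2 h2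
      exact ⟨by rw [h1], h2'⟩

theorem adj_unique_left {α : Type*} {L : List α} {A B B' : α} (hn : L.Nodup)
    (h1 : Adj L A B) (h2 : Adj L A B') : B = B' := by
  obtain ⟨l1, r1, rfl⟩ := h1
  obtain ⟨l2, r2, he⟩ := h2
  obtain ⟨-, h⟩ := nodup_append_unique hn he
  exact (List.cons.injEq _ _ _ _ ▸ h).1

theorem adj_unique_right {α : Type*} {L : List α} {A A' B : α} (hn : L.Nodup)
    (h1 : Adj L A B) (h2 : Adj L A' B) : A = A' := by
  obtain ⟨l1, r1, rfl⟩ := h1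
  obtain ⟨l2, r2, he⟩ := h2
  have he' : (l1 ++ [A]) ++ B :: r1 = (l2 ++ [A']) ++ B :: r2 := by
    simpa using he
  have hn' : ((l1 ++ [A]) ++ B :: r1).Nodup := by simpa using hn
  obtain ⟨h, -⟩ := nodup_append_unique hn' he'
  have := congrArg List.getLast? h
  simpa using this

theorem adj_ne_getLast {α : Type*} {L : List α} {A B : α} (hn : L.Nodup)
    (h : Adj L A B) : L.getLast? ≠ some A := by
  obtain ⟨l1, r1, rfl⟩ := h
  rw [List.getLast?_append_of_ne_nil _ (by simp), List.getLast?_cons_cons]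
  intro hc
  have hmem : A ∈ B :: r1 := mem_of_getLast?_eq hc
  have := (List.nodup_append.mp hn).2.1
  simp only [List.nodup_cons] at this
  exact this.1 hmem

theorem adj_ne_head {α : Type*} {L : List α} {A B : α} (hn : L.Nodup)
    (h : Adj L A B) : L.head? ≠ some B := by
  obtain ⟨l1, r1, rfl⟩ := h
  cases l1 with
  | nil =>
    simp only [List.nil_append, List.head?_cons, ne_eq, Option.some.injEq]
    intro hc; subst hc
    simp only [List.nil_append, List.nodup_cons] at hn
    exact hn.1 (by simp)
  | cons x l1 =>
    simp only [List.cons_append, List.head?_cons, ne_eq, Option.some.injEq]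
    intro hc; subst hc
    simp only [List.cons_append, List.nodup_cons] at hn
    exact hn.1 (by simp)

theorem exists_adj_succ {α : Type*} {L : List α} {a : α} (hm : a ∈ L)
    (hl : L.getLast? ≠ some a) : ∃ b, Adj L a b := by
  induction L with
  | nil => simp at hm
  | cons x L ih =>
    rcases List.mem_cons.mp hm with rfl | hm'
    · cases L with
      | nil => simp at hl
      | cons y L => exact ⟨y, ⟨[], L, rfl⟩⟩
    · have hL : L ≠ [] := by rintro rfl; simp at hm'
      have : L.getLast? ≠ some a := by
        rwa [getLast?_cons_ne hL] at hl
      obtain ⟨b, l1, l2, rfl⟩ := ih hm' this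
      exact ⟨b, x :: l1, l2, rfl⟩

theorem exists_adj_pred {α : Type*} {L : List α} {a : α} (hm : a ∈ L)
    (hl : L.head? ≠ some a) : ∃ b, Adj L b a := by
  induction L with
  | nil => simp at hm
  | cons x L ih =>
    simp only [List.head?_cons, ne_eq, Option.some.injEq] at hl
    rcases List.mem_cons.mp hm with rfl | hm'
    · exact absurd rfl hl
    · by_cases hh : L.head? = some a
      · cases L with
        | nil => simp at hh
        | cons y L =>
          simp only [List.head?_cons, Option.some.injEq] at hh; subst hh
          exact ⟨x, [], L, rfl⟩
      · obtain ⟨b, l1, l2, rfl⟩ := ih hm' hh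
        exact ⟨b, x :: l1, l2, rfl⟩

/-! segment symbols -/

def headSym (j : ℕ) : ℕ := if j = 0 then 2 else 2 * j + 1
def lastSym (j : ℕ) : ℕ := if j = 0 then 2 else 2 * j + 2

theorem segStr_ne_nil (j : ℕ) : segStr j ≠ [] := by
  unfold segStr; split <;> simp

theorem head?_segStr (j : ℕ) : (segStr j).head? = some (headSym j) := by
  unfold segStr headSym; split <;> simp

theorem getLast?_segStr (j : ℕ) : (segStr j).getLast? = some (lastSym j) := by
  unfold segStr lastSym; split <;> simp

theorem mem_segStr {x j : ℕ} : x ∈ segStr j ↔ (j = 0 ∧ x = 2) ∨ (j ≠ 0 ∧ (x = 2*j+1 ∨ x = 2*j+2)) := by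
  unfold segStr; split <;> simp_all

theorem adj_segStr {j s t : ℕ} : Adj (segStr j) s t ↔ (j ≠ 0 ∧ s = 2*j+1 ∧ t = 2*j+2) := by
  by_cases h : j = 0
  · subst h
    simp only [segStr, if_pos rfl]
    constructor
    · rintro ⟨l1, l2, he⟩
      exfalso; rcases l1 with _ | ⟨x, l1⟩ <;> simp_all
    · rintro ⟨h', -⟩; exact absurd rfl h'
  · simp only [segStr, if_neg h]
    constructor
    · rintro ⟨l1, l2, he⟩
      rcases l1 with _ | ⟨x, l1⟩
      · simp only [List.nil_append, List.cons.injEq] at he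
        obtain ⟨rfl, he⟩ := he
        rcases l2 with _ | _ <;> simp_all
      · exfalso
        simp only [List.cons_append, List.cons.injEq] at he
        obtain ⟨rfl, he⟩ := he
        rcases l1 with _ | ⟨y, l1⟩ <;> simp_all
    · rintro ⟨-, rfl, rfl⟩; exact ⟨[], [], rfl⟩

theorem headSym_inj {a b : ℕ} (h : headSym a = headSym b) : a = b := by
  unfold headSym at h; split at h <;> split at h <;> omega

theorem lastSym_inj {a b : ℕ} (h : lastSym a = lastSym b) : a = b := by
  unfold lastSym at h; split at h <;> split at h <;> omega

theorem headSym_eq_lastSym {a b : ℕ} (h : headSym a = lastSym b) : a = 0 ∧ b = 0 := by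
  unfold headSym lastSym at h; split at h <;> split at h <;> omega

theorem lastSym_mem (j : ℕ) : lastSym j ∈ segStr j := by
  unfold lastSym segStr; split <;> simp

theorem headSym_mem (j : ℕ) : headSym j ∈ segStr j := by
  unfold headSym segStr; split <;> simp

theorem lastSym_even_or_two (j : ℕ) : lastSym j = 2 ∨ (lastSym j) % 2 = 0 := by
  unfold lastSym; split <;> omega

theorem headSym_odd (j : ℕ) (h : j ≠ 0) : (headSym j) % 2 = 1 := by
  unfold headSym; split <;> omega

theorem mem_segStr_bounds {x j n : ℕ} (hj : j ≤ n) (hx : x ∈ segStr j) :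
    2 ≤ x ∧ x ≤ 2 * n + 2 := by
  rcases mem_segStr.mp hx with ⟨rfl, rfl⟩ | ⟨h, (rfl|rfl)⟩ <;> omega

theorem mem_flatten_segStr {σ : List ℕ} {x : ℕ} :
    x ∈ (σ.map segStr).flatten ↔ ∃ j ∈ σ, x ∈ segStr j := by simp

theorem adj_flatten_segStr {σ : List ℕ} {s t : ℕ} :
    Adj (σ.map segStr).flatten s t ↔
      (∃ j ∈ σ, j ≠ 0 ∧ s = 2*j+1 ∧ t = 2*j+2) ∨
      (∃ j j', Adj σ j j' ∧ s = lastSym j ∧ t = headSym j') := by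
  rw [adj_flatten (by simp [segStr_ne_nil] : ∀ w ∈ σ.map segStr, w ≠ [])]
  constructor
  · rintro (⟨w, hw, h⟩ | ⟨A, B, hAB, h1, h2⟩)
    · obtain ⟨j, hj, rfl⟩ := List.mem_map.mp hw
      obtain ⟨hj0, rfl, rfl⟩ := adj_segStr.mp h
      exact Or.inl ⟨j, hj, hj0, rfl, rfl⟩
    · obtain ⟨j, j', hadj, rfl, rfl⟩ := adj_map.mp hAB
      rw [getLast?_segStr] at h1
      rw [head?_segStr] at h2
      refine Or.inr ⟨j, j', hadj, ?_, ?_⟩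
      · injection h1 with h1; exact h1.symm
      · injection h2 with h2; exact h2.symm
  · rintro (⟨j, hj, hj0, rfl, rfl⟩ | ⟨j, j', hadj, rfl, rfl⟩)
    · exact Or.inl ⟨segStr j, List.mem_map_of_mem hj, adj_segStr.mpr ⟨hj0, rfl, rfl⟩⟩
    · exact Or.inr ⟨segStr j, segStr j', adj_map.mpr ⟨j, j', hadj, rfl, rfl⟩,
        getLast?_segStr j, head?_segStr j'⟩

theorem flatten_segStr_ne_nil {σ : List ℕ} (h : σ ≠ []) : (σ.map segStr).flatten ≠ [] := by
  cases σ with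
  | nil => exact absurd rfl h
  | cons j σ =>
    simp only [List.map_cons, List.flatten_cons, ne_eq, List.append_eq_nil_iff]
    intro hc
    exact segStr_ne_nil j hc.1

theorem head?_flatten_segStr {σ : List ℕ} {j : ℕ} (h : σ.head? = some j) :
    (σ.map segStr).flatten.head? = some (headSym j) := by
  cases σ with
  | nil => simp at h
  | cons j0 σ =>
    simp only [List.head?_cons, Option.some.injEq] at h
    subst h
    rw [List.map_cons, List.flatten_cons, List.head?_append_of_ne_nil _ (segStr_ne_nil j0)]
    exact head?_segStr j0

theorem getLast?_flatten_segStr {σ : List ℕ} {j : ℕ} (h : σ.getLast? = some j) :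
    (σ.map segStr).flatten.getLast? = some (lastSym j) := by
  have h1 : (σ.map segStr).getLast? = some (segStr j) := by
    rw [List.getLast?_map, h]; rfl
  rw [getLast?_flatten (by simp [segStr_ne_nil]) h1]
  exact getLast?_segStr j

theorem infix_flatten {α : Type*} {L : List (List α)} {w : List α} (h : w ∈ L) :
    w <:+: L.flatten := by
  obtain ⟨s, t, rfl⟩ := List.append_of_mem h
  exact ⟨s.flatten, t.flatten, by simp⟩

/-! tailFrom -/

theorem tailFrom_cons (C : List ℕ → List ℕ) (h : ℕ) (s : ℕ) (q : List ℕ) :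
    tailFrom C h (s :: q) = s :: tailFrom (fun r => C (s :: r)) h q := by
  induction h generalizing q with
  | zero => rfl
  | succ h ih =>
    show tailFrom C h ((s :: q) ++ [(C (s :: q)).getLast!]) = _
    rw [List.cons_append]
    exact ih _

/-! universe of tails -/

def Univ (n e : ℕ) : Set (List ℕ) :=
  {u | u.length = e ∧ ∀ x ∈ u, ∃ j, 1 ≤ j ∧ j ≤ n ∧ x = 2*j+2}

def UnivF (n : ℕ) : ℕ → Finset (List ℕ)
  | 0 => {[]}
  | e+1 => ((Finset.Icc 1 n) ×ˢ UnivF n e).image fun p => (2*p.1+2) :: p.2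

theorem univ_subset_univF {n e : ℕ} : Univ n e ⊆ ↑(UnivF n e) := by
  induction e with
  | zero =>
    rintro u ⟨hl, -⟩
    rw [List.length_eq_zero_iff] at hl
    subst hl; simp [UnivF]
  | succ e ih =>
    rintro u ⟨hl, hmem⟩
    cases u with
    | nil => simp at hl
    | cons x u =>
      obtain ⟨j, hj1, hjn, rfl⟩ := hmem x (by simp)
      have hu : u ∈ UnivF n e := ih ⟨by simpa using hl, fun y hy => hmem y (by simp [hy])⟩
      simp only [UnivF, Finset.coe_image, Set.mem_image, Finset.mem_coe, Finset.mem_product]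
      exact ⟨(j, u), by simp [Finset.mem_Icc, hj1, hjn, hu], rfl⟩

theorem card_univF (n e : ℕ) : (UnivF n e).card ≤ n ^ e := by
  induction e with
  | zero => simp [UnivF]
  | succ e ih =>
    calc (UnivF n (e+1)).card ≤ ((Finset.Icc 1 n) ×ˢ UnivF n e).card :=
          Finset.card_image_le
      _ = (Finset.Icc 1 n).card * (UnivF n e).card := Finset.card_product _ _
      _ ≤ n * n ^ e := by
          have : (Finset.Icc 1 n).card = n := by simp
          rw [this]; exact Nat.mul_le_mul_left n ih
      _ = n ^ (e+1) := by ring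

theorem univ_finite (n e : ℕ) : (Univ n e).Finite :=
  Set.Finite.subset (UnivF n e).finite_toSet univ_subset_univF

theorem ncard_univ_le (n e : ℕ) : (Univ n e).ncard ≤ n ^ e := by
  calc (Univ n e).ncard ≤ (↑(UnivF n e) : Set (List ℕ)).ncard :=
        Set.ncard_le_ncard univ_subset_univF (UnivF n e).finite_toSet
    _ = (UnivF n e).card := by rw [Set.ncard_coe_finset]
    _ ≤ n ^ e := card_univF n e

/-! counting -/

theorem ncard_sum_le {α : Type*} : ∀ (l : List α) (g : α → Set (List ℕ)) (T : Set (List ℕ)),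
    T.Finite → (∀ a ∈ l, g a ⊆ T) → l.Nodup →
    (∀ a ∈ l, ∀ b ∈ l, a ≠ b → g a ∩ g b = ∅) →
    (l.map fun a => (g a).ncard).sum ≤ T.ncard := by
  intro l g
  induction l with
  | nil => intro T _ _ _ _; simp
  | cons x l ih =>
    intro T hT hsub hnd hdisj
    simp only [List.map_cons, List.sum_cons]
    have hx : g x ⊆ T := hsub x (by simp)
    have h1 : ∀ a ∈ l, g a ⊆ T \ g x := by
      intro a ha y hy
      refine ⟨hsub a (by simp [ha]) hy, ?_⟩
      intro hyx
      have hmem : y ∈ g a ∩ g x := ⟨hy, hyx⟩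
      rw [hdisj a (by simp [ha]) x (by simp)
        (by rintro rfl; exact (List.nodup_cons.mp hnd).1 ha)] at hmem
      exact hmem
    have h2 := ih (T \ g x) hT.diff h1 (List.nodup_cons.mp hnd).2
      (fun a ha b hb => hdisj a (by simp [ha]) b (by simp [hb]))
    have heq : (T \ g x).ncard + (g x).ncard = T.ncard :=
      Set.ncard_diff_add_ncard_of_subset hx hT
    omega

theorem inter_nonempty_of_ncard {F G U : Set (List ℕ)} (hU : U.Finite)
    (hF : F ⊆ U) (hG : G ⊆ U) (h : U.ncard < F.ncard + G.ncard) : (F ∩ G).Nonempty := by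
  by_contra hc
  rw [Set.not_nonempty_iff_eq_empty] at hc
  have hd : Disjoint F G := Set.disjoint_iff_inter_eq_empty.mpr hc
  have hun : (F ∪ G).ncard = F.ncard + G.ncard :=
    Set.ncard_union_eq hd (hU.subset hF) (hU.subset hG)
  have : (F ∪ G).ncard ≤ U.ncard :=
    Set.ncard_le_ncard (Set.union_subset hF hG) hU
  omega

theorem two_mul_lt_pow (d : ℕ) (h : 1 ≤ d) : 2 * d < 24 ^ d := by
  induction d with
  | zero => omega
  | succ d ih =>
    rcases Nat.eq_or_lt_of_le h with h' | h'
    · simp [← h']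
    · have hd : 1 ≤ d := by omega
      have := ih hd
      have h24 : 24 ^ d < 24 ^ (d+1) := by
        have : (24:ℕ) ^ d ≥ 1 := Nat.one_le_pow _ _ (by norm_num)
        calc 24 ^ d < 24 ^ d * 24 := by omega
          _ = 24 ^ (d+1) := by ring
      omega

theorem one_sub_beta_pow_gt_half {β : ℝ} (h0 : 0 ≤ β) {d k : ℕ} (hd : 1 ≤ d)
    (hk : k + 1 ≤ d) (hβ : β ≤ 1 / 24 ^ d) : (1 : ℝ)/2 < (1 - β) ^ k := by
  have h24 : (0:ℝ) < 24 ^ d := by positivity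
  have hβ1 : β ≤ 1 := le_trans hβ (by
    rw [div_le_one h24]
    exact one_le_pow₀ (by norm_num : (1:ℝ) ≤ 24))
  have hber : 1 + (k : ℝ) * (-β) ≤ (1 + (-β)) ^ k :=
    one_add_mul_le_pow (by linarith) k
  have hkd : (k : ℝ) ≤ (d : ℝ) - 1 := by
    have : (k:ℝ) + 1 ≤ (d:ℝ) := by exact_mod_cast hk
    linarith
  have h2d : 2 * ((d:ℝ) - 1) < 24 ^ d := by
    have := two_mul_lt_pow d hd
    have h1 : (2 * d : ℝ) < 24 ^ d := by exact_mod_cast this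
    linarith
  have hkβ : (k : ℝ) * β < 1/2 := by
    have hk0 : (0:ℝ) ≤ (k:ℝ) := Nat.cast_nonneg k
    calc (k : ℝ) * β ≤ ((d:ℝ) - 1) * (1 / 24 ^ d) := by
          apply mul_le_mul hkd hβ h0 (by linarith)
      _ < 1/2 := by
          rw [mul_one_div, div_lt_iff₀ h24]
          linarith
  calc (1:ℝ)/2 < 1 - (k:ℝ) * β := by linarith
    _ = 1 + (k:ℝ) * (-β) := by ring
    _ ≤ (1 + (-β)) ^ k := hber
    _ = (1 - β) ^ k := by congr 1

/-! connectors -/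

theorem isConnector_of_perm {n : ℕ} {ρ : List ℕ} (hnd : ρ.Nodup) (hlen : ρ.length = n)
    (hmem : ∀ j ∈ ρ, 1 ≤ j ∧ j ≤ n) : IsConnector n (segStr 0 ++ (ρ.map segStr).flatten) := by
  subst hlen
  have hget : ∀ i : Fin ρ.length, 1 ≤ ρ.get i ∧ ρ.get i ≤ ρ.length := by
    intro i
    exact hmem _ (by simpa using List.get_mem ρ i.1 i.2)
  refine ⟨fun i => ⟨ρ.get i - 1, by have := hget i; omega⟩, ?_, ?_⟩
  · rw [← Finite.injective_iff_bijective]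
    intro i i' h
    have hv : ρ.get i - 1 = ρ.get i' - 1 := congrArg Fin.val h
    have : ρ.get i = ρ.get i' := by
      have := (hget i).1; have := (hget i').1; omega
    exact hnd.get_inj_iff.mp this
  · congr 1
    have heq : (fun i : Fin ρ.length => segStr ((ρ.get i - 1) + 1)) =
        fun i : Fin ρ.length => segStr (ρ.get i) := by
      funext i
      congr 1
      have := (hget i).1
      omega
    symm
    show (List.ofFn fun i : Fin ρ.length => segStr ((ρ.get i - 1) + 1)).flatten = _
    rw [heq]
    rw [show (fun i : Fin ρ.length => segStr (ρ.get i)) = segStr ∘ ρ.get from rfl]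
    rw [← List.map_ofFn, List.ofFn_get]

theorem connector_getLast {n : ℕ} {c : List ℕ} (hn : 1 ≤ n) (h : IsConnector n c) :
    ∃ j, 1 ≤ j ∧ j ≤ n ∧ c.getLast? = some (2*j+2) := by
  obtain ⟨π, hbij, rfl⟩ := h
  obtain ⟨m, rfl⟩ : ∃ m, n = m + 1 := ⟨n - 1, by omega⟩
  rw [List.ofFn_succ']
  refine ⟨(π (Fin.last m) : ℕ) + 1, by omega, by have := (π (Fin.last m)).isLt; omega, ?_⟩
  rw [List.concat_eq_append, List.flatten_append]
  rw [List.getLast?_append_of_ne_nil _ (by simp [segStr_ne_nil])]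
  rw [List.getLast?_append_of_ne_nil _ (by simp [segStr_ne_nil])]
  rw [List.flatten_cons, List.flatten_nil, List.append_nil, getLast?_segStr]
  simp [lastSym]

/-! partial connector structure -/

open scoped Classical in
noncomputable def sigOf (n : ℕ) (seg : List ℕ) : List ℕ :=
  if h : ∃ σ : List ℕ, σ ≠ [] ∧ σ.Nodup ∧ (∀ j ∈ σ, j ≤ n) ∧ seg = (σ.map segStr).flatten
  then h.choose else []

section PC

variable {n : ℕ} {S : List (List ℕ)}

theorem sigOf_spec (hpc : IsPartialConnector n S) {seg : List ℕ} (hs : seg ∈ S) :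
    sigOf n seg ≠ [] ∧ (sigOf n seg).Nodup ∧ (∀ j ∈ sigOf n seg, j ≤ n) ∧
      seg = ((sigOf n seg).map segStr).flatten := by
  have h := hpc.2.1 seg hs
  rw [sigOf]
  rw [dif_pos h]
  exact h.choose_spec

theorem seg_ne_nil (hpc : IsPartialConnector n S) {seg : List ℕ} (hs : seg ∈ S) : seg ≠ [] := by
  obtain ⟨h1, -, -, h4⟩ := sigOf_spec hpc hs
  rw [h4]
  exact flatten_segStr_ne_nil h1

theorem mem_seg_iff (hpc : IsPartialConnector n S) {seg : List ℕ} (hs : seg ∈ S) {x : ℕ} :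
    x ∈ seg ↔ ∃ j ∈ sigOf n seg, x ∈ segStr j := by
  conv_lhs => rw [(sigOf_spec hpc hs).2.2.2]
  simp

theorem two_mem_segStr {j : ℕ} : (2 : ℕ) ∈ segStr j ↔ j = 0 := by
  rw [mem_segStr]; omega

theorem index_unique (hpc : IsPartialConnector n S) {seg1 seg2 : List ℕ}
    (h1 : seg1 ∈ S) (h2 : seg2 ∈ S) {j : ℕ} (hj1 : j ∈ sigOf n seg1)
    (hj2 : j ∈ sigOf n seg2) : seg1 = seg2 := by
  apply hpc.2.2.2.1 seg1 h1 seg2 h2 (lastSym j)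
  · exact (mem_seg_iff hpc h1).mpr ⟨j, hj1, lastSym_mem j⟩
  · exact (mem_seg_iff hpc h2).mpr ⟨j, hj2, lastSym_mem j⟩

theorem seg_head (hpc : IsPartialConnector n S) {seg : List ℕ} (hs : seg ∈ S) :
    ∃ j, (sigOf n seg).head? = some j ∧ j ≤ n ∧ seg.head? = some (headSym j) := by
  obtain ⟨h1, -, h3, h4⟩ := sigOf_spec hpc hs
  cases hσ : sigOf n seg with
  | nil => exact absurd hσ h1
  | cons j σ' =>
    refine ⟨j, rfl, h3 j (by rw [hσ]; simp), ?_⟩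
    rw [h4, head?_flatten_segStr (by rw [hσ]; rfl)]

theorem seg_last (hpc : IsPartialConnector n S) {seg : List ℕ} (hs : seg ∈ S) :
    ∃ j, (sigOf n seg).getLast? = some j ∧ j ≤ n ∧ seg.getLast? = some (lastSym j) := by
  obtain ⟨h1, -, h3, h4⟩ := sigOf_spec hpc hs
  obtain ⟨j, hj⟩ : ∃ j, (sigOf n seg).getLast? = some j := by
    cases hσ : (sigOf n seg).getLast? with
    | none => rw [List.getLast?_eq_none_iff] at hσ; exact absurd hσ h1
    | some j => exact ⟨j, rfl⟩
  refine ⟨j, hj, h3 j (mem_of_getLast?_eq hj), ?_⟩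
  rw [h4, getLast?_flatten_segStr hj]

theorem two_mem_iff_zero (hpc : IsPartialConnector n S) {seg : List ℕ} (hs : seg ∈ S) :
    (2 : ℕ) ∈ seg ↔ 0 ∈ sigOf n seg := by
  rw [mem_seg_iff hpc hs]
  constructor
  · rintro ⟨j, hj, hx⟩
    rwa [two_mem_segStr.mp hx] at hj
  · intro h
    exact ⟨0, h, by simp [segStr]⟩

theorem sig_head_zero (hpc : IsPartialConnector n S) {seg : List ℕ} (hs : seg ∈ S)
    (hh : seg.head? = some 2) : (sigOf n seg).head? = some 0 := by
  obtain ⟨j, hj, -, hj2⟩ := seg_head hpc hs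
  rw [hh] at hj2
  injection hj2 with hj2
  have : j = 0 := by unfold headSym at hj2; split at hj2 <;> omega
  rwa [this] at hj

theorem exists_seg2 (hpc : IsPartialConnector n S) :
    ∃ seg2 ∈ S, seg2.head? = some 2 ∧ (2:ℕ) ∈ seg2 := by
  obtain ⟨seg2, hmem, h2⟩ := hpc.2.2.1 2 (le_refl 2) (by omega)
  exact ⟨seg2, hmem, hpc.2.2.2.2 seg2 hmem h2, h2⟩

theorem cover_idx (hpc : IsPartialConnector n S) {j : ℕ} (hj : j ≤ n) :
    ∃ seg ∈ S, j ∈ sigOf n seg := by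
  rcases Nat.eq_zero_or_pos j with rfl | hj1
  · obtain ⟨seg2, hmem, -, h2⟩ := exists_seg2 hpc
    exact ⟨seg2, hmem, (two_mem_iff_zero hpc hmem).mp h2⟩
  · obtain ⟨seg, hmem, hx⟩ := hpc.2.2.1 (2*j+1) (by omega) (by omega)
    refine ⟨seg, hmem, ?_⟩
    obtain ⟨j', hj', hxx⟩ := (mem_seg_iff hpc hmem).mp hx
    rcases mem_segStr.mp hxx with ⟨rfl, h⟩ | ⟨h, (h'|h')⟩ <;> first
      | omega
      | (have : j' = j := by omega
         rwa [this] at hj')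

/-! the flattened index sequence of an ordering -/

theorem flatten_map_flatten {α β : Type*} (g : α → List β) (X : List (List α)) :
    (X.map (fun σ => (σ.map g).flatten)).flatten = ((X.flatten).map g).flatten := by
  induction X with
  | nil => rfl
  | cons σ X ih => simp [ih]

theorem flatten_L_eq (hpc : IsPartialConnector n S) {L : List (List ℕ)} (hperm : L.Perm S) :
    L.flatten = (((L.map (sigOf n)).flatten).map segStr).flatten := by
  rw [← flatten_map_flatten segStr (L.map (sigOf n))]
  rw [List.map_map]
  have : L.map ((fun σ => (σ.map segStr).flatten) ∘ sigOf n) = L.map id := by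
    apply List.map_congr_left
    intro seg hseg
    exact ((sigOf_spec hpc (hperm.mem_iff.mp hseg)).2.2.2).symm
  rw [this, List.map_id]

theorem sigma_nodup (hpc : IsPartialConnector n S) {L : List (List ℕ)} (hperm : L.Perm S) :
    ((L.map (sigOf n)).flatten).Nodup := by
  rw [List.nodup_flatten]
  constructor
  · intro l hl
    obtain ⟨seg, hseg, rfl⟩ := List.mem_map.mp hl
    exact (sigOf_spec hpc (hperm.mem_iff.mp hseg)).2.1
  · rw [List.pairwise_map]
    have hnd : L.Nodup := hperm.symm.nodup hpc.1
    apply hnd.pairwise_of_forall_ne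
    intro A hA B hB hne j hjA hjB
    exact hne (index_unique hpc (hperm.mem_iff.mp hA) (hperm.mem_iff.mp hB) hjA hjB)

theorem sigma_mem_iff (hpc : IsPartialConnector n S) {L : List (List ℕ)} (hperm : L.Perm S)
    {j : ℕ} : j ∈ (L.map (sigOf n)).flatten ↔ j ≤ n := by
  simp only [List.mem_flatten, List.mem_map]
  constructor
  · rintro ⟨σ, ⟨seg, hseg, rfl⟩, hj⟩
    exact (sigOf_spec hpc (hperm.mem_iff.mp hseg)).2.2.1 j hj
  · intro hj
    obtain ⟨seg, hseg, hjs⟩ := cover_idx hpc hj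
    exact ⟨sigOf n seg, ⟨seg, hperm.mem_iff.mpr hseg, rfl⟩, hjs⟩

theorem sigma_length (hpc : IsPartialConnector n S) {L : List (List ℕ)} (hperm : L.Perm S) :
    ((L.map (sigOf n)).flatten).length = n + 1 := by
  have hnd := sigma_nodup hpc hperm
  have : ((L.map (sigOf n)).flatten).toFinset = Finset.range (n+1) := by
    ext j
    simp only [List.mem_toFinset, Finset.mem_range, sigma_mem_iff hpc hperm]
    omega
  have hcard := congrArg Finset.card this
  rwa [List.toFinset_card_of_nodup hnd, Finset.card_range] at hcard

theorem sigma_cons (hpc : IsPartialConnector n S) {L : List (List ℕ)} (hperm : L.Perm S)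
    {seg2 : List ℕ} (hh : L.head? = some seg2) (h2 : seg2.head? = some 2) :
    ∃ ρ, (L.map (sigOf n)).flatten = 0 :: ρ := by
  cases L with
  | nil => simp at hh
  | cons A L' =>
    simp only [List.head?_cons, Option.some.injEq] at hh
    subst hh
    have hmem : A ∈ S := hperm.mem_iff.mp (by simp)
    have h0 : (sigOf n A).head? = some 0 := sig_head_zero hpc hmem h2
    cases hσ : sigOf n A with
    | nil => rw [hσ] at h0; simp at h0
    | cons j σ' =>
      rw [hσ] at h0
      simp only [List.head?_cons, Option.some.injEq] at h0
      subst h0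
      exact ⟨σ' ++ (L'.map (sigOf n)).flatten, by simp [hσ]⟩

theorem isConnector_flatten_L (hpc : IsPartialConnector n S) {L : List (List ℕ)}
    (hperm : L.Perm S) {seg2 : List ℕ} (hh : L.head? = some seg2)
    (h2 : seg2.head? = some 2) : IsConnector n L.flatten := by
  obtain ⟨ρ, hSig⟩ := sigma_cons hpc hperm hh h2
  rw [flatten_L_eq hpc hperm, hSig, List.map_cons, List.flatten_cons]
  have hnd : (0 :: ρ).Nodup := hSig ▸ sigma_nodup hpc hperm
  have hlen : (0 :: ρ).length = n + 1 := hSig ▸ sigma_length hpc hperm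
  apply isConnector_of_perm (List.nodup_cons.mp hnd).2 (by simpa using hlen)
  intro j hj
  have hj0 : j ≠ 0 := by rintro rfl; exact (List.nodup_cons.mp hnd).1 hj
  have hjn : j ≤ n := by
    have : j ∈ (L.map (sigOf n)).flatten := by rw [hSig]; simp [hj]
    exact (sigma_mem_iff hpc hperm).mp this
  omega

theorem seg_symbol_bounds (hpc : IsPartialConnector n S) {seg : List ℕ} (hs : seg ∈ S)
    {x : ℕ} (hx : x ∈ seg) : 2 ≤ x ∧ x ≤ 2 * n + 2 := by
  obtain ⟨j, hj, hxj⟩ := (mem_seg_iff hpc hs).mp hx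
  exact mem_segStr_bounds ((sigOf_spec hpc hs).2.2.1 j hj) hxj

theorem phiRel_shape (hpc : IsPartialConnector n S) {seg : List ℕ} (hs : seg ∈ S)
    {s t : ℕ} (hphi : phiRel seg s t) :
    ∃ j j', Adj (sigOf n seg) j j' ∧
      ((s = lastSym j ∧ t = headSym j') ∨ (t = lastSym j ∧ s = headSym j')) := by
  rcases hphi with ⟨hev, hadj⟩ | ⟨hodd, hadj⟩
  · rw [(sigOf_spec hpc hs).2.2.2] at hadj
    rcases adj_flatten_segStr.mp hadj with ⟨j, -, -, rfl, -⟩ | ⟨j, j', h, rfl, rfl⟩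
    · rw [Nat.even_iff] at hev; omega
    · exact ⟨j, j', h, Or.inl ⟨rfl, rfl⟩⟩
  · rw [(sigOf_spec hpc hs).2.2.2] at hadj
    rcases adj_flatten_segStr.mp hadj with ⟨j, -, -, -, rfl⟩ | ⟨j, j', h, rfl, rfl⟩
    · rw [Nat.odd_iff] at hodd; omega
    · exact ⟨j, j', h, Or.inr ⟨rfl, rfl⟩⟩

end PC

/-! tail universe membership -/

theorem goodpath_nil {n : ℕ} : GoodPath n [] := by intro x hx; simp at hx

theorem tailFrom_mem_univ {C : List ℕ → List ℕ} {n : ℕ} (hn : 1 ≤ n) :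
    ∀ (e : ℕ) (p : List ℕ), GoodPath n p →
    (∀ q, GoodPath n q → q.length < p.length + e → IsConnector n (C q)) →
    ∃ u ∈ Univ n e, tailFrom C e p = p ++ u := by
  intro e
  induction e with
  | zero =>
    intro p _ _
    exact ⟨[], ⟨rfl, by simp⟩, by simp [tailFrom]⟩
  | succ e ih =>
    intro p hp hC
    obtain ⟨j, hj1, hjn, hlast⟩ := connector_getLast hn (hC p hp (by omega))
    have hlast! : (C p).getLast! = 2*j+2 := List.getLast!_of_getLast? hlast
    have hgood : GoodPath n (p ++ [2*j+2]) := by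
      intro x hx
      rcases List.mem_append.mp hx with hx | hx
      · exact hp x hx
      · simp only [List.mem_singleton] at hx; omega
    obtain ⟨u, hu, hequ⟩ := ih (p ++ [2*j+2]) hgood (by
      intro q hq hlen
      exact hC q hq (by simp at hlen ⊢; omega))
    refine ⟨(2*j+2) :: u, ⟨by simp [hu.1], ?_⟩, ?_⟩
    · intro x hx
      rcases List.mem_cons.mp hx with rfl | hx
      · exact ⟨j, hj1, hjn, rfl⟩
      · exact hu.2 x hx
    · show tailFrom C e (p ++ [(C p).getLast!]) = _
      rw [hlast!, hequ, List.append_cons, List.append_assoc]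
      simp

/-! Fset -/

def SubCons (n e : ℕ) (P : List ℕ → List (List ℕ)) (b : List ℕ) (C : List ℕ → List ℕ) : Prop :=
  IsValidToC n e C ∧ ∀ q : List ℕ, GoodPath n q → q.length < e → ∀ seg ∈ P (b ++ q), seg <:+: C q

def Fset (n e : ℕ) (P : List ℕ → List (List ℕ)) (b : List ℕ) : Set (List ℕ) :=
  {τ | ∃ C, SubCons n e P b C ∧ τ = tailFrom C e []}

theorem Fset_subset_univ {n e : ℕ} {P : List ℕ → List (List ℕ)} {b : List ℕ} (hn : 1 ≤ n) :
    Fset n e P b ⊆ Univ n e := by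
  rintro τ ⟨C, ⟨⟨hconn, -⟩, -⟩, rfl⟩
  obtain ⟨u, hu, he⟩ := tailFrom_mem_univ hn e [] goodpath_nil
    (fun q hq hlt => hconn q hq (by simpa using hlt))
  rw [he]
  simpa using hu

theorem Fset_finite {n e : ℕ} {P : List ℕ → List (List ℕ)} {b : List ℕ} (hn : 1 ≤ n) :
    (Fset n e P b).Finite := (univ_finite n e).subset (Fset_subset_univ hn)

theorem subCons_connAt {n d e : ℕ} {P : List ℕ → List (List ℕ)} {b : List ℕ}
    (hcomp : SubtreeComplete n d P b) (hval : IsValidToC n e (fun q => connAt P (b ++ q)))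
    (he : b.length + e ≤ d) :
    SubCons n e P b (fun q => connAt P (b ++ q)) := by
  refine ⟨hval, ?_⟩
  intro q hq hlt seg hseg
  obtain ⟨c, -, hPc⟩ := hcomp q hq (by omega)
  rw [hPc, List.mem_singleton] at hseg
  subst hseg
  show seg <:+: connAt P (b ++ q)
  rw [connAt, hPc]
  exact List.infix_refl _

/-! assembling a consistent ToC at a β-node -/

theorem assemble {n e' : ℕ} {P : List ℕ → List (List ℕ)} {b : List ℕ}
    (hpc : IsPartialConnector n (P b)) {L : List (List ℕ)} (hperm : L.Perm (P b))
    {seg2 : List ℕ} (hh : L.head? = some seg2) (h2 : seg2.head? = some 2)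
    (CC : ℕ → List ℕ → List ℕ)
    (hCC1 : ∀ s, 2 ≤ s → s ≤ 2*n+2 → SubCons n e' P (b ++ [s]) (CC s))
    (hCC2 : ∀ A B u v, Adj L A B → A.getLast? = some u → B.head? = some v →
        tailFrom (CC u) e' [] = tailFrom (CC v) e' [])
    (hCC3 : ∀ s t : ℕ, (∃ seg ∈ P b, phiRel seg s t) →
        tailFrom (CC s) e' [] = tailFrom (CC t) e' []) :
    ∃ C, SubCons n (e'+1) P b C ∧
      tailFrom C (e'+1) [] = L.flatten.getLast! :: tailFrom (CC L.flatten.getLast!) e' [] := by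
  classical
  refine ⟨fun p => match p with
    | [] => L.flatten
    | s :: q => CC s q, ⟨⟨?_, ?_⟩, ?_⟩, ?_⟩
  · -- clause 1 : connectors everywhere
    intro p hp hlen
    match p with
    | [] => exact isConnector_flatten_L hpc hperm hh h2
    | s :: q =>
      have hs := hp s (by simp)
      have hq : GoodPath n q := fun x hx => hp x (by simp [hx])
      exact (hCC1 s hs.1 hs.2).1.1 q hq (by simpa using hlen)
  · -- clause 2 : suffix condition
    intro p hp hlen s t hphi
    match p with
    | s0 :: q =>
      have hs0 := hp s0 (by simp)
      have hq : GoodPath n q := fun x hx => hp x (by simp [hx])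
      have hlen' : q.length < e' := by simpa using hlen
      have h2' := (hCC1 s0 hs0.1 hs0.2).1.2 q hq hlen' s t hphi
      have harith : (e' + 1) - (s0 :: q).length - 1 = e' - q.length - 1 := by
        simp only [List.length_cons]; omega
      rw [harith]
      have ht1 : ∀ x : ℕ, tailFrom (fun p => match p with
          | [] => L.flatten
          | s :: q => CC s q) (e' - q.length - 1) ((s0 :: q) ++ [x]) =
          s0 :: tailFrom (CC s0) (e' - q.length - 1) (q ++ [x]) := by
        intro x
        exact tailFrom_cons _ _ _ _
      rw [ht1 s, ht1 t]
      simp only [List.length_cons, List.drop_succ_cons]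
      exact h2'
    | [] =>
      have harith : (e' + 1) - ([] : List ℕ).length - 1 = e' := by simp
      rw [harith]
      have ht1 : ∀ x : ℕ, tailFrom (fun p => match p with
          | [] => L.flatten
          | s :: q => CC s q) e' ([] ++ [x]) = x :: tailFrom (CC x) e' [] := by
        intro x
        exact tailFrom_cons _ _ _ _
      rw [ht1 s, ht1 t]
      simp only [List.drop_succ_cons, List.drop_zero]
      -- now analyze the adjacency
      have hblocks : ∀ σ' ∈ L.map (sigOf n), σ' ≠ [] := by
        intro σ' hσ'
        obtain ⟨seg, hseg, rfl⟩ := List.mem_map.mp hσ'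
        exact (sigOf_spec hpc (hperm.mem_iff.mp hseg)).1
      have hboundary : ∀ j j', Adj ((L.map (sigOf n)).flatten) j j' →
          (∀ u v, u = lastSym j → v = headSym j' → tailFrom (CC u) e' [] = tailFrom (CC v) e' []) := by
        intro j j' hadjSig u v hu hv
        subst hu; subst hv
        rcases (adj_flatten hblocks).mp hadjSig with ⟨σ', hσ', hadjσ⟩ | ⟨σA, σB, hadjL, hjA, hjB⟩
        · -- within one segment : use hCC3
          obtain ⟨seg, hseg, rfl⟩ := List.mem_map.mp hσ'
          have hsegS : seg ∈ P b := hperm.mem_iff.mp hseg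
          have hfol : follows seg (lastSym j) (headSym j') := by
            rw [(sigOf_spec hpc hsegS).2.2.2]
            exact adj_flatten_segStr.mpr (Or.inr ⟨j, j', hadjσ, rfl, rfl⟩)
          apply hCC3
          refine ⟨seg, hsegS, Or.inl ⟨?_, hfol⟩⟩
          -- lastSym j is even
          rcases lastSym_even_or_two j with h | h
          · rw [h]; exact even_two
          · rw [Nat.even_iff]; exact h
        · -- boundary between segments : use hCC2
          obtain ⟨A, B, hadjLL, rfl, rfl⟩ := adj_map.mp hadjL
          have hA : A ∈ P b := hperm.mem_iff.mp (adj_mem_left hadjLL)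
          have hB : B ∈ P b := hperm.mem_iff.mp (adj_mem_right hadjLL)
          have hAl : A.getLast? = some (lastSym j) := by
            rw [(sigOf_spec hpc hA).2.2.2]
            exact getLast?_flatten_segStr hjA
          have hBh : B.head? = some (headSym j') := by
            rw [(sigOf_spec hpc hB).2.2.2]
            exact head?_flatten_segStr hjB
          exact hCC2 A B _ _ hadjLL hAl hBh
      rcases hphi with ⟨hev, hadj⟩ | ⟨hodd, hadj⟩
      · -- even case : s followed by t in the root connector
        have hadj' : Adj ((L.map (sigOf n)).flatten.map segStr).flatten s t := by
          rw [← flatten_L_eq hpc hperm]; exact hadj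
        rcases adj_flatten_segStr.mp hadj' with ⟨j, -, -, rfl, -⟩ | ⟨j, j', hadjSig, rfl, rfl⟩
        · rw [Nat.even_iff] at hev; omega
        · exact hboundary j j' hadjSig _ _ rfl rfl
      · -- odd case : t followed by s
        have hadj' : Adj ((L.map (sigOf n)).flatten.map segStr).flatten t s := by
          rw [← flatten_L_eq hpc hperm]; exact hadj
        rcases adj_flatten_segStr.mp hadj' with ⟨j, -, -, -, rfl⟩ | ⟨j, j', hadjSig, rfl, rfl⟩
        · rw [Nat.odd_iff] at hodd; omega
        · exact (hboundary j j' hadjSig _ _ rfl rfl).symm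
  · -- consistency
    intro q hq hlt seg hseg
    match q with
    | [] =>
      rw [List.append_nil] at hseg
      exact infix_flatten (hperm.mem_iff.mpr hseg)
    | s0 :: q' =>
      have hs0 := hq s0 (by simp)
      have hq' : GoodPath n q' := fun x hx => hq x (by simp [hx])
      have : seg ∈ P ((b ++ [s0]) ++ q') := by
        rwa [show (b ++ [s0]) ++ q' = b ++ (s0 :: q') by simp]
      exact (hCC1 s0 hs0.1 hs0.2).2 q' hq' (by simpa using hlt) seg this
  · -- tail computation
    exact tailFrom_cons _ e' (L.flatten.getLast!) []

theorem Fset_zero (n : ℕ) (P : List ℕ → List (List ℕ)) (b : List ℕ) :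
    Fset n 0 P b = {([] : List ℕ)} := by
  ext τ
  simp only [Fset, Set.mem_setOf_eq, Set.mem_singleton_iff]
  constructor
  · rintro ⟨C, -, rfl⟩; rfl
  · rintro rfl
    refine ⟨fun _ => [], ⟨⟨?_, ?_⟩, ?_⟩, rfl⟩ <;> (intro p _ h; omega)

theorem list_sum_ge {α : Type*} (l : List α) (f : α → ℕ) (X : ℝ) (hX0 : 0 ≤ X)
    (hX : ∀ a ∈ l, X ≤ (f a : ℝ)) :
    (l.length : ℝ) * X ≤ ((l.map f).sum : ℝ) := by
  induction l with
  | nil => simp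
  | cons a l ih =>
    have h1 := hX a (by simp)
    have h2 := ih (fun x hx => hX x (by simp [hx]))
    simp only [List.map_cons, List.sum_cons, List.length_cons, Nat.cast_add, Nat.cast_one]
    have h3 : ((l.length:ℝ)+1)*X = l.length * X + X := by ring
    rw [h3]
    linarith

theorem exists_order {α : Type*} {S : List α} {a c : α} (ha : a ∈ S) (hc : c ∈ S)
    (hne : a ≠ c) : ∃ M, (a :: (M ++ [c])).Perm S := by
  obtain ⟨l1, r1, rfl⟩ := List.append_of_mem ha
  have hc' : c ∈ l1 ++ r1 := by
    rcases List.mem_append.mp hc with h | h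
    · exact List.mem_append.mpr (Or.inl h)
    · rcases List.mem_cons.mp h with rfl | h
      · exact absurd rfl hne
      · exact List.mem_append.mpr (Or.inr h)
  obtain ⟨l2, r2, hsplit⟩ := List.append_of_mem hc'
  refine ⟨l2 ++ r2, ?_⟩
  have p1 : ((l2 ++ r2) ++ [c]).Perm (c :: (l2 ++ r2)) := List.perm_append_singleton _ _
  have p2 : (c :: (l2 ++ r2)).Perm (l2 ++ c :: r2) := List.perm_middle.symm
  have p12 := ((p1.trans p2).cons a)
  rw [← hsplit] at p12
  exact p12.trans List.perm_middle.symm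

theorem ML {n d : ℕ} {β : ℝ} {P : List ℕ → List (List ℕ)} (hd : 1 ≤ d) (hn : 2 ≤ n)
    (h0 : 0 ≤ β) (hβ : β ≤ 1 / 24 ^ d) (hPv : IsValidToPC n d P)
    (hβstep : ∀ p : List ℕ, GoodPath n p → p.length + 1 < d → IsBetaPartial n β (P p) →
      ∀ s : ℕ,
      ((∃ seg ∈ P p, seg.head? = some s ∧ seg.head? ≠ some 2) ∨
       (∃ seg ∈ P p, seg.getLast? = some s ∧ seg.head? ≠ some 2) ∨
       (∃ seg ∈ P p, seg.head? = some 2 ∧ seg.getLast? = some s)) →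
      IsBetaPartial n β (P (p ++ [s]))) :
    ∀ e, 1 ≤ e → ∀ b, GoodPath n b → b.length + e = d → IsBetaPartial n β (P b) →
      ((1 - β) * n) ^ e ≤ ((Fset n e P b).ncard : ℝ) := by
  have hβ1 : β ≤ 1 := by
    refine le_trans hβ ?_
    rw [div_le_one (by positivity)]
    exact one_le_pow₀ (by norm_num : (1:ℝ) ≤ 24)
  intro e
  induction e using Nat.strong_induction_on with
  | _ e ih =>
  intro he1 b hb hbe hβb
  obtain ⟨e', rfl⟩ : ∃ e', e = e' + 1 := ⟨e - 1, by omega⟩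
  obtain ⟨hpc, hcount⟩ := hβb
  classical
  obtain ⟨seg2, hseg2S, hseg2h, hseg2two⟩ := exists_seg2 hpc
  set NT : List (List ℕ) := (P b).erase seg2 with hNTdef
  have hSnd : (P b).Nodup := hpc.1
  have hNTsub : ∀ A ∈ NT, A ∈ P b := fun A hA => List.mem_of_mem_erase hA
  have hNTne2 : ∀ A ∈ NT, A ≠ seg2 := fun A hA => (hSnd.mem_erase_iff.mp hA).1
  have hhead_ne2 : ∀ A ∈ P b, A ≠ seg2 → A.head? ≠ some 2 := by
    intro A hA hne hc
    exact hne (hpc.2.2.2.1 A hA seg2 hseg2S 2 (mem_of_head?_eq hc) hseg2two)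
  have hlastsym : ∀ A ∈ NT, ∃ jA, jA ≠ 0 ∧ (sigOf n A).getLast? = some jA ∧
      A.getLast? = some (lastSym jA) := by
    intro A hA
    obtain ⟨jA, hj1, hj2, hj3⟩ := seg_last hpc (hNTsub A hA)
    refine ⟨jA, ?_, hj1, hj3⟩
    rintro rfl
    have h0A : (0:ℕ) ∈ sigOf n A := mem_of_getLast?_eq hj1
    have h2A := (two_mem_iff_zero hpc (hNTsub A hA)).mpr h0A
    exact hNTne2 A hA (hpc.2.2.2.1 A (hNTsub A hA) seg2 hseg2S 2 h2A hseg2two)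
  have hgoodchild : ∀ s, 2 ≤ s → s ≤ 2*n+2 → GoodPath n (b ++ [s]) := by
    intro s h1 h2 x hx
    rcases List.mem_append.mp hx with hx | hx
    · exact hb x hx
    · simp only [List.mem_singleton] at hx; subst hx; exact ⟨h1, h2⟩
  -- MAIN CONSTRUCTION
  have hsub : ∀ segS ∈ NT, ∀ sstar, segS.getLast? = some sstar →
      ∀ τ ∈ Fset n e' P (b ++ [sstar]), (sstar :: τ) ∈ Fset n (e'+1) P b := by
    intro segS hsegNT sstar hsegLast τ hτ
    have hsegS : segS ∈ P b := hNTsub segS hsegNT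
    have hsegne2 : segS ≠ seg2 := hNTne2 segS hsegNT
    obtain ⟨jst, hjst0, hjstσ, hsegLast'⟩ := hlastsym segS hsegNT
    have hstar_eq : sstar = lastSym jst := by
      rw [hsegLast] at hsegLast'
      injection hsegLast'
    obtain ⟨M, hpermM⟩ := exists_order hseg2S hsegS (fun hc => hsegne2 hc.symm)
    set L : List (List ℕ) := seg2 :: (M ++ [segS]) with hLdef
    have hperm : L.Perm (P b) := hpermM
    have hLnd : L.Nodup := hperm.symm.nodup hSnd
    have hLhead : L.head? = some seg2 := rfl
    have hLlast : L.getLast? = some segS := by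
      rw [hLdef, getLast?_cons_ne (by simp), List.getLast?_concat]
    have hmemL : ∀ A ∈ L, A ∈ P b := fun A hA => hperm.mem_iff.mp hA
    have hblocksL : ∀ w ∈ L, w ≠ [] := fun w hw => seg_ne_nil hpc (hmemL w hw)
    have hLf : L.flatten.getLast! = sstar := by
      have hfl := getLast?_flatten hblocksL hLlast
      rw [hsegLast] at hfl
      exact List.getLast!_of_getLast? hfl
    obtain ⟨Cτ, hCτ, hτeq⟩ := hτ
    by_cases he0 : e' = 0
    · subst he0
      obtain ⟨C, hC, hCtail⟩ := assemble (e' := 0) hpc hperm hLhead hseg2h (fun _ _ => [])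
        (fun s h1 h2 => ⟨⟨fun p _ hl => absurd hl (Nat.not_lt_zero _),
          fun p _ hl _ _ _ => absurd hl (Nat.not_lt_zero _)⟩,
          fun q _ hl => absurd hl (Nat.not_lt_zero _)⟩)
        (fun A B u v _ _ _ => rfl) (fun s t _ => rfl)
      refine ⟨C, hC, ?_⟩
      rw [hCtail, hLf]
      have hτnil : τ = [] := by simpa [tailFrom] using hτeq
      rw [hτnil]
      rfl
    · have he'1 : 1 ≤ e' := by omega
      have hd1 : b.length + 1 < d := by omega
      have hFlarge : ∀ s, 2 ≤ s → s ≤ 2*n+2 → IsBetaPartial n β (P (b ++ [s])) →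
          ((1 - β) * n) ^ e' ≤ ((Fset n e' P (b ++ [s])).ncard : ℝ) := by
        intro s h1 h2 hβs
        exact ih e' (by omega) he'1 (b ++ [s]) (hgoodchild s h1 h2)
          (by simp only [List.length_append, List.length_singleton]; omega) hβs
      -- choices of common tails for adjacent pairs
      have hwex : ∀ A B : List ℕ, ∃ wv : List ℕ, Adj L A B → ∀ u v,
          A.getLast? = some u → B.head? = some v →
          wv ∈ Fset n e' P (b ++ [u]) ∧ wv ∈ Fset n e' P (b ++ [v]) := by
        intro A B
        by_cases hadj : Adj L A B
        · have hAL : A ∈ P b := hmemL A (adj_mem_left hadj)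
          have hBL : B ∈ P b := hmemL B (adj_mem_right hadj)
          obtain ⟨jA, hjA, hjAn, hAl⟩ := seg_last hpc hAL
          obtain ⟨jB, hjB, hjBn, hBh⟩ := seg_head hpc hBL
          have hu0b := seg_symbol_bounds hpc hAL (mem_of_getLast?_eq hAl)
          have hv0b := seg_symbol_bounds hpc hBL (mem_of_head?_eq hBh)
          have hβu : IsBetaPartial n β (P (b ++ [lastSym jA])) := by
            by_cases hA2 : A = seg2
            · refine hβstep b hb hd1 ⟨hpc, hcount⟩ _ (Or.inr (Or.inr ⟨A, hAL, ?_, hAl⟩))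
              rw [hA2]; exact hseg2h
            · exact hβstep b hb hd1 ⟨hpc, hcount⟩ _
                (Or.inr (Or.inl ⟨A, hAL, hAl, hhead_ne2 A hAL hA2⟩))
          have hβv : IsBetaPartial n β (P (b ++ [headSym jB])) := by
            have hBne2 : B ≠ seg2 := by
              rintro rfl
              exact adj_ne_head hLnd hadj hLhead
            exact hβstep b hb hd1 ⟨hpc, hcount⟩ _
              (Or.inl ⟨B, hBL, hBh, hhead_ne2 B hBL hBne2⟩)
          have hFu := hFlarge _ hu0b.1 hu0b.2 hβu
          have hFv := hFlarge _ hv0b.1 hv0b.2 hβv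
          have hhalf : (1:ℝ)/2 * (n:ℝ)^e' < ((1 - β) * n)^e' := by
            have h1 := one_sub_beta_pow_gt_half h0 hd (show e' + 1 ≤ d by omega) hβ
            have hn0 : (0:ℝ) < (n:ℝ)^e' := by positivity
            calc (1:ℝ)/2 * (n:ℝ)^e' < (1-β)^e' * (n:ℝ)^e' := by nlinarith
              _ = ((1-β)*n)^e' := by rw [mul_pow]
          have hUb : ((Univ n e').ncard : ℝ) ≤ (n:ℝ)^e' := by
            exact_mod_cast ncard_univ_le n e'
          have hlt : (Univ n e').ncard < (Fset n e' P (b ++ [lastSym jA])).ncard +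
              (Fset n e' P (b ++ [headSym jB])).ncard := by
            have hr : ((Univ n e').ncard : ℝ) <
                ((Fset n e' P (b ++ [lastSym jA])).ncard : ℝ) +
                ((Fset n e' P (b ++ [headSym jB])).ncard : ℝ) := by linarith
            exact_mod_cast hr
          obtain ⟨wv, hwv⟩ := inter_nonempty_of_ncard (univ_finite n e')
            (Fset_subset_univ (by omega)) (Fset_subset_univ (by omega)) hlt
          refine ⟨wv, fun _ u v hu hv => ?_⟩
          rw [hAl] at hu
          rw [hBh] at hv
          injection hu with hu
          injection hv with hv
          rw [← hu, ← hv]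
          exact ⟨hwv.1, hwv.2⟩
        · exact ⟨[], fun h => absurd h hadj⟩
      choose w hw using hwex
      -- realizers for last-symbols
      have hUex : ∀ s : ℕ, ∃ cu : List ℕ → List ℕ, ∀ A B, Adj L A B →
          A.getLast? = some s →
          SubCons n e' P (b ++ [s]) cu ∧ tailFrom cu e' [] = w A B := by
        intro s
        by_cases hex : ∃ A B, Adj L A B ∧ A.getLast? = some s
        · obtain ⟨A0, B0, hadj0, hl0⟩ := hex
          obtain ⟨jB0, hjB0, -, hB0h⟩ := seg_head hpc (hmemL B0 (adj_mem_right hadj0))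
          have hmemw := hw A0 B0 hadj0 s _ hl0 hB0h
          obtain ⟨cu, hcu, hweq⟩ := hmemw.1
          refine ⟨cu, fun A B hadj hl => ?_⟩
          have hAA : A = A0 := hpc.2.2.2.1 A (hmemL A (adj_mem_left hadj)) A0
            (hmemL A0 (adj_mem_left hadj0)) s (mem_of_getLast?_eq hl) (mem_of_getLast?_eq hl0)
          subst hAA
          have hBB : B = B0 := adj_unique_left hLnd hadj hadj0
          subst hBB
          exact ⟨hcu, hweq.symm⟩
        · exact ⟨fun _ => [], fun A B hadj hl => absurd ⟨A, B, hadj, hl⟩ hex⟩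
      choose CU hCU using hUex
      -- realizers for head-symbols
      have hVex : ∀ s : ℕ, ∃ cv : List ℕ → List ℕ, ∀ A B, Adj L A B →
          B.head? = some s →
          SubCons n e' P (b ++ [s]) cv ∧ tailFrom cv e' [] = w A B := by
        intro s
        by_cases hex : ∃ A B, Adj L A B ∧ B.head? = some s
        · obtain ⟨A0, B0, hadj0, hh0⟩ := hex
          obtain ⟨jA0, hjA0, -, hA0l⟩ := seg_last hpc (hmemL A0 (adj_mem_left hadj0))
          have hmemw := hw A0 B0 hadj0 _ s hA0l hh0
          obtain ⟨cv, hcv, hweq⟩ := hmemw.2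
          refine ⟨cv, fun A B hadj hh' => ?_⟩
          have hBB : B = B0 := hpc.2.2.2.1 B (hmemL B (adj_mem_right hadj)) B0
            (hmemL B0 (adj_mem_right hadj0)) s (mem_of_head?_eq hh') (mem_of_head?_eq hh0)
          subst hBB
          have hAA : A = A0 := adj_unique_right hLnd hadj hadj0
          subst hAA
          exact ⟨hcv, hweq.symm⟩
        · exact ⟨fun _ => [], fun A B hadj hh' => absurd ⟨A, B, hadj, hh'⟩ hex⟩
      choose CV hCV using hVex
      -- the child assignment
      set CC : ℕ → List ℕ → List ℕ := fun s =>
        if s = sstar then Cτ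
        else if (∃ A B, Adj L A B ∧ A.getLast? = some s) then CU s
        else if (∃ A B, Adj L A B ∧ B.head? = some s) then CV s
        else (fun q => connAt P ((b ++ [s]) ++ q)) with hCCdef
      have hCCeval : ∀ s, CC s =
          if s = sstar then Cτ
          else if (∃ A B, Adj L A B ∧ A.getLast? = some s) then CU s
          else if (∃ A B, Adj L A B ∧ B.head? = some s) then CV s
          else (fun q => connAt P ((b ++ [s]) ++ q)) := fun s => by rw [hCCdef]
      have hCCsstar : CC sstar = Cτ := by rw [hCCeval, if_pos rfl]
      -- ToPC conclusions for linked children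
      have harith : d - (b.length + 1) = e' := by omega
      -- the not-a-key lemma
      have hnokey : ∀ seg ∈ P b, ∀ j j', Adj (sigOf n seg) j j' →
          (CC (lastSym j) = fun q => connAt P ((b ++ [lastSym j]) ++ q)) ∧
          (CC (headSym j') = fun q => connAt P ((b ++ [headSym j']) ++ q)) := by
        intro seg hseg j j' hadjσ
        have hσspec := sigOf_spec hpc hseg
        have hxseg : lastSym j ∈ seg :=
          (mem_seg_iff hpc hseg).mpr ⟨j, adj_mem_left hadjσ, lastSym_mem j⟩
        have hyseg : headSym j' ∈ seg :=
          (mem_seg_iff hpc hseg).mpr ⟨j', adj_mem_right hadjσ, headSym_mem j'⟩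
        have hnotlast : ∀ A ∈ P b, A.getLast? ≠ some (lastSym j) := by
          intro A hA hc
          have hAseg : A = seg := hpc.2.2.2.1 A hA seg hseg (lastSym j)
            (mem_of_getLast?_eq hc) hxseg
          subst hAseg
          obtain ⟨jl, hjl, -, hAl⟩ := seg_last hpc hA
          rw [hAl] at hc
          injection hc with hc
          have : jl = j := lastSym_inj hc
          subst this
          exact adj_ne_getLast hσspec.2.1 hadjσ hjl
        have hj'0 : j' ≠ 0 := by
          rintro rfl
          have h0σ : (0:ℕ) ∈ sigOf n seg := adj_mem_right hadjσ
          have h2seg : (2:ℕ) ∈ seg := (two_mem_iff_zero hpc hseg).mpr h0σ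
          have hh2 : seg.head? = some 2 := hpc.2.2.2.2 seg hseg h2seg
          have := sig_head_zero hpc hseg hh2
          exact adj_ne_head hσspec.2.1 hadjσ this
        have hnotlast' : ∀ A ∈ P b, A.getLast? ≠ some (headSym j') := by
          intro A hA hc
          have hAseg : A = seg := hpc.2.2.2.1 A hA seg hseg (headSym j')
            (mem_of_getLast?_eq hc) hyseg
          subst hAseg
          obtain ⟨jl, hjl, -, hAl⟩ := seg_last hpc hA
          rw [hAl] at hc
          injection hc with hc
          exact hj'0 (headSym_eq_lastSym hc.symm).1
        constructor
        · -- lastSym j is not a key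
          rw [hCCeval]
          rw [if_neg (by
            intro hc
            exact hnotlast segS hsegS (by rw [hsegLast, hc, hstar_eq])), if_neg (by
            rintro ⟨A, B, hadj, hl⟩
            exact hnotlast A (hmemL A (adj_mem_left hadj)) hl), if_neg (by
            rintro ⟨A, B, hadj, hhB⟩
            have hBseg : B = seg := hpc.2.2.2.1 B (hmemL B (adj_mem_right hadj)) seg hseg
              (lastSym j) (mem_of_head?_eq hhB) hxseg
            subst hBseg
            obtain ⟨jh, hjh, -, hBh'⟩ := seg_head hpc hseg
            rw [hBh'] at hhB
            injection hhB with hhB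
            obtain ⟨hjh0, hj0⟩ := headSym_eq_lastSym hhB
            have hh2 : B.head? = some 2 := by
              rw [hBh', hjh0]; rfl
            have h2seg : (2:ℕ) ∈ B := mem_of_head?_eq hh2
            have hBseg2 : B = seg2 := hpc.2.2.2.1 B hseg seg2 hseg2S 2 h2seg hseg2two
            subst hBseg2
            exact adj_ne_head hLnd hadj hLhead)]
        · -- headSym j' is not a key
          rw [hCCeval]
          rw [if_neg (by
            intro hc
            exact hnotlast' segS hsegS (by rw [hsegLast, hc, hstar_eq])), if_neg (by
            rintro ⟨A, B, hadj, hl⟩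
            exact hnotlast' A (hmemL A (adj_mem_left hadj)) hl), if_neg (by
            rintro ⟨A, B, hadj, hhB⟩
            have hBseg : B = seg := hpc.2.2.2.1 B (hmemL B (adj_mem_right hadj)) seg hseg
              (headSym j') (mem_of_head?_eq hhB) hyseg
            subst hBseg
            obtain ⟨jh, hjh, -, hBh'⟩ := seg_head hpc hseg
            rw [hBh'] at hhB
            injection hhB with hhB
            have : jh = j' := headSym_inj hhB
            subst this
            exact adj_ne_head hσspec.2.1 hadjσ hjh)]
      -- hCC3
      have hCC3 : ∀ s t : ℕ, (∃ seg ∈ P b, phiRel seg s t) →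
          tailFrom (CC s) e' [] = tailFrom (CC t) e' [] := by
        rintro s t ⟨seg, hseg, hphi⟩
        obtain ⟨j, j', hadjσ, hcase⟩ := phiRel_shape hpc hseg hphi
        obtain ⟨hCCl, hCCh⟩ := hnokey seg hseg j j' hadjσ
        have htop := hPv.2 b hb hd1 s t ⟨seg, hseg, hphi⟩
        have heq := htop.2.2.2.2
        rw [harith] at heq
        rcases hcase with ⟨rfl, rfl⟩ | ⟨rfl, rfl⟩
        · rw [hCCl, hCCh]; exact heq
        · rw [hCCl, hCCh]; exact heq
      -- hCC1
      have hCC1 : ∀ s, 2 ≤ s → s ≤ 2*n+2 → SubCons n e' P (b ++ [s]) (CC s) := by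
        intro s h1 h2
        by_cases hs : s = sstar
        · subst hs
          rw [hCCsstar]
          exact hCτ
        by_cases hex1 : ∃ A B, Adj L A B ∧ A.getLast? = some s
        · rw [hCCeval, if_neg hs, if_pos hex1]
          obtain ⟨A, B, hadj, hl⟩ := hex1
          exact (hCU s A B hadj hl).1
        by_cases hex2 : ∃ A B, Adj L A B ∧ B.head? = some s
        · rw [hCCeval, if_neg hs, if_neg hex1, if_pos hex2]
          obtain ⟨A, B, hadj, hh'⟩ := hex2
          exact (hCV s A B hadj hh').1
        rw [hCCeval, if_neg hs, if_neg hex1, if_neg hex2]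
        -- s is an internal symbol: find its φ-partner
        obtain ⟨seg, hseg, hsS⟩ := hpc.2.2.1 s h1 h2
        have hσspec := sigOf_spec hpc hseg
        obtain ⟨j, hjσ, hsj⟩ := (mem_seg_iff hpc hseg).mp hsS
        have hcomplete : ∀ t, phiRel seg s t → SubCons n e' P (b ++ [s])
            (fun q => connAt P ((b ++ [s]) ++ q)) := by
          intro t hphi
          have htop := hPv.2 b hb hd1 s t ⟨seg, hseg, hphi⟩
          have hval := htop.2.2.1
          rw [harith] at hval
          exact subCons_connAt htop.1 hval
            (by simp only [List.length_append, List.length_singleton]; omega)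
        rcases mem_segStr.mp hsj with ⟨rfl, rfl⟩ | ⟨hj0, (rfl | rfl)⟩
        · -- s = 2, j = 0
          have hseg_eq : seg = seg2 := hpc.2.2.2.1 seg hseg seg2 hseg2S 2 hsS hseg2two
          by_cases hσl : (sigOf n seg).getLast? = some 0
          · exfalso
            apply hex1
            have hlastseg : seg.getLast? = some 2 := by
              rw [hσspec.2.2.2, getLast?_flatten_segStr hσl]
              rfl
            cases hM : M ++ [segS] with
            | nil => simp at hM
            | cons Bx Xs =>
              refine ⟨seg, Bx, ⟨[], Xs, ?_⟩, hlastseg⟩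
              rw [hLdef, hM, hseg_eq]
              rfl
          · obtain ⟨j1, hadjσ1⟩ := exists_adj_succ hjσ hσl
            apply hcomplete (headSym j1)
            refine Or.inl ⟨even_two, ?_⟩
            rw [hσspec.2.2.2]
            exact adj_flatten_segStr.mpr (Or.inr ⟨0, j1, hadjσ1, rfl, rfl⟩)
        · -- s = 2j+1, j ≠ 0
          by_cases hσh : (sigOf n seg).head? = some j
          · exfalso
            apply hex2
            have hheadseg : seg.head? = some (2*j+1) := by
              rw [hσspec.2.2.2, head?_flatten_segStr hσh]
              unfold headSym
              rw [if_neg hj0]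
            have hsegne : seg ≠ seg2 := by
              intro h
              rw [h, hseg2h] at hheadseg
              injection hheadseg with hc
              omega
            obtain ⟨A, hadj⟩ := exists_adj_pred (hperm.mem_iff.mpr hseg) (by
              rw [hLhead]
              intro hc
              injection hc with hc
              exact hsegne hc.symm)
            exact ⟨A, seg, hadj, hheadseg⟩
          · obtain ⟨j0', hadjσ0⟩ := exists_adj_pred hjσ hσh
            apply hcomplete (lastSym j0')
            refine Or.inr ⟨by rw [Nat.odd_iff]; omega, ?_⟩
            rw [hσspec.2.2.2]
            have : 2*j+1 = headSym j := by unfold headSym; rw [if_neg hj0]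
            rw [this]
            exact adj_flatten_segStr.mpr (Or.inr ⟨j0', j, hadjσ0, rfl, rfl⟩)
        · -- s = 2j+2, j ≠ 0
          by_cases hσl : (sigOf n seg).getLast? = some j
          · exfalso
            have hlastseg : seg.getLast? = some (2*j+2) := by
              rw [hσspec.2.2.2, getLast?_flatten_segStr hσl]
              unfold lastSym
              rw [if_neg hj0]
            by_cases hsegS' : seg = segS
            · apply hs
              rw [hsegS'] at hlastseg
              rw [hsegLast] at hlastseg
              injection hlastseg with hc
              exact hc.symm
            · apply hex1
              obtain ⟨B, hadj⟩ := exists_adj_succ (hperm.mem_iff.mpr hseg) (by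
                rw [hLlast]
                intro hc
                injection hc with hc
                exact hsegS' hc.symm)
              exact ⟨seg, B, hadj, hlastseg⟩
          · obtain ⟨j1, hadjσ1⟩ := exists_adj_succ hjσ hσl
            apply hcomplete (headSym j1)
            refine Or.inl ⟨by rw [Nat.even_iff]; omega, ?_⟩
            rw [hσspec.2.2.2]
            have : 2*j+2 = lastSym j := by unfold lastSym; rw [if_neg hj0]
            rw [this]
            exact adj_flatten_segStr.mpr (Or.inr ⟨j, j1, hadjσ1, rfl, rfl⟩)
      -- hCC2
      have hCC2 : ∀ A B u v, Adj L A B → A.getLast? = some u → B.head? = some v →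
          tailFrom (CC u) e' [] = tailFrom (CC v) e' [] := by
        intro A B u v hadj hAl hBh
        have hAL : A ∈ P b := hmemL A (adj_mem_left hadj)
        have hBL : B ∈ P b := hmemL B (adj_mem_right hadj)
        have hune : u ≠ sstar := by
          intro hc
          rw [hc] at hAl
          have hASS : A = segS := hpc.2.2.2.1 A hAL segS hsegS sstar
            (mem_of_getLast?_eq hAl) (mem_of_getLast?_eq hsegLast)
          rw [hASS] at hadj
          exact adj_ne_getLast hLnd hadj hLlast
        have hex1u : ∃ A' B', Adj L A' B' ∧ A'.getLast? = some u := ⟨A, B, hadj, hAl⟩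
        have hCCu : CC u = CU u := by rw [hCCeval, if_neg hune, if_pos hex1u]
        have h1 := hCU u A B hadj hAl
        have hBne2 : B ≠ seg2 := by
          rintro rfl
          exact adj_ne_head hLnd hadj hLhead
        obtain ⟨jhB, hjhB, -, hBh'⟩ := seg_head hpc hBL
        have hv_eq : v = headSym jhB := by
          rw [hBh'] at hBh
          injection hBh with h
          exact h.symm
        have hjhB0 : jhB ≠ 0 := by
          rintro rfl
          have : B.head? = some 2 := by rw [hBh']; rfl
          exact hhead_ne2 B hBL hBne2 this
        have hvne : v ≠ sstar := by
          intro hc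
          rw [hv_eq, hstar_eq] at hc
          exact hjhB0 (headSym_eq_lastSym hc).1
        have hex1v : ¬ ∃ A' B', Adj L A' B' ∧ A'.getLast? = some v := by
          rintro ⟨A', B', hadj', hl'⟩
          have hA'B : A' = B := hpc.2.2.2.1 A' (hmemL A' (adj_mem_left hadj')) B hBL v
            (mem_of_getLast?_eq hl') (mem_of_head?_eq hBh)
          subst hA'B
          obtain ⟨jlB, hjlB, -, hBl'⟩ := seg_last hpc hBL
          rw [hBl'] at hl'
          injection hl' with hl'
          rw [hv_eq] at hl'
          exact hjhB0 (headSym_eq_lastSym hl'.symm).1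
        have hex2v : ∃ A' B', Adj L A' B' ∧ B'.head? = some v := ⟨A, B, hadj, hBh⟩
        have hCCv : CC v = CV v := by rw [hCCeval, if_neg hvne, if_neg hex1v, if_pos hex2v]
        have h2 := hCV v A B hadj hBh
        rw [hCCu, hCCv, h1.2, h2.2]
      obtain ⟨C, hC, hCtail⟩ := assemble hpc hperm hLhead hseg2h CC hCC1 hCC2 hCC3
      refine ⟨C, hC, ?_⟩
      rw [hCtail, hLf, hCCsstar, ← hτeq]
  -- COUNTING
  set g : List ℕ → Set (List ℕ) :=
    fun A => (fun τ => A.getLast! :: τ) '' Fset n e' P (b ++ [A.getLast!]) with hgdef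
  have hNTnd : NT.Nodup := hSnd.erase _
  have hglast : ∀ A ∈ NT, A.getLast? = some (A.getLast!) ∧ A.getLast! ∈ A ∧
      2 ≤ A.getLast! ∧ A.getLast! ≤ 2*n+2 := by
    intro A hA
    obtain ⟨jA, -, -, hAl⟩ := hlastsym A hA
    have h! : A.getLast! = lastSym jA := List.getLast!_of_getLast? hAl
    have hmem : A.getLast! ∈ A := by rw [h!]; exact mem_of_getLast?_eq hAl
    have hbd := seg_symbol_bounds hpc (hNTsub A hA) hmem
    exact ⟨by rw [h!]; exact hAl, hmem, hbd.1, hbd.2⟩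
  have hgsub : ∀ A ∈ NT, g A ⊆ Fset n (e'+1) P b := by
    intro A hA τ' hτ'
    obtain ⟨τ, hτ, rfl⟩ := hτ'
    exact hsub A hA A.getLast! (hglast A hA).1 τ hτ
  have hgdisj : ∀ A ∈ NT, ∀ B ∈ NT, A ≠ B → g A ∩ g B = ∅ := by
    intro A hA B hB hne
    have hlast_ne : A.getLast! ≠ B.getLast! := by
      intro hc
      apply hne
      exact hpc.2.2.2.1 A (hNTsub A hA) B (hNTsub B hB) A.getLast!
        (hglast A hA).2.1 (by rw [hc]; exact (hglast B hB).2.1)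
    ext τ'
    simp only [Set.mem_inter_iff, Set.mem_empty_iff_false, iff_false, not_and]
    rintro ⟨τ1, -, rfl⟩ ⟨τ2, -, hc⟩
    apply hlast_ne
    injection hc with hc1 hc2
    exact hc1.symm
  have hfin : (Fset n (e'+1) P b).Finite := Fset_finite (by omega)
  have hsum := ncard_sum_le NT g _ hfin hgsub hNTnd hgdisj
  have himg : ∀ A ∈ NT, (g A).ncard = (Fset n e' P (b ++ [A.getLast!])).ncard := by
    intro A hA
    apply Set.ncard_image_of_injective
    intro x y hxy
    injection hxy
  have hchildF : ∀ A ∈ NT, ((1 - β) * n) ^ e' ≤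
      ((Fset n e' P (b ++ [A.getLast!])).ncard : ℝ) := by
    intro A hA
    by_cases he0 : e' = 0
    · subst he0
      rw [Fset_zero]
      simp
    · have hβA : IsBetaPartial n β (P (b ++ [A.getLast!])) :=
        hβstep b hb (by omega) ⟨hpc, hcount⟩ _
          (Or.inr (Or.inl ⟨A, hNTsub A hA, (hglast A hA).1,
            hhead_ne2 A (hNTsub A hA) (hNTne2 A hA)⟩))
      exact ih e' (by omega) (by omega) _
        (hgoodchild _ (hglast A hA).2.2.1 (hglast A hA).2.2.2)
        (by simp only [List.length_append, List.length_singleton]; omega) hβA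
  have hX0 : (0:ℝ) ≤ ((1 - β) * n) ^ e' :=
    pow_nonneg (mul_nonneg (by linarith) (Nat.cast_nonneg n)) e'
  have hsum2 : (NT.length : ℝ) * ((1 - β) * n) ^ e' ≤
      ((NT.map fun A => (g A).ncard).sum : ℝ) :=
    list_sum_ge NT _ _ hX0 (fun A hA => by
      rw [himg A hA]; exact hchildF A hA)
  have hNTlen : (1 - β) * n ≤ (NT.length : ℝ) := by
    have hl : NT.length = (P b).length - 1 := List.length_erase_of_mem hseg2S
    have hpos : 1 ≤ (P b).length := List.length_pos_iff.mpr (List.ne_nil_of_mem hseg2S)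
    have hcast : (NT.length : ℝ) = ((P b).length : ℝ) - 1 := by
      rw [hl]
      push_cast [hpos]
      ring
    rw [hcast]
    linarith
  calc ((1 - β) * n) ^ (e'+1) = ((1-β)*n) * ((1-β)*n)^e' := by ring
    _ ≤ (NT.length : ℝ) * ((1-β)*n)^e' := mul_le_mul_of_nonneg_right hNTlen hX0
    _ ≤ ((NT.map fun A => (g A).ncard).sum : ℝ) := hsum2
    _ ≤ ((Fset n (e'+1) P b).ncard : ℝ) := by exact_mod_cast hsum

end Aux

/-- Key Lemma (counting part): for `d ≥ 1`, `n ≥ 2` and `β ∈ [0, 24^{-d}]`,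
every valid `(n,d,β)`-ToPC `P` has at least `((1-β)n)^d` distinct tail names
among the valid `(n,d)`-ToCs consistent with it. -/
theorem stmt19 (n d : ℕ) (hd : 1 ≤ d) (hn : 2 ≤ n)
    (β : ℝ) (h0 : 0 ≤ β) (hβ : β ≤ 1 / 24 ^ d)
    (P : List ℕ → List (List ℕ)) (hP : IsBetaToPC n d β P) :
    ((1 - β) * n) ^ d ≤
      (Set.ncard {q : List ℕ | ∃ C : List ℕ → List ℕ,
        ConsistentToC n d P C ∧ q = tailFrom C d []} : ℝ) := by
  obtain ⟨⟨hPv1, hPv2⟩, hβroot, hβstep⟩ := hP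
  have hml := Aux.ML hd hn h0 hβ ⟨hPv1, hPv2⟩ hβstep d hd [] Aux.goodpath_nil
    (by simp) hβroot
  have hset : {q : List ℕ | ∃ C : List ℕ → List ℕ,
      ConsistentToC n d P C ∧ q = tailFrom C d []} = Aux.Fset n d P [] := rfl
  rw [hset]
  exact hml
end
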